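/- arXiv:2002.05468 — 8 statements merged into one kernel-verified Lean document; each statement's English description precedes it below -/
import Mathlib

section
/- Let W₀ be a reflection subgroup of a Coxeter group W. In any right coset W₀x there is a unique element w satisfying N(w) ∩ W₀ = ∅, and this element is the unique element of minimal length in W₀x. -/
open CoxeterSystem

variable {B W : Type*} [Group W] {M : CoxeterMatrix B}

/-- The left inversion set `N(w) = {t ∈ T : ℓ(tw) < ℓ(w)}`. -/
def invSet (cs : CoxeterSystem M W) (w : W) : Set W := {t | cs.IsLeftInversion w t}

/-- A reflection subgroup: a subgroup generated by a set of reflections. -/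
def IsReflectionSubgroup (cs : CoxeterSystem M W) (W₀ : Subgroup W) : Prop :=
  ∃ A : Set W, (∀ t ∈ A, cs.IsReflection t) ∧ Subgroup.closure A = W₀

namespace DeodharAux

open List

variable (cs : CoxeterSystem M W)

local prefix:100 "σ" => cs.simple
local prefix:100 "π" => cs.wordProd
local prefix:100 "ℓ" => cs.length

noncomputable local instance : DecidableEq W := Classical.decEq W

/-- The Tits sign permutation attached to a simple generator. -/
noncomputable def eperm (i : B) : Equiv.Perm (W × ℤˣ) :=
  Function.Involutive.toPerm
    (fun p => (σ i * p.1 * σ i, if p.1 = σ i then -p.2 else p.2)) (by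
      rintro ⟨t, ε⟩
      have h1 : σ i * (σ i * t * σ i) * σ i = t := by
        simp [mul_assoc, cs.simple_mul_simple_self, cs.simple_mul_simple_cancel_left]
      have h2 : (σ i * t * σ i = σ i) ↔ (t = σ i) := by
        constructor
        · intro h
          have := congrArg (fun z => σ i * z * σ i) h
          simpa [h1, cs.simple_mul_simple_self, cs.simple_mul_simple_cancel_left] using this
        · rintro rfl; simp [cs.simple_mul_simple_self]
      simp only
      by_cases ht : t = σ i
      · simp [ht, h2, h1, cs.simple_mul_simple_self]
      · simp [ht, h2, h1])

lemma eperm_apply (i : B) (t : W) (ε : ℤˣ) :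
    eperm cs i (t, ε) = (σ i * t * σ i, if t = σ i then -ε else ε) := rfl

lemma prod_map_eperm (ω : List B) (t : W) (ε : ℤˣ) :
    (ω.map (eperm cs)).prod (t, ε) =
      (π ω * t * (π ω)⁻¹, (-1 : ℤˣ) ^ ((cs.rightInvSeq ω).count t) * ε) := by
  induction ω generalizing t ε with
  | nil => simp
  | cons i ω ih =>
      have hris : cs.rightInvSeq (i :: ω) =
          ((π ω)⁻¹ * σ i * π ω) :: cs.rightInvSeq ω := rfl
      rw [List.map_cons, List.prod_cons, Equiv.Perm.mul_apply, ih, eperm_apply]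
      have hfst : σ i * (π ω * t * (π ω)⁻¹) * σ i
          = π (i :: ω) * t * (π (i :: ω))⁻¹ := by
        rw [cs.wordProd_cons]
        simp [mul_assoc, cs.inv_simple]
      have hcond : (π ω * t * (π ω)⁻¹ = σ i) ↔ (t = (π ω)⁻¹ * σ i * π ω) := by
        constructor
        · intro h
          have := congrArg (fun z => (π ω)⁻¹ * z * π ω) h
          simpa [mul_assoc] using this
        · rintro rfl
          simp [mul_assoc]
      have hcount : ((cs.rightInvSeq (i :: ω)).count t)
          = (cs.rightInvSeq ω).count t + (if (π ω)⁻¹ * σ i * π ω = t then 1 else 0) := by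
        rw [hris]
        simp only [List.count_cons, beq_iff_eq]
      by_cases hc : π ω * t * (π ω)⁻¹ = σ i
      · rw [if_pos hc, hcount, if_pos (hcond.mp hc).symm]
        refine Prod.ext hfst ?_
        simp [pow_succ, mul_comm, mul_left_comm, mul_assoc]
      · rw [if_neg hc, hcount, if_neg (fun h => hc (hcond.mpr h.symm))]
        exact Prod.ext hfst (by simp)

lemma simple_mul_pow (i i' : B) (j : ℕ) :
    σ i' * (σ i * σ i') ^ j = ((σ i * σ i')⁻¹) ^ j * σ i' := by
  induction j with
  | zero => simp
  | succ j ih =>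
      have key : σ i' * (σ i * σ i') = (σ i * σ i')⁻¹ * σ i' := by
        rw [mul_inv_rev, cs.inv_simple, cs.inv_simple]
        simp [mul_assoc, cs.simple_mul_simple_cancel_left,
          cs.simple_mul_simple_self]
      rw [pow_succ, ← mul_assoc, ih, mul_assoc, key, ← mul_assoc, ← pow_succ]

lemma head_alt (i i' : B) (n : ℕ) :
    (π (alternatingWord i i' n))⁻¹ * σ (if Even n then i' else i) * π (alternatingWord i i' n)
      = π (alternatingWord i i' (2*n+1)) := by
  have hπ := cs.prod_alternatingWord_eq_mul_pow i i' n
  have hπ' := cs.prod_alternatingWord_eq_mul_pow i i' (2*n+1)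
  have hodd : ¬ Even (2*n+1) := by rintro ⟨k, hk⟩; omega
  have hdiv : (2*n+1)/2 = n := by omega
  set a := σ i * σ i' with ha
  have h1 : σ i' * a ^ n = (a⁻¹) ^ n * σ i' := simple_mul_pow cs i i' n
  rw [hπ', if_neg hodd, hdiv]
  by_cases hn : Even n
  · obtain ⟨q, hq⟩ := hn
    have hq2 : n / 2 = q := by omega
    rw [if_pos ⟨q, hq⟩, hπ, if_pos ⟨q, hq⟩, hq2, one_mul]
    have h2 : σ i' * a ^ q = (a⁻¹) ^ q * σ i' := simple_mul_pow cs i i' q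
    calc (a ^ q)⁻¹ * σ i' * a ^ q
        = (a⁻¹) ^ q * (σ i' * a ^ q) := by rw [inv_pow, mul_assoc]
      _ = (a⁻¹) ^ q * ((a⁻¹) ^ q * σ i') := by rw [h2]
      _ = (a⁻¹) ^ (q + q) * σ i' := by rw [← mul_assoc, ← pow_add]
      _ = (a⁻¹) ^ n * σ i' := by rw [← hq]
      _ = σ i' * a ^ n := h1.symm
  · have hq2 : n = 2*(n/2)+1 := by
      rcases Nat.even_or_odd n with h | h
      · exact absurd h hn
      · obtain ⟨q, hq⟩ := h; omega
    set q := n / 2 with hqdef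
    have hn' : q + 1 + q = n := by omega
    rw [if_neg hn, hπ, if_neg hn]
    have hinv : σ i' * σ i = a⁻¹ := by
      rw [ha, mul_inv_rev, cs.inv_simple, cs.inv_simple]
    have h2 : σ i' * a ^ q = (a⁻¹) ^ q * σ i' := simple_mul_pow cs i i' q
    calc (σ i' * a ^ q)⁻¹ * σ i * (σ i' * a ^ q)
        = (a⁻¹) ^ q * ((σ i' * σ i) * (σ i' * a ^ q)) := by
          rw [mul_inv_rev, inv_pow, cs.inv_simple]
          group
      _ = (a⁻¹) ^ q * (a⁻¹ * ((a⁻¹) ^ q * σ i')) := by rw [hinv, h2]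
      _ = (a⁻¹) ^ (q + 1 + q) * σ i' := by
          rw [pow_add, pow_add, pow_one]
          group
      _ = (a⁻¹) ^ n * σ i' := by rw [hn']
      _ = σ i' * a ^ n := h1.symm

lemma ris_alt (i i' : B) (n : ℕ) :
    cs.rightInvSeq (alternatingWord i i' n)
      = (List.range n).map (fun k => π (alternatingWord i i' (2*(n-k)-1))) := by
  induction n with
  | zero => simp [alternatingWord]
  | succ n ih =>
      rw [alternatingWord_succ' i i' n]
      have hcons : cs.rightInvSeq ((if Even n then i' else i) :: alternatingWord i i' n)
          = ((π (alternatingWord i i' n))⁻¹ * σ (if Even n then i' else i)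
              * π (alternatingWord i i' n)) :: cs.rightInvSeq (alternatingWord i i' n) := rfl
      rw [hcons, ih, head_alt cs i i' n, List.range_succ_eq_map, List.map_cons, List.map_map]
      have e0 : 2*(n+1-0)-1 = 2*n+1 := by omega
      rw [e0]
      congr 1
      apply List.map_congr_left
      intro k hk
      simp only [Function.comp_apply]
      have : n + 1 - Nat.succ k = n - k := by omega
      rw [this]

lemma pow_eq_prod_map (i i' : B) (m : ℕ) :
    (eperm cs i * eperm cs i') ^ m = ((alternatingWord i i' (2*m)).map (eperm cs)).prod := by
  induction m with
  | zero => simp [alternatingWord]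
  | succ m ih =>
      have h2 : 2*(m+1) = (2*m+1)+1 := by omega
      rw [h2, alternatingWord_succ', alternatingWord_succ']
      have he1 : ¬ Even (2*m+1) := by rintro ⟨k, hk⟩; omega
      have he2 : Even (2*m) := ⟨m, by omega⟩
      rw [if_neg he1, if_pos he2, List.map_cons, List.map_cons, List.prod_cons, List.prod_cons,
        pow_succ', ih, mul_assoc]

lemma eperm_liftable : M.IsLiftable (eperm cs) := by
  intro i i'
  rcases Nat.eq_zero_or_pos (M i i') with h0 | hpos
  · rw [h0, pow_zero]
  · rw [pow_eq_prod_map]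
    apply Equiv.ext
    rintro ⟨t, ε⟩
    rw [prod_map_eperm]
    have hπ : π (alternatingWord i i' (2 * M i i')) = 1 := by
      rw [cs.prod_alternatingWord_eq_mul_pow, if_pos ⟨M i i', by omega⟩]
      have hd : 2 * M i i' / 2 = M i i' := by omega
      rw [hd, one_mul, cs.simple_mul_simple_pow]
    have hval : ∀ k < M i i',
        π (alternatingWord i i' (2*(2 * M i i' - (M i i' + k))-1))
          = π (alternatingWord i i' (2*(2 * M i i' - k)-1)) := by
      intro k hk
      rw [cs.prod_alternatingWord_eq_mul_pow, cs.prod_alternatingWord_eq_mul_pow]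
      have o1 : ¬ Even (2*(2 * M i i' - (M i i' + k))-1) := by rintro ⟨c, hc⟩; omega
      have o2 : ¬ Even (2*(2 * M i i' - k)-1) := by rintro ⟨c, hc⟩; omega
      rw [if_neg o1, if_neg o2]
      have e1 : (2*(2 * M i i' - (M i i' + k))-1)/2 = M i i' - k - 1 := by omega
      have e2 : (2*(2 * M i i' - k)-1)/2 = (M i i' - k - 1) + M i i' := by omega
      rw [e1, e2, pow_add, cs.simple_mul_simple_pow, mul_one]
    have hcount : Even ((cs.rightInvSeq (alternatingWord i i' (2 * M i i'))).count t) := by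
      rw [ris_alt]
      have hsplit : List.range (2 * M i i')
          = List.range (M i i') ++ (List.range (M i i')).map (fun x => M i i' + x) := by
        rw [← List.range_add]
        congr 1
        omega
      rw [hsplit, List.map_append, List.count_append, List.map_map]
      have hmapeq : (List.range (M i i')).map
            ((fun k => π (alternatingWord i i' (2*(2 * M i i' - k)-1))) ∘ (fun x => M i i' + x))
          = (List.range (M i i')).map (fun k => π (alternatingWord i i' (2*(2 * M i i' - k)-1))) := by
        apply List.map_congr_left
        intro k hk
        simp only [Function.comp_apply]
        exact hval k (List.mem_range.mp hk)
      rw [hmapeq]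
      exact ⟨_, rfl⟩
    rw [hπ]
    have : ((-1 : ℤˣ) ^ ((cs.rightInvSeq (alternatingWord i i' (2 * M i i'))).count t)) = 1 :=
      Even.neg_one_pow hcount
    rw [this]
    simp

noncomputable def eta : W →* Equiv.Perm (W × ℤˣ) := cs.lift ⟨eperm cs, eperm_liftable cs⟩

lemma eta_simple (i : B) : eta cs (σ i) = eperm cs i := cs.lift_apply_simple _ i

lemma eta_wordProd (ω : List B) : eta cs (π ω) = (ω.map (eperm cs)).prod := by
  have : π ω = (ω.map cs.simple).prod := rfl
  rw [this, MonoidHom.map_list_prod, List.map_map]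
  congr 1
  apply List.map_congr_left
  intro i _
  exact eta_simple cs i

noncomputable def sgn (w t : W) : ℤˣ := ((eta cs w) (t, 1)).2

lemma sgn_wordProd (ω : List B) (t : W) :
    sgn cs (π ω) t = (-1 : ℤˣ) ^ ((cs.rightInvSeq ω).count t) := by
  rw [sgn, eta_wordProd, prod_map_eperm]
  simp

lemma eta_apply (w t : W) (ε : ℤˣ) : eta cs w (t, ε) = (w * t * w⁻¹, sgn cs w t * ε) := by
  obtain ⟨ω, rfl⟩ := cs.wordProd_surjective w
  rw [eta_wordProd, prod_map_eperm, sgn_wordProd]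

lemma sgn_mul (u v t : W) : sgn cs (u*v) t = sgn cs u (v*t*v⁻¹) * sgn cs v t := by
  have h : eta cs (u*v) (t, 1) = eta cs u (eta cs v (t, 1)) := by
    rw [map_mul]; rfl
  rw [sgn, h, eta_apply cs v t 1, eta_apply]
  simp

lemma sgn_simple (i : B) (t : W) : sgn cs (σ i) t = if t = σ i then -1 else 1 := by
  rw [sgn, eta_simple, eperm_apply]

lemma sgn_conj_refl (ω : List B) (i : B) :
    sgn cs (π ω * σ i * (π ω)⁻¹) (π ω * σ i * (π ω)⁻¹) = -1 := by
  induction ω with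
  | nil =>
      simp only [wordProd_nil, one_mul, inv_one, mul_one]
      rw [sgn_simple, if_pos rfl]
  | cons j ω ih =>
      set t' := π ω * σ i * (π ω)⁻¹ with ht'def
      have htinv : t' * t' = 1 := by
        rw [ht'def]
        simp [mul_assoc, cs.simple_mul_simple_cancel_left, cs.inv_simple]
      set t := π (j :: ω) * σ i * (π (j :: ω))⁻¹ with htdef
      have hts : t = σ j * t' * σ j := by
        rw [htdef, ht'def, cs.wordProd_cons, mul_inv_rev, cs.inv_simple]
        group
      have hsjt' : σ j * t * σ j = t' := by
        rw [hts]
        simp [mul_assoc, cs.simple_mul_simple_cancel_left, cs.simple_mul_simple_self]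
      have hc1 : (t' * σ j) * t * (t' * σ j)⁻¹ = t' := by
        rw [mul_inv_rev, cs.inv_simple, hts]
        calc t' * σ j * (σ j * t' * σ j) * (σ j * t'⁻¹)
            = t' * (σ j * σ j) * t' * (σ j * σ j) * t'⁻¹ := by group
          _ = t' * t' * t'⁻¹ := by rw [cs.simple_mul_simple_self]; group
          _ = t' := by group
      have key : sgn cs t t = sgn cs (σ j) t' * (sgn cs t' t' * sgn cs (σ j) t) := by
        have e1 : t = σ j * (t' * σ j) := by rw [hts]; group
        calc sgn cs t t = sgn cs (σ j * (t' * σ j)) t := by rw [← e1]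
          _ = sgn cs (σ j) ((t' * σ j) * t * (t' * σ j)⁻¹) * sgn cs (t' * σ j) t := by
              rw [sgn_mul]
          _ = sgn cs (σ j) t' * sgn cs (t' * σ j) t := by rw [hc1]
          _ = sgn cs (σ j) t' * (sgn cs t' (σ j * t * (σ j)⁻¹) * sgn cs (σ j) t) := by
              rw [sgn_mul]
          _ = sgn cs (σ j) t' * (sgn cs t' t' * sgn cs (σ j) t) := by
              rw [cs.inv_simple, hsjt']
      have hiff : t = σ j ↔ t' = σ j := by
        constructor
        · intro h
          rw [hts] at h
          have := congrArg (fun z => σ j * z * σ j) h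
          simpa [mul_assoc, cs.simple_mul_simple_cancel_left,
            cs.simple_mul_simple_self] using this
        · intro h
          rw [hts, h, cs.simple_mul_simple_self, one_mul]
      rw [key, ih, sgn_simple, sgn_simple]
      by_cases hc : t = σ j
      · rw [if_pos hc, if_pos (hiff.mp hc)]
        decide
      · rw [if_neg hc, if_neg (fun h => hc (hiff.mpr h))]
        simp

lemma sgn_refl_self {t : W} (ht : cs.IsReflection t) : sgn cs t t = -1 := by
  obtain ⟨w, i, rfl⟩ := ht
  obtain ⟨ω, rfl⟩ := cs.wordProd_surjective w
  exact sgn_conj_refl cs ω i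

lemma sgn_mul_refl (w : W) {t : W} (ht : cs.IsReflection t) :
    sgn cs (w * t) t = - sgn cs w t := by
  rw [sgn_mul]
  have h1 : t * t * t⁻¹ = t := by rw [ht.mul_self, one_mul, ht.inv]
  rw [h1, sgn_refl_self cs ht]
  simp

lemma length_lt_of_sgn_neg {t : W} (ht : cs.IsReflection t) (w : W)
    (h : sgn cs w t = -1) : ℓ (w * t) < ℓ w := by
  obtain ⟨ω, hred, rfl⟩ := cs.exists_reduced_word' w
  rw [sgn_wordProd] at h
  have hmem : t ∈ cs.rightInvSeq ω := by
    by_contra hmem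
    rw [List.count_eq_zero.mpr hmem, pow_zero] at h
    exact (by decide : (1:ℤˣ) ≠ -1) h
  exact (cs.isRightInversion_of_mem_rightInvSeq hred hmem).2

lemma sgn_neg_iff {t : W} (ht : cs.IsReflection t) (w : W) :
    sgn cs w t = -1 ↔ ℓ (w * t) < ℓ w := by
  constructor
  · exact length_lt_of_sgn_neg cs ht w
  · intro h
    rcases Int.units_eq_one_or (sgn cs w t) with h1 | h1
    · exfalso
      have h2 : sgn cs (w * t) t = -1 := by rw [sgn_mul_refl cs w ht, h1]
      have h3 := length_lt_of_sgn_neg cs ht (w * t) h2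
      rw [mul_assoc, ht.mul_self, mul_one] at h3
      omega
    · exact h1

lemma mem_rightInvSeq_of_isRightInversion {ω : List B} (hred : cs.IsReduced ω) {t : W}
    (ht : cs.IsRightInversion (π ω) t) : t ∈ cs.rightInvSeq ω := by
  have hsgn : sgn cs (π ω) t = -1 := (sgn_neg_iff cs ht.1 _).mpr ht.2
  rw [sgn_wordProd] at hsgn
  by_contra hmem
  rw [List.count_eq_zero.mpr hmem, pow_zero] at hsgn
  exact (by decide : (1:ℤˣ) ≠ -1) hsgn

lemma mem_leftInvSeq_of_isLeftInversion {ω : List B} (hred : cs.IsReduced ω) {t : W}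
    (ht : cs.IsLeftInversion (π ω) t) : t ∈ cs.leftInvSeq ω := by
  have h1 : cs.IsRightInversion (π ω)⁻¹ t := cs.isRightInversion_inv_iff.mpr ht
  have h2 : (π ω)⁻¹ = π ω.reverse := (cs.wordProd_reverse ω).symm
  have hred' : cs.IsReduced ω.reverse := (cs.isReduced_reverse_iff ω).mpr hred
  have h3 : cs.IsRightInversion (π ω.reverse) t := by rw [← h2]; exact h1
  have h4 := mem_rightInvSeq_of_isRightInversion cs hred' h3
  rw [cs.rightInvSeq_reverse] at h4
  exact List.mem_reverse.mp h4

lemma lis_getD_take {ω : List B} {p n : ℕ} (h : p < n) :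
    ((cs.leftInvSeq ω).take n).getD p 1 = (cs.leftInvSeq ω).getD p 1 := by
  rw [List.getD_eq_getElem?_getD, List.getD_eq_getElem?_getD, List.getElem?_take, if_pos h]

lemma lis_eraseIdx_getD {ω : List B} {p q : ℕ} (hpq : p < q) (hq : q < ω.length) :
    (cs.leftInvSeq (ω.eraseIdx q)).getD p 1 = (cs.leftInvSeq ω).getD p 1 := by
  have htake : (ω.eraseIdx q).take (p+1) = ω.take (p+1) := by
    rw [List.eraseIdx_eq_take_drop_succ, List.take_append]
    have h1 : p + 1 - (ω.take q).length = 0 := by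
      rw [List.length_take]
      omega
    rw [h1, List.take_zero, List.append_nil, List.take_take]
    congr 1
    omega
  calc (cs.leftInvSeq (ω.eraseIdx q)).getD p 1
      = ((cs.leftInvSeq (ω.eraseIdx q)).take (p+1)).getD p 1 :=
        (lis_getD_take cs (by omega)).symm
    _ = (cs.leftInvSeq ((ω.eraseIdx q).take (p+1))).getD p 1 := by
        rw [cs.leftInvSeq_take]
    _ = (cs.leftInvSeq (ω.take (p+1))).getD p 1 := by rw [htake]
    _ = ((cs.leftInvSeq ω).take (p+1)).getD p 1 := by rw [cs.leftInvSeq_take]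
    _ = (cs.leftInvSeq ω).getD p 1 := lis_getD_take cs (by omega)

lemma erase_two_bound {ω : List B} (hred : cs.IsReduced ω) {p q : ℕ} {x y : W}
    (hpq : p < q) (hq : q < ω.length)
    (hx : (cs.leftInvSeq ω).getD p 1 = x) (hy : (cs.leftInvSeq ω).getD q 1 = y) :
    ℓ (x * (y * π ω)) + 2 ≤ ℓ (π ω) := by
  have e1 : y * π ω = π (ω.eraseIdx q) := by
    rw [← hy]; exact cs.getD_leftInvSeq_mul_wordProd ω q
  have e2 : (cs.leftInvSeq (ω.eraseIdx q)).getD p 1 = x := by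
    rw [lis_eraseIdx_getD cs hpq hq, hx]
  have e3 : x * (y * π ω) = π ((ω.eraseIdx q).eraseIdx p) := by
    rw [e1, ← e2]
    exact cs.getD_leftInvSeq_mul_wordProd _ p
  have hlen1 : (ω.eraseIdx q).length = ω.length - 1 := by
    rw [List.length_eraseIdx, if_pos hq]
  have hlen2 : ((ω.eraseIdx q).eraseIdx p).length = ω.length - 2 := by
    rw [List.length_eraseIdx, if_pos (by omega), hlen1]
    omega
  have hb := cs.length_wordProd_le ((ω.eraseIdx q).eraseIdx p)
  rw [← e3, hlen2] at hb
  have hω : ℓ (π ω) = ω.length := hred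
  omega

lemma double_deletion {Q a b : W} (hab : a ≠ b)
    (ha : cs.IsLeftInversion Q a) (hb : cs.IsLeftInversion Q b) :
    ℓ (a * (b * Q)) + 2 ≤ ℓ Q ∨ ℓ (b * (a * Q)) + 2 ≤ ℓ Q := by
  obtain ⟨ω, hred, rfl⟩ := cs.exists_reduced_word' Q
  have hma := mem_leftInvSeq_of_isLeftInversion cs hred ha
  have hmb := mem_leftInvSeq_of_isLeftInversion cs hred hb
  obtain ⟨ja, hja, hA⟩ := List.mem_iff_getElem.mp hma
  obtain ⟨jb, hjb, hB⟩ := List.mem_iff_getElem.mp hmb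
  have hA' : (cs.leftInvSeq ω).getD ja 1 = a := by
    rw [List.getD_eq_getElem _ _ hja, hA]
  have hB' : (cs.leftInvSeq ω).getD jb 1 = b := by
    rw [List.getD_eq_getElem _ _ hjb, hB]
  have hlen : (cs.leftInvSeq ω).length = ω.length := cs.length_leftInvSeq ω
  have hne : ja ≠ jb := by
    intro h
    exact hab (by rw [← hA', h, hB'])
  rcases lt_or_gt_of_ne hne with h | h
  · exact Or.inl (erase_two_bound cs hred h (by omega) hA' hB')
  · exact Or.inr (erase_two_bound cs hred h (by omega) hB' hA')

section Fold

variable (W₀ : Subgroup W)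

/-- All letters are reflections lying in `W₀`. -/
def OKL (L : List W) : Prop := ∀ c ∈ L, cs.IsReflection c ∧ c ∈ W₀

/-- Total length of the path obtained by successively left-multiplying `w`. -/
noncomputable def mu (w : W) : List W → ℕ
  | [] => 0
  | (c :: L) => ℓ ((c :: L).prod * w) + mu w L

lemma mu_cons (w c : W) (L : List W) :
    mu cs w (c :: L) = ℓ ((c :: L).prod * w) + mu cs w L := by
  simp [mu]

/-- The path is strictly ascending. -/
def Asc (w : W) : List W → Prop
  | [] => True
  | (c :: L) => ℓ (L.prod * w) < ℓ ((c :: L).prod * w) ∧ Asc w L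

lemma asc_of_minimal (w : W)
    (hE : ∀ t : W, cs.IsReflection t → t ∈ W₀ → ¬ (ℓ (t * w) < ℓ w)) :
    ∀ L, OKL cs W₀ L →
      (∀ L', OKL cs W₀ L' → L'.prod = L.prod → mu cs w L ≤ mu cs w L') →
      Asc cs w L := by
  intro L
  induction L with
  | nil => intro _ _; trivial
  | cons c X ih =>
      intro hOK hmin
      have hOKX : OKL cs W₀ X := fun d hd => hOK d (List.mem_cons_of_mem _ hd)
      have hcOK := hOK c List.mem_cons_self
      have hminX : ∀ L', OKL cs W₀ L' → L'.prod = X.prod → mu cs w X ≤ mu cs w L' := by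
        intro L' hOK' hprod'
        by_contra hlt
        push_neg at hlt
        have hhead : ((c :: L').prod) = ((c :: X).prod) := by
          rw [List.prod_cons, List.prod_cons, hprod']
        have hOKcL' : OKL cs W₀ (c :: L') := by
          intro d hd
          rcases List.mem_cons.mp hd with h | h
          · exact h ▸ hcOK
          · exact hOK' d h
        have hcontra := hmin (c :: L') hOKcL' hhead
        rw [mu_cons, mu_cons, hhead] at hcontra
        omega
      have hAscX : Asc cs w X := ih hOKX hminX
      refine ⟨?_, hAscX⟩
      have hV : (c :: X).prod * w = c * (X.prod * w) := by rw [List.prod_cons, mul_assoc]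
      set Q := X.prod * w with hQ
      rw [hV]
      have hne : ℓ (c * Q) ≠ ℓ Q := hcOK.1.length_mul_right_ne Q
      rcases lt_or_gt_of_ne hne with hlt | hgt
      · exfalso
        have hinvc : cs.IsLeftInversion Q c := ⟨hcOK.1, hlt⟩
        match X, hQ, hOKX, hAscX, hminX with
        | [], hQ, _, _, _ =>
            have hQw : Q = w := by rw [hQ, List.prod_nil, one_mul]
            rw [hQw] at hlt
            exact hE c hcOK.1 hcOK.2 hlt
        | d :: Y, hQ, hOKX, hAscX, hminX =>
            have hdOK := hOKX d List.mem_cons_self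
            have hOKY : OKL cs W₀ Y := fun e he => hOKX e (List.mem_cons_of_mem _ he)
            set q2 := Y.prod * w with hq2
            have hQd : Q = d * q2 := by rw [hQ, List.prod_cons, mul_assoc]
            have hdQ : d * Q = q2 := by
              rw [hQd, ← mul_assoc, hdOK.1.mul_self, one_mul]
            have hstep : ℓ q2 < ℓ Q := by
              have := hAscX.1
              rw [← hq2, ← hQ] at this
              exact this
            have hinvd : cs.IsLeftInversion Q d := ⟨hdOK.1, by rw [hdQ]; exact hstep⟩
            -- mu of the original list
            have hmu0 : mu cs w (c :: d :: Y)
                = ℓ (c * Q) + (ℓ Q + mu cs w Y) := by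
              rw [mu_cons, mu_cons]
              have h1 : (c :: d :: Y).prod * w = c * Q := by
                rw [List.prod_cons, mul_assoc, hQ]
              have h2 : (d :: Y).prod * w = Q := by rw [hQ]
              rw [h1, h2]
            by_cases hcd : c = d
            · -- cancellation rewrite
              have hprodY : Y.prod = (c :: d :: Y).prod := by
                rw [List.prod_cons, List.prod_cons, ← mul_assoc, hcd, hdOK.1.mul_self, one_mul]
              have := hmin Y hOKY hprodY
              have hmuY : mu cs w (c :: d :: Y) = ℓ (c * Q) + (ℓ Q + mu cs w Y) := hmu0
              omega
            · rcases double_deletion cs hcd hinvc hinvd with h1 | h1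
              · -- use L' = (c*d*c) :: c :: Y
                rw [hdQ] at h1
                have hrefl : cs.IsReflection (c*d*c) := by
                  have := hdOK.1.conj c
                  rwa [hcOK.1.inv] at this
                have hOK' : OKL cs W₀ ((c*d*c) :: c :: Y) := by
                  intro e he
                  rcases List.mem_cons.mp he with h | h
                  · subst h
                    exact ⟨hrefl, mul_mem (mul_mem hcOK.2 hdOK.2) hcOK.2⟩
                  rcases List.mem_cons.mp h with h' | h'
                  · subst h'; exact hcOK
                  · exact hOKY e h'
                have hprod' : ((c*d*c) :: c :: Y).prod = (c :: d :: Y).prod := by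
                  rw [List.prod_cons, List.prod_cons, List.prod_cons, List.prod_cons]
                  rw [show c*d*c*(c*Y.prod) = c*d*(c*c)*Y.prod by group]
                  rw [hcOK.1.mul_self]
                  group
                have hmu' : mu cs w ((c*d*c) :: c :: Y)
                    = ℓ (c * Q) + (ℓ (c * q2) + mu cs w Y) := by
                  rw [mu_cons, mu_cons]
                  have e1 : ((c*d*c) :: c :: Y).prod * w = c * Q := by
                    rw [hprod', List.prod_cons, List.prod_cons, hQd, hq2]
                    group
                  have e2 : (c :: Y).prod * w = c * q2 := by
                    rw [List.prod_cons, mul_assoc, hq2]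
                  rw [e1, e2]
                have := hmin _ hOK' hprod'
                rw [hmu0, hmu'] at this
                omega
              · -- use L' = d :: (d*c*d) :: Y
                have hrefl : cs.IsReflection (d*c*d) := by
                  have := hcOK.1.conj d
                  rwa [hdOK.1.inv] at this
                have hOK' : OKL cs W₀ (d :: (d*c*d) :: Y) := by
                  intro e he
                  rcases List.mem_cons.mp he with h | h
                  · subst h; exact hdOK
                  rcases List.mem_cons.mp h with h' | h'
                  · subst h'
                    exact ⟨hrefl, mul_mem (mul_mem hdOK.2 hcOK.2) hdOK.2⟩
                  · exact hOKY e h'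
                have hprod' : (d :: (d*c*d) :: Y).prod = (c :: d :: Y).prod := by
                  rw [List.prod_cons, List.prod_cons, List.prod_cons, List.prod_cons]
                  rw [show d*((d*c*d)*Y.prod) = (d*d)*c*d*Y.prod by group]
                  rw [hdOK.1.mul_self]
                  group
                have hmu' : mu cs w (d :: (d*c*d) :: Y)
                    = ℓ (c * Q) + (ℓ (d * (c * Q)) + mu cs w Y) := by
                  rw [mu_cons, mu_cons]
                  have e1 : (d :: (d*c*d) :: Y).prod * w = c * Q := by
                    rw [hprod', List.prod_cons, List.prod_cons, hQd, hq2]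
                    group
                  have e2 : ((d*c*d) :: Y).prod * w = d * (c * Q) := by
                    rw [List.prod_cons, mul_assoc, ← hq2, show d*c*d*q2 = d*(c*(d*q2)) by group,
                      ← hQd]
                  rw [e1, e2]
                have := hmin _ hOK' hprod'
                rw [hmu0, hmu'] at this
                omega
      · exact hgt

lemma asc_concl (w : W) : ∀ L, Asc cs w L → L = [] ∨ ℓ w < ℓ (L.prod * w) := by
  intro L
  induction L with
  | nil => intro _; exact Or.inl rfl
  | cons c X ih =>
      rintro ⟨hstep, hX⟩
      right
      rcases ih hX with h | h
      · subst h
        simpa using hstep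
      · calc ℓ w < ℓ (X.prod * w) := h
          _ < ℓ ((c :: X).prod * w) := hstep

lemma fold (w : W)
    (hE : ∀ t : W, cs.IsReflection t → t ∈ W₀ → ¬ (ℓ (t * w) < ℓ w))
    (L : List W) (hOK : OKL cs W₀ L) :
    L.prod * w = w ∨ ℓ w < ℓ (L.prod * w) := by
  set S : Set ℕ := {n | ∃ L', OKL cs W₀ L' ∧ L'.prod = L.prod ∧ mu cs w L' = n} with hS
  have hSne : S.Nonempty := ⟨mu cs w L, L, hOK, rfl, rfl⟩
  obtain ⟨Lm, hOKm, hprodm, hmum⟩ := Nat.sInf_mem hSne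
  have hmin : ∀ L', OKL cs W₀ L' → L'.prod = Lm.prod → mu cs w Lm ≤ mu cs w L' := by
    intro L' hOK' hprod'
    have : mu cs w L' ∈ S := ⟨L', hOK', by rw [hprod', hprodm], rfl⟩
    rw [hmum]
    exact Nat.sInf_le this
  have hAsc := asc_of_minimal cs W₀ w hE Lm hOKm hmin
  rcases asc_concl cs w Lm hAsc with h | h
  · left
    rw [← hprodm, h, List.prod_nil, one_mul]
  · right
    rw [← hprodm]
    exact h

end Fold

end DeodharAux

set_option maxHeartbeats 1000000 in
/-- In any right coset `W₀x` there is a unique element `w` with `N(w) ∩ W₀ = ∅`,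
and it is the unique element of minimal length in `W₀x`. -/
theorem exists_unique_min_coset_rep (cs : CoxeterSystem M W) (W₀ : Subgroup W)
    (h : IsReflectionSubgroup cs W₀) (x : W) :
    (∃! w : W, w * x⁻¹ ∈ W₀ ∧ invSet cs w ∩ (W₀ : Set W) = ∅) ∧
    (∀ w : W, (w * x⁻¹ ∈ W₀ ∧ invSet cs w ∩ (W₀ : Set W) = ∅) →
      ∀ v : W, v * x⁻¹ ∈ W₀ → v ≠ w → cs.length w < cs.length v) := by
  obtain ⟨A, hArefl, hAclosure⟩ := h
  have hEmpty : ∀ w : W, invSet cs w ∩ (W₀ : Set W) = ∅ →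
      ∀ t : W, cs.IsReflection t → t ∈ W₀ → ¬ (cs.length (t * w) < cs.length w) := by
    intro w hw t htrefl htW hlt
    have hmem : t ∈ invSet cs w ∩ (W₀ : Set W) := ⟨⟨htrefl, hlt⟩, htW⟩
    rw [hw] at hmem
    exact hmem
  have hword : ∀ u : W, u ∈ W₀ → ∃ L : List W, DeodharAux.OKL cs W₀ L ∧ L.prod = u := by
    intro u hu
    rw [← hAclosure] at hu
    have hu' : u ∈ Submonoid.closure (A ∪ A⁻¹) := by
      rw [← Subgroup.closure_toSubmonoid]
      exact hu
    obtain ⟨L, hL, hLprod⟩ := Submonoid.exists_list_of_mem_closure hu'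
    refine ⟨L, ?_, hLprod⟩
    intro c hc
    rcases hL c hc with hcA | hcA
    · exact ⟨hArefl c hcA, hAclosure ▸ Subgroup.subset_closure hcA⟩
    · have hcA' : c⁻¹ ∈ A := Set.mem_inv.mp hcA
      have h1 : cs.IsReflection c := by
        have := (hArefl c⁻¹ hcA').isReflection_inv
        rwa [inv_inv] at this
      have h2 : c ∈ W₀ := by
        have : c⁻¹ ∈ W₀ := hAclosure ▸ Subgroup.subset_closure hcA'
        simpa using inv_mem this
      exact ⟨h1, h2⟩
  have hCore : ∀ w : W, w * x⁻¹ ∈ W₀ → invSet cs w ∩ (W₀ : Set W) = ∅ →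
      ∀ v : W, v * x⁻¹ ∈ W₀ → v ≠ w → cs.length w < cs.length v := by
    intro w hw hwE v hv hne
    have hu : (v * x⁻¹) * (w * x⁻¹)⁻¹ ∈ W₀ := mul_mem hv (inv_mem hw)
    have hu' : v * w⁻¹ ∈ W₀ := by
      have heq : (v * x⁻¹) * (w * x⁻¹)⁻¹ = v * w⁻¹ := by group
      rwa [heq] at hu
    obtain ⟨L, hOK, hLprod⟩ := hword _ hu'
    have hfold := DeodharAux.fold cs W₀ w (hEmpty w hwE) L hOK
    rw [hLprod] at hfold
    have hvw : v * w⁻¹ * w = v := by group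
    rw [hvw] at hfold
    rcases hfold with heq | hlt
    · exact absurd heq hne
    · exact hlt
  have hSne : Set.Nonempty {n | ∃ w : W, w * x⁻¹ ∈ W₀ ∧ cs.length w = n} :=
    ⟨cs.length x, x, by simp [Subgroup.one_mem], rfl⟩
  obtain ⟨w₀, hw₀coset, hw₀len⟩ := Nat.sInf_mem hSne
  have hw₀E : invSet cs w₀ ∩ (W₀ : Set W) = ∅ := by
    rw [Set.eq_empty_iff_forall_notMem]
    rintro t ⟨⟨htrefl, hlt⟩, htW⟩
    have hco : (t * w₀) * x⁻¹ ∈ W₀ := by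
      rw [mul_assoc]
      exact mul_mem htW hw₀coset
    have hmem : cs.length (t * w₀) ∈ {n | ∃ w : W, w * x⁻¹ ∈ W₀ ∧ cs.length w = n} :=
      ⟨t * w₀, hco, rfl⟩
    have := Nat.sInf_le hmem
    omega
  constructor
  · refine ⟨w₀, ⟨hw₀coset, hw₀E⟩, ?_⟩
    rintro y ⟨hycoset, hyE⟩
    by_contra hne
    have h1 := hCore y hycoset hyE w₀ hw₀coset (fun hh => hne hh.symm)
    have h2 := hCore w₀ hw₀coset hw₀E y hycoset hne
    omega
  · intro w hw v hv hne
    exact hCore w hw.1 hw.2 v hv hne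
end

section
/- Let W₀ be a reflection subgroup of a Coxeter group W, and let U₀ = {w ∈ N_W(W₀) : N(w) ∩ W₀ = ∅}. Then U₀ is a subgroup of the normalizer N_W(W₀). -/
open CoxeterSystem

variable {B W : Type*} [Group W] {M : CoxeterMatrix B}

namespace U0Aux

open scoped Classical

noncomputable section

variable (cs : CoxeterSystem M W)

/-- helper: conjugation equation -/
lemma conj_eq_iff (p q z w : W) : p * w * q = z ↔ w = p⁻¹ * z * q⁻¹ := by
  constructor
  · intro h; rw [← h]; group
  · intro h; rw [h]; group

/-- The basic involution on `W × ℤˣ` attached to a simple reflection. -/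
def g (i : B) : W × ℤˣ → W × ℤˣ :=
  fun x => (cs.simple i * x.1 * cs.simple i,
    x.2 * (if x.1 = cs.simple i then -1 else 1))

lemma g_invol (i : B) : Function.Involutive (g cs i) := by
  intro x
  simp only [g]
  have hcond : cs.simple i * x.1 * cs.simple i = cs.simple i ↔ x.1 = cs.simple i := by
    rw [conj_eq_iff]
    simp [cs.inv_simple, cs.simple_mul_simple_cancel_left]
  ext
  · simp [mul_assoc, cs.simple_mul_simple_cancel_left]
  · simp only [hcond]
    split_ifs <;> simp

/-- The permutation of `W × ℤˣ` attached to a simple reflection. -/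
def gp (i : B) : Equiv.Perm (W × ℤˣ) := (g_invol cs i).toPerm

lemma gp_apply (i : B) (x : W × ℤˣ) :
    gp cs i x = (cs.simple i * x.1 * cs.simple i,
      x.2 * (if x.1 = cs.simple i then -1 else 1)) := rfl

lemma semiconj (i j : B) (k : ℕ) :
    cs.simple j * (cs.simple i * cs.simple j) ^ k
      = (cs.simple j * cs.simple i) ^ k * cs.simple j := by
  have h : SemiconjBy (cs.simple j) (cs.simple i * cs.simple j)
      (cs.simple j * cs.simple i) := (mul_assoc _ _ _).symm
  exact h.pow_right k

lemma inv_ab (i j : B) (k : ℕ) :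
    ((cs.simple i * cs.simple j) ^ k)⁻¹ = (cs.simple j * cs.simple i) ^ k := by
  rw [← inv_pow, mul_inv_rev, cs.inv_simple, cs.inv_simple]

lemma key1 (i j : B) (k : ℕ) (w : W) :
    ((cs.simple i * cs.simple j) ^ k * w * (cs.simple j * cs.simple i) ^ k = cs.simple j)
      ↔ w = (cs.simple j * cs.simple i) ^ (2 * k) * cs.simple j := by
  rw [conj_eq_iff, inv_ab, inv_ab]
  constructor <;> intro h <;> rw [h] <;>
    rw [mul_assoc, semiconj, ← mul_assoc, ← pow_add, two_mul]

lemma key2 (i j : B) (k : ℕ) (w : W) :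
    ((cs.simple i * cs.simple j) ^ k * w * (cs.simple j * cs.simple i) ^ k
        = cs.simple j * cs.simple i * cs.simple j)
      ↔ w = (cs.simple j * cs.simple i) ^ (2 * k + 1) * cs.simple j := by
  rw [conj_eq_iff, inv_ab, inv_ab]
  have e : (cs.simple j * cs.simple i) ^ k * (cs.simple j * cs.simple i * cs.simple j) *
      (cs.simple i * cs.simple j) ^ k
      = (cs.simple j * cs.simple i) ^ (2 * k + 1) * cs.simple j := by
    calc (cs.simple j * cs.simple i) ^ k * (cs.simple j * cs.simple i * cs.simple j) *
        (cs.simple i * cs.simple j) ^ k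
        = (cs.simple j * cs.simple i) ^ k * (cs.simple j * cs.simple i) *
          (cs.simple j * (cs.simple i * cs.simple j) ^ k) := by group
      _ = (cs.simple j * cs.simple i) ^ k * (cs.simple j * cs.simple i) *
          ((cs.simple j * cs.simple i) ^ k * cs.simple j) := by rw [semiconj]
      _ = (cs.simple j * cs.simple i) ^ (2 * k + 1) * cs.simple j := by
          rw [← pow_succ, show 2 * k + 1 = (k + 1) + k by ring, pow_add]; group
  rw [e]

lemma gp_pow_apply (i j : B) (k : ℕ) (w : W) (ε : ℤˣ) :
    ((gp cs i * gp cs j) ^ k) (w, ε) =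
      ((cs.simple i * cs.simple j) ^ k * w * (cs.simple j * cs.simple i) ^ k,
        ε * ∏ q ∈ Finset.range (2 * k),
          (if w = (cs.simple j * cs.simple i) ^ q * cs.simple j then (-1 : ℤˣ) else 1)) := by
  induction k with
  | zero => simp
  | succ k ih =>
    rw [pow_succ', Equiv.Perm.mul_apply, ih, Equiv.Perm.mul_apply, gp_apply, gp_apply]
    have cond2 : (cs.simple j * ((cs.simple i * cs.simple j) ^ k * w *
        (cs.simple j * cs.simple i) ^ k) * cs.simple j = cs.simple i)
        ↔ w = (cs.simple j * cs.simple i) ^ (2 * k + 1) * cs.simple j := by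
      rw [conj_eq_iff, cs.inv_simple, ← key2 cs i j k w]
    have first : cs.simple i * (cs.simple j * ((cs.simple i * cs.simple j) ^ k * w *
          (cs.simple j * cs.simple i) ^ k) * cs.simple j) * cs.simple i
        = (cs.simple i * cs.simple j) ^ (k + 1) * w * (cs.simple j * cs.simple i) ^ (k + 1) := by
      rw [pow_succ' (cs.simple i * cs.simple j), pow_succ (cs.simple j * cs.simple i)]
      group
    have h2k : 2 * (k + 1) = (2 * k) + 1 + 1 := by ring
    dsimp only
    rw [if_congr (key1 cs i j k w) rfl rfl, if_congr cond2 rfl rfl, h2k,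
      Finset.prod_range_succ, Finset.prod_range_succ]
    refine Prod.ext first ?_
    simp [mul_assoc]

lemma liftable : M.IsLiftable (fun i => gp cs i) := by
  intro i j
  set m := M i j with hm
  apply Equiv.ext
  rintro ⟨w, ε⟩
  rw [gp_pow_apply, cs.simple_mul_simple_pow i j, cs.simple_mul_simple_pow' i j]
  have hper : ∀ q, ((cs.simple j * cs.simple i) ^ (m + q) * cs.simple j)
      = (cs.simple j * cs.simple i) ^ q * cs.simple j := by
    intro q
    rw [pow_add, cs.simple_mul_simple_pow' i j, one_mul]
  have hprod : (∏ q ∈ Finset.range (2 * m),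
      (if w = (cs.simple j * cs.simple i) ^ q * cs.simple j then (-1 : ℤˣ) else 1)) = 1 := by
    rw [two_mul, Finset.prod_range_add]
    have : ∀ q, (if w = (cs.simple j * cs.simple i) ^ (m + q) * cs.simple j then (-1 : ℤˣ) else 1)
        = (if w = (cs.simple j * cs.simple i) ^ q * cs.simple j then (-1 : ℤˣ) else 1) := by
      intro q; rw [hper q]
    rw [Finset.prod_congr rfl (fun q _ => this q), ← Finset.prod_mul_distrib]
    apply Finset.prod_eq_one
    intro q _
    split_ifs <;> simp
  rw [hprod]
  simp

/-- The Tits reflection representation on `W × ℤˣ`. -/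
def phi : W →* Equiv.Perm (W × ℤˣ) := cs.lift ⟨fun i => gp cs i, liftable cs⟩

lemma phi_simple (i : B) : phi cs (cs.simple i) = gp cs i := by
  simp [phi]

/-- The sign attached to a word. -/
def mu : List B → W → ℤˣ
  | [], _ => 1
  | i :: ω, t =>
      mu ω t * (if t = (cs.wordProd ω)⁻¹ * cs.simple i * cs.wordProd ω then -1 else 1)

lemma mem_rightInvSeq_of_mu (ω : List B) (t : W) (h : mu cs ω t = -1) :
    t ∈ cs.rightInvSeq ω := by
  induction ω with
  | nil => simp [mu] at h
  | cons i ω ih =>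
    rw [mu] at h
    show t ∈ ((cs.wordProd ω)⁻¹ * cs.simple i * cs.wordProd ω) :: cs.rightInvSeq ω
    split_ifs at h with hc
    · exact hc ▸ List.mem_cons_self
    · rw [mul_one] at h
      exact List.mem_cons_of_mem _ (ih h)

lemma phi_wordProd (ω : List B) (t : W) (ε : ℤˣ) :
    phi cs (cs.wordProd ω) (t, ε)
      = (cs.wordProd ω * t * (cs.wordProd ω)⁻¹, ε * mu cs ω t) := by
  induction ω with
  | nil => simp [mu]
  | cons i ω ih =>
    rw [cs.wordProd_cons, map_mul, Equiv.Perm.mul_apply, ih, phi_simple, gp_apply, mu]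
    have hcond : (cs.wordProd ω * t * (cs.wordProd ω)⁻¹ = cs.simple i)
        ↔ (t = (cs.wordProd ω)⁻¹ * cs.simple i * cs.wordProd ω) := by
      rw [conj_eq_iff, inv_inv]
    refine Prod.ext ?_ ?_
    · dsimp only
      rw [mul_inv_rev, cs.inv_simple]
      group
    · dsimp only
      rw [if_congr hcond rfl rfl, mul_assoc]

/-- The sign cocycle. -/
def eta (w t : W) : ℤˣ := (phi cs w (t, 1)).2

lemma phi_apply (w t : W) (ε : ℤˣ) :
    phi cs w (t, ε) = (w * t * w⁻¹, ε * eta cs w t) := by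
  obtain ⟨ω, rfl⟩ := cs.wordProd_surjective w
  rw [phi_wordProd]
  congr 1
  have h1 := phi_wordProd cs ω t 1
  have : eta cs (cs.wordProd ω) t = mu cs ω t := by
    rw [eta, h1, one_mul]
  rw [this]


lemma eta_wordProd (ω : List B) (t : W) : eta cs (cs.wordProd ω) t = mu cs ω t := by
  rw [eta, phi_wordProd, one_mul]

lemma eta_cocycle (u v t : W) :
    eta cs (u * v) t = eta cs v t * eta cs u (v * t * v⁻¹) := by
  have : phi cs (u * v) (t, 1) = (u * v * t * (u * v)⁻¹, eta cs v t * eta cs u (v * t * v⁻¹)) := by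
    rw [map_mul, Equiv.Perm.mul_apply, phi_apply cs v t 1, one_mul, phi_apply cs u]
    refine Prod.ext ?_ ?_
    · dsimp only; group
    · rfl
  rw [eta, this]

lemma isRightInversion_of_eta (w t : W) (h : eta cs w t = -1) : cs.IsRightInversion w t := by
  obtain ⟨ω, hred, rfl⟩ := cs.exists_reduced_word' w
  rw [eta_wordProd] at h
  exact cs.isRightInversion_of_mem_rightInvSeq hred (mem_rightInvSeq_of_mu cs ω t h)

lemma eta_self {t : W} (ht : cs.IsReflection t) : eta cs t t = -1 := by
  obtain ⟨u, i, rfl⟩ := ht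
  have h1 : u⁻¹ * (u * cs.simple i * u⁻¹) * (u⁻¹)⁻¹ = cs.simple i := by group
  have h2 : phi cs u⁻¹ (u * cs.simple i * u⁻¹, 1)
      = (cs.simple i, eta cs u⁻¹ (u * cs.simple i * u⁻¹)) := by
    rw [phi_apply, one_mul, h1]
  have hid : eta cs u⁻¹ (u * cs.simple i * u⁻¹) * eta cs u (cs.simple i) = 1 := by
    have hh : phi cs u (phi cs u⁻¹ (u * cs.simple i * u⁻¹, 1)) = (u * cs.simple i * u⁻¹, 1) := by
      rw [← Equiv.Perm.mul_apply, ← map_mul, mul_inv_cancel, map_one, Equiv.Perm.one_apply]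
    rw [h2, phi_apply] at hh
    have := congrArg Prod.snd hh
    simpa [one_mul] using this
  have hsplit : phi cs (u * cs.simple i * u⁻¹)
      = phi cs u * (phi cs (cs.simple i) * phi cs u⁻¹) := by
    rw [← map_mul, ← map_mul]
    congr 1
    group
  rw [eta, hsplit, Equiv.Perm.mul_apply, Equiv.Perm.mul_apply, h2, phi_simple, gp_apply]
  dsimp only
  rw [if_pos rfl, cs.simple_mul_simple_cancel_right, phi_apply]
  dsimp only
  rw [mul_neg_one, neg_mul, hid]

lemma eta_of_isRightInversion {w t : W} (h : cs.IsRightInversion w t) : eta cs w t = -1 := by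
  rcases Int.units_eq_one_or (eta cs w t) with h1 | h1
  · exfalso
    have htt : t * t * t⁻¹ = t := by
      rw [h.1.mul_self, h.1.inv]; group
    have h2 : eta cs (w * t) t = -1 := by
      rw [eta_cocycle, htt, eta_self cs h.1, h1, mul_one]
    have h3 := (isRightInversion_of_eta cs _ _ h2).2
    rw [mul_assoc, h.1.mul_self, mul_one] at h3
    exact Nat.lt_asymm h.2 h3
  · exact h1

lemma isRightInversion_mul (u v t : W) (h : cs.IsRightInversion (u * v) t) :
    cs.IsRightInversion v t ∨ cs.IsRightInversion u (v * t * v⁻¹) := by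
  have h1 := eta_of_isRightInversion cs h
  rw [eta_cocycle] at h1
  rcases Int.units_eq_one_or (eta cs v t) with h2 | h2
  · right
    apply isRightInversion_of_eta
    rwa [h2, one_mul] at h1
  · exact Or.inl (isRightInversion_of_eta cs _ _ h2)

lemma isLeftInversion_mul (u v t : W) (h : cs.IsLeftInversion (u * v) t) :
    cs.IsLeftInversion u t ∨ cs.IsLeftInversion v (u⁻¹ * t * u) := by
  rw [← cs.isRightInversion_inv_iff, mul_inv_rev] at h
  rcases isRightInversion_mul cs v⁻¹ u⁻¹ t h with h1 | h1
  · left; rwa [cs.isRightInversion_inv_iff] at h1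
  · right; rw [inv_inv] at h1; rwa [cs.isRightInversion_inv_iff] at h1

lemma isLeftInversion_conj_of_inv {w t : W} (h : cs.IsLeftInversion w⁻¹ t) :
    cs.IsLeftInversion w (w * t * w⁻¹) := by
  rw [cs.isLeftInversion_inv_iff] at h
  refine ⟨h.1.conj w, ?_⟩
  rw [show w * t * w⁻¹ * w = w * t by group]
  exact h.2

lemma not_isLeftInversion_one (t : W) : ¬ cs.IsLeftInversion 1 t := by
  rintro ⟨-, h⟩
  simp at h

end
end U0Aux

/-- `U₀ = {w ∈ N_W(W₀) : N(w) ∩ W₀ = ∅}` is a subgroup of the normalizer. -/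
theorem U0_is_subgroup (cs : CoxeterSystem M W) (W₀ : Subgroup W)
    (h : IsReflectionSubgroup cs W₀) :
    ∃ U : Subgroup W, (U : Set W) =
      {w | w ∈ Subgroup.normalizer (W₀ : Set W) ∧ invSet cs w ∩ (W₀ : Set W) = ∅} := by
  refine ⟨{ carrier := {w | w ∈ Subgroup.normalizer (W₀ : Set W) ∧ invSet cs w ∩ (W₀ : Set W) = ∅}
            one_mem' := ?_
            mul_mem' := ?_
            inv_mem' := ?_ }, rfl⟩
  · rintro a b ⟨han, hae⟩ ⟨hbn, hbe⟩
    refine ⟨mul_mem han hbn, Set.eq_empty_iff_forall_notMem.2 fun t ht => ?_⟩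
    obtain ⟨hti, htW⟩ := ht
    rcases U0Aux.isLeftInversion_mul cs a b t hti with h1 | h1
    · exact Set.eq_empty_iff_forall_notMem.1 hae t ⟨h1, htW⟩
    · have hmem : a⁻¹ * t * a ∈ W₀ := by
        have := (Subgroup.mem_normalizer_iff.1 (inv_mem han) t).1 htW
        rwa [inv_inv] at this
      exact Set.eq_empty_iff_forall_notMem.1 hbe (a⁻¹ * t * a) ⟨h1, hmem⟩
  · refine ⟨one_mem _, Set.eq_empty_iff_forall_notMem.2 fun t ht => ?_⟩
    exact U0Aux.not_isLeftInversion_one cs t ht.1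
  · rintro a ⟨han, hae⟩
    refine ⟨inv_mem han, Set.eq_empty_iff_forall_notMem.2 fun t ht => ?_⟩
    obtain ⟨hti, htW⟩ := ht
    have h1 := U0Aux.isLeftInversion_conj_of_inv cs hti
    have hmem : a * t * a⁻¹ ∈ W₀ := (Subgroup.mem_normalizer_iff.1 han t).1 htW
    exact Set.eq_empty_iff_forall_notMem.1 hae (a * t * a⁻¹) ⟨h1, hmem⟩
end

section
/- Let W₀ be a reflection subgroup of a Coxeter group W with canonical Coxeter generating set S₀ = {t ∈ T : N(t) ∩ W₀ = {t}}, and let U₀ = {w ∈ N_W(W₀) : N(w) ∩ W₀ = ∅}. Then for every u ∈ U₀ and t ∈ S₀, the conjugate utu⁻¹ belongs to S₀. -/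
open CoxeterSystem

variable {B W : Type*} [Group W] {M : CoxeterMatrix B}

/-- The canonical Coxeter generating set `S₀ = {t ∈ T : N(t) ∩ W₀ = {t}}`. -/
def canonicalGens (cs : CoxeterSystem M W) (W₀ : Subgroup W) : Set W :=
  {t | cs.IsReflection t ∧ invSet cs t ∩ (W₀ : Set W) = {t}}

namespace ReflAux

/-- The abelian group of functions `W → Multiplicative (ZMod 2)`. -/
abbrev A (W : Type*) : Type _ := W → Multiplicative (ZMod 2)

open Classical in
/-- Indicator function of `{r}`. -/
noncomputable def delta {W : Type*} (r : W) : A W :=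
  fun x => if x = r then Multiplicative.ofAdd 1 else 1

lemma two_cases : ∀ a : Multiplicative (ZMod 2), a = 1 ∨ a = Multiplicative.ofAdd 1 := by decide

lemma sq_one : ∀ a : Multiplicative (ZMod 2), a * a = 1 := by decide

lemma eq_of_mul_eq_one : ∀ a b : Multiplicative (ZMod 2), a * b = 1 → b = a := by decide

lemma mul_mul_self : ∀ a : Multiplicative (ZMod 2),
    a * (Multiplicative.ofAdd 1 * a) = Multiplicative.ofAdd 1 := by decide

lemma ofAdd_one_ne_one : (Multiplicative.ofAdd (1 : ZMod 2)) ≠ 1 := by decide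

lemma delta_self (r : W) : delta r r = Multiplicative.ofAdd 1 := by simp [delta]

lemma delta_apply_ne {r x : W} (h : x ≠ r) : delta r x = 1 := by simp [delta, h]

lemma fun_sq (a : A W) : a * a = 1 := by
  funext x
  rw [Pi.mul_apply, Pi.one_apply]
  exact sq_one _

/-- Conjugation automorphism of `A W`. -/
noncomputable def conjAut (w : W) : MulAut (A W) where
  toFun f := fun x => f (w⁻¹ * x * w)
  invFun f := fun x => f (w * x * w⁻¹)
  left_inv f := by funext x; show f _ = f x; congr 1; group
  right_inv f := by funext x; show f _ = f x; congr 1; group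
  map_mul' f g := rfl

lemma conjAut_apply (w : W) (f : A W) (x : W) : conjAut w f x = f (w⁻¹ * x * w) := rfl

/-- The conjugation action of `W` on `A W` as a homomorphism. -/
noncomputable def phi : W →* MulAut (A W) where
  toFun := conjAut
  map_one' := by
    apply MulEquiv.ext
    intro f
    funext x
    show f (1⁻¹ * x * 1) = f x
    congr 1; group
  map_mul' u v := by
    apply MulEquiv.ext
    intro f
    funext x
    show f ((u * v)⁻¹ * x * (u * v)) = f (v⁻¹ * (u⁻¹ * x * u) * v)
    congr 1; group

lemma phi_apply (w : W) : phi w = conjAut w := rfl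

lemma conjAut_delta (w r : W) : conjAut w (delta r) = delta (w * r * w⁻¹) := by
  funext x
  rw [conjAut_apply]
  by_cases hx : x = w * r * w⁻¹
  · rw [hx, show w⁻¹ * (w * r * w⁻¹) * w = r by group, delta_self, delta_self]
  · rw [delta_apply_ne hx, delta_apply_ne]
    intro hc
    apply hx
    rw [← hc]; group

variable (cs : CoxeterSystem M W)

/-- Generators of the semidirect product. -/
noncomputable def gens (i : B) : A W ⋊[phi] W := ⟨delta (cs.simple i), cs.simple i⟩

/-- The family of deltas at dihedral reflections. -/
noncomputable def dd (i j : B) (k : ℕ) : A W :=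
  delta (cs.simple i * (cs.simple j * cs.simple i) ^ k)

lemma conj_dd (i j : B) (k : ℕ) :
    conjAut (cs.simple i * cs.simple j) (dd cs i j k) = dd cs i j (k + 2) := by
  rw [dd, dd, conjAut_delta]
  congr 1
  rw [mul_inv_rev, cs.inv_simple, cs.inv_simple,
    show k + 2 = (k + 1) + 1 from rfl, pow_succ, pow_succ']
  generalize (cs.simple j * cs.simple i) ^ k = y
  group

lemma phi_pow_dd (i j : B) : ∀ n k,
    phi ((cs.simple i * cs.simple j) ^ n) (dd cs i j k) = dd cs i j (k + 2 * n) := by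
  intro n
  induction n with
  | zero => intro k; simp
  | succ n ih =>
    intro k
    rw [show k + 2 * (n + 1) = k + 2 * n + 2 by ring, pow_succ', map_mul, MulAut.mul_apply, ih,
      phi_apply, conj_dd]

lemma gens_mul_left (i j : B) :
    (gens cs i * gens cs j).left = dd cs i j 0 * dd cs i j 1 := by
  show delta (cs.simple i) * conjAut (cs.simple i) (delta (cs.simple j)) = _
  rw [conjAut_delta, cs.inv_simple, dd, dd, pow_zero, mul_one, pow_one, mul_assoc]

lemma gens_pow (i j : B) (n : ℕ) :
    (gens cs i * gens cs j) ^ n =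
      ⟨∏ k ∈ Finset.range (2 * n), dd cs i j k, (cs.simple i * cs.simple j) ^ n⟩ := by
  induction n with
  | zero => refine SemidirectProduct.ext ?_ ?_ <;> simp
  | succ n ih =>
    rw [pow_succ, ih]
    refine SemidirectProduct.ext ?_ ?_
    · rw [SemidirectProduct.mul_left]
      show _ * phi ((cs.simple i * cs.simple j) ^ n) (gens cs i * gens cs j).left = _
      rw [gens_mul_left, map_mul, phi_pow_dd, phi_pow_dd]
      rw [show 2 * (n + 1) = (2 * n + 1) + 1 by ring, Finset.prod_range_succ,
        Finset.prod_range_succ, show (0 : ℕ) + 2 * n = 2 * n by ring,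
        show (1 : ℕ) + 2 * n = 2 * n + 1 by ring, mul_assoc]
    · rw [SemidirectProduct.mul_right]
      show (cs.simple i * cs.simple j) ^ n * (cs.simple i * cs.simple j) = _
      rw [← pow_succ]

lemma liftable : M.IsLiftable (gens cs) := by
  intro i j
  rw [gens_pow]
  refine SemidirectProduct.ext ?_ ?_
  · rw [SemidirectProduct.one_left]
    show ∏ k ∈ Finset.range (2 * M i j), dd cs i j k = 1
    rw [two_mul, Finset.prod_range_add]
    have h1 : ∀ k, dd cs i j (M i j + k) = dd cs i j k := by
      intro k
      rw [dd, dd, pow_add, cs.simple_mul_simple_pow' i j, one_mul]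
    rw [Finset.prod_congr rfl (fun k _ => h1 k)]
    exact fun_sq _
  · rw [SemidirectProduct.one_right]
    exact cs.simple_mul_simple_pow i j

/-- The lifted homomorphism. -/
noncomputable def mu : W →* A W ⋊[phi] W := cs.lift ⟨gens cs, liftable cs⟩

lemma mu_simple (i : B) : mu cs (cs.simple i) = gens cs i :=
  cs.lift_apply_simple (liftable cs) i

lemma mu_right (w : W) : (mu cs w).right = w := by
  have h : (SemidirectProduct.rightHom).comp (mu cs) = MonoidHom.id W := by
    apply cs.ext_simple
    intro i
    show SemidirectProduct.rightHom (mu cs (cs.simple i)) = cs.simple i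
    rw [mu_simple]
    rfl
  exact DFunLike.congr_fun h w

/-- The reflection cocycle: `nn cs w t = -1` iff `t ∈ N(w)` (for reflections `t`). -/
noncomputable def nn (w t : W) : Multiplicative (ZMod 2) := (mu cs w).left t

lemma nn_mul (x y t : W) : nn cs (x * y) t = nn cs x t * nn cs y (x⁻¹ * t * x) := by
  unfold nn
  rw [map_mul, SemidirectProduct.mul_left, Pi.mul_apply, mu_right]
  rfl

lemma nn_one (t : W) : nn cs 1 t = 1 := by
  unfold nn
  rw [map_one, SemidirectProduct.one_left]
  rfl

lemma nn_simple (i : B) (t : W) : nn cs (cs.simple i) t = delta (cs.simple i) t := by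
  unfold nn
  rw [mu_simple]
  rfl

lemma nn_inv (x t : W) : nn cs x⁻¹ t = nn cs x (x * t * x⁻¹) := by
  have h := nn_mul cs x x⁻¹ (x * t * x⁻¹)
  rw [mul_inv_cancel, nn_one] at h
  have harg : x⁻¹ * (x * t * x⁻¹) * x = t := by group
  rw [harg] at h
  exact eq_of_mul_eq_one _ _ h.symm

lemma nn_refl_self {t : W} (ht : cs.IsReflection t) :
    nn cs t t = Multiplicative.ofAdd 1 := by
  obtain ⟨w, i, rfl⟩ := ht
  have h1 := nn_mul cs w (cs.simple i * w⁻¹) (w * cs.simple i * w⁻¹)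
  rw [show w * (cs.simple i * w⁻¹) = w * cs.simple i * w⁻¹ by group,
    show w⁻¹ * (w * cs.simple i * w⁻¹) * w = cs.simple i by group] at h1
  have h3 := nn_mul cs (cs.simple i) w⁻¹ (cs.simple i)
  rw [show (cs.simple i)⁻¹ * cs.simple i * cs.simple i = cs.simple i by group,
    nn_simple, delta_self, nn_inv] at h3
  rw [h3] at h1
  rw [h1]
  exact mul_mul_self _

lemma main : ∀ n, ∀ w t : W, cs.length w = n → cs.IsReflection t →
    (cs.IsLeftInversion w t ↔ nn cs w t = Multiplicative.ofAdd 1) := by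
  intro n
  induction n using Nat.strong_induction_on with
  | _ n IH =>
    intro w t hw ht
    constructor
    · rintro ⟨-, hlt⟩
      have hv : cs.length (t * w) < n := hw ▸ hlt
      have hmulself : t * (t * w) = w := by rw [← mul_assoc, ht.mul_self, one_mul]
      have h1 : nn cs w t = nn cs t t * nn cs (t * w) (t⁻¹ * t * t) := by
        conv_lhs => rw [← hmulself]
        exact nn_mul cs t (t * w) t
      have h2 : t⁻¹ * t * t = t := by group
      rw [h2, nn_refl_self cs ht] at h1
      have hnv : nn cs (t * w) t = 1 := by
        rcases two_cases (nn cs (t * w) t) with h | h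
        · exact h
        · exfalso
          obtain ⟨-, hlt2⟩ := (IH _ hv (t * w) t rfl ht).mpr h
          rw [hmulself] at hlt2
          exact lt_asymm hlt hlt2
      rw [hnv, mul_one] at h1
      exact h1
    · intro hnn
      by_contra hnot
      have hw1 : w ≠ 1 := by
        rintro rfl
        rw [nn_one] at hnn
        exact ofAdd_one_ne_one hnn.symm
      obtain ⟨i, hi⟩ := cs.exists_leftDescent_of_ne_one hw1
      by_cases hti : t = cs.simple i
      · exact hnot ⟨ht, by rw [hti]; exact hi⟩
      · set w' := cs.simple i * w with hw'def
        have hww : w = cs.simple i * w' := (cs.simple_mul_simple_cancel_left i).symm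
        have hlen : cs.length w' < n := hw ▸ hi
        have h1 : nn cs w t =
            nn cs (cs.simple i) t * nn cs w' ((cs.simple i)⁻¹ * t * cs.simple i) := by
          conv_lhs => rw [hww]
          exact nn_mul cs (cs.simple i) w' t
        rw [cs.inv_simple, nn_simple, delta_apply_ne hti, one_mul] at h1
        set t' := cs.simple i * t * cs.simple i with ht'def
        have ht' : cs.IsReflection t' := by
          have := ht.conj (cs.simple i)
          rwa [cs.inv_simple] at this
        have h2 : cs.IsLeftInversion w' t' :=
          (IH _ hlen w' t' rfl ht').mpr (by rw [← h1]; exact hnn)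
        obtain ⟨-, hlt'⟩ := h2
        apply hnot
        refine ⟨ht, ?_⟩
        have htw : t * w = cs.simple i * (t' * w') := by
          rw [ht'def, hw'def]
          rw [show cs.simple i * (cs.simple i * t * cs.simple i * (cs.simple i * w)) =
            (cs.simple i * cs.simple i) * t * (cs.simple i * cs.simple i) * w by group,
            cs.simple_mul_simple_self, one_mul, mul_one]
        have hb1 : cs.length (t * w) ≤ 1 + cs.length (t' * w') := by
          rw [htw]
          have := cs.length_mul_le (cs.simple i) (t' * w')
          rwa [cs.length_simple] at this
        have hb2 : cs.length w' < cs.length w := hi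
        omega
    
lemma inversion_iff {w t : W} (ht : cs.IsReflection t) :
    cs.IsLeftInversion w t ↔ nn cs w t = Multiplicative.ofAdd 1 :=
  main cs (cs.length w) w t rfl ht

end ReflAux

/-- The conjugation action of `U₀` on `W₀` preserves `S₀`. -/
theorem conj_mem_canonicalGens (cs : CoxeterSystem M W) (W₀ : Subgroup W)
    (h : IsReflectionSubgroup cs W₀) (u t : W)
    (hu : u ∈ Subgroup.normalizer (W₀ : Set W) ∧ invSet cs u ∩ (W₀ : Set W) = ∅)
    (ht : t ∈ canonicalGens cs W₀) :
    u * t * u⁻¹ ∈ canonicalGens cs W₀ := by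
  obtain ⟨hu_norm, hu_empty⟩ := hu
  obtain ⟨ht_refl, ht_inv⟩ := ht
  have hnorm := Subgroup.mem_normalizer_iff.mp hu_norm
  have htW₀ : t ∈ W₀ := by
    have h0 : t ∈ invSet cs t ∩ (W₀ : Set W) := by
      rw [ht_inv]; exact Set.mem_singleton t
    exact h0.2
  have key : ∀ r : W, cs.IsReflection r → r ∈ W₀ → ReflAux.nn cs u r = 1 := by
    intro r hr hrW
    rcases ReflAux.two_cases (ReflAux.nn cs u r) with hc | hc
    · exact hc
    · exfalso
      have hinv : cs.IsLeftInversion u r := (ReflAux.inversion_iff cs hr).mpr hc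
      have hmem : r ∈ invSet cs u ∩ (W₀ : Set W) := ⟨hinv, hrW⟩
      rw [hu_empty] at hmem
      exact hmem
  have hconjW₀ : u * t * u⁻¹ ∈ W₀ := (hnorm t).mp htW₀
  refine ⟨ht_refl.conj u, ?_⟩
  ext r
  simp only [Set.mem_inter_iff, Set.mem_singleton_iff, SetLike.mem_coe]
  constructor
  · rintro ⟨hrinv, hrW⟩
    have hrinv' : cs.IsLeftInversion (u * t * u⁻¹) r := hrinv
    have hr : cs.IsReflection r := hrinv'.1
    have h0 : ReflAux.nn cs (u * t * u⁻¹) r = Multiplicative.ofAdd 1 :=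
      (ReflAux.inversion_iff cs hr).mp hrinv'
    rw [show u * t * u⁻¹ = u * (t * u⁻¹) from mul_assoc u t u⁻¹,
      ReflAux.nn_mul, ReflAux.nn_mul, ReflAux.nn_inv] at h0
    -- h0 : nn u r * (nn t (u⁻¹ r u) * nn u (u * (t⁻¹ * (u⁻¹ * r * u) * t) * u⁻¹)) = -1
    rw [key r hr hrW, one_mul] at h0
    have hq2 : u * (t⁻¹ * (u⁻¹ * r * u) * t) * u⁻¹ =
        (u * t * u⁻¹)⁻¹ * r * (u * t * u⁻¹) := by group
    have hqrefl : cs.IsReflection ((u * t * u⁻¹)⁻¹ * r * (u * t * u⁻¹)) := by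
      have := hr.conj (u * t * u⁻¹)⁻¹
      rwa [inv_inv] at this
    have hqW : (u * t * u⁻¹)⁻¹ * r * (u * t * u⁻¹) ∈ W₀ :=
      W₀.mul_mem (W₀.mul_mem (W₀.inv_mem hconjW₀) hrW) hconjW₀
    rw [hq2, key _ hqrefl hqW, mul_one] at h0
    -- h0 : nn t (u⁻¹ * r * u) = -1
    have hprefl : cs.IsReflection (u⁻¹ * r * u) := by
      have := hr.conj u⁻¹
      rwa [inv_inv] at this
    have hpW : u⁻¹ * r * u ∈ W₀ := by
      apply (hnorm (u⁻¹ * r * u)).mpr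
      have he : u * (u⁻¹ * r * u) * u⁻¹ = r := by group
      rw [he]; exact hrW
    have hpinv : cs.IsLeftInversion t (u⁻¹ * r * u) :=
      (ReflAux.inversion_iff cs hprefl).mpr h0
    have hpmem : u⁻¹ * r * u ∈ invSet cs t ∩ (W₀ : Set W) := ⟨hpinv, hpW⟩
    rw [ht_inv] at hpmem
    have : u⁻¹ * r * u = t := hpmem
    calc r = u * (u⁻¹ * r * u) * u⁻¹ := by group
    _ = u * t * u⁻¹ := by rw [this]
  · rintro rfl
    refine ⟨?_, hconjW₀⟩
    have hc : cs.IsReflection (u * t * u⁻¹) := ht_refl.conj u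
    refine ⟨hc, ?_⟩
    rw [hc.mul_self, cs.length_one]
    exact hc.odd_length.pos
end

section
/- Let W₀ and W₁ be reflection subgroups of a Coxeter group W with W₀ = w̃W₁w̃⁻¹ for some w̃ ∈ W satisfying N(w̃) ∩ W₀ = ∅. Then the canonical generating sets satisfy S₀ = w̃S₁w̃⁻¹ and the complements satisfy U₀ = w̃U₁w̃⁻¹. -/
open CoxeterSystem

variable {B W : Type*} [Group W] {M : CoxeterMatrix B}

/-- The complement `U₀ = {w ∈ N_W(W₀) : N(w) ∩ W₀ = ∅}`, as a set. -/
def Uset (cs : CoxeterSystem M W) (W₀ : Subgroup W) : Set W :=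
  {w | w ∈ Subgroup.normalizer (W₀ : Set W) ∧ invSet cs w ∩ (W₀ : Set W) = ∅}

namespace CoxAux

open List Finset
open scoped Classical

noncomputable def sigmaPerm (cs : CoxeterSystem M W) (i : B) : Equiv.Perm (W × ZMod 2) :=
  Function.Involutive.toPerm
    (fun p => (cs.simple i * p.1 * cs.simple i, p.2 + if p.1 = cs.simple i then 1 else 0))
    (by
      intro p
      have h1 : cs.simple i * cs.simple i = 1 := cs.simple_mul_simple_self i
      refine Prod.ext ?_ ?_
      · simp [mul_assoc]
      · simp only
        by_cases h : p.1 = cs.simple i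
        · simp [h, h1, add_assoc]
          decide
        · have h2 : ¬ (cs.simple i * p.1 * cs.simple i = cs.simple i) := by
            intro hc
            apply h
            have := congrArg (fun x => cs.simple i * x * cs.simple i) hc
            simpa [mul_assoc, eq_comm] using this.symm
          simp [h, h2])

lemma sigmaPerm_apply (cs : CoxeterSystem M W) (i : B) (p : W × ZMod 2) :
    sigmaPerm cs i p = (cs.simple i * p.1 * cs.simple i, p.2 + if p.1 = cs.simple i then 1 else 0) :=
  rfl

lemma sigma_liftable (cs : CoxeterSystem M W) : CoxeterMatrix.IsLiftable M (sigmaPerm cs) := by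
  intro i j
  set q : W := cs.simple i * cs.simple j with hq
  set c : W → ZMod 2 := fun t =>
    (if t = cs.simple j then 1 else 0) + (if t = cs.simple j * cs.simple i * cs.simple j then 1 else 0)
    with hc
  have hij : cs.simple i * cs.simple i = 1 := cs.simple_mul_simple_self i
  have hjj : cs.simple j * cs.simple j = 1 := cs.simple_mul_simple_self j
  have tau_apply : ∀ p : W × ZMod 2,
      (sigmaPerm cs i * sigmaPerm cs j) p = (q * p.1 * q⁻¹, p.2 + c p.1) := by
    intro p
    rw [Equiv.Perm.mul_apply, sigmaPerm_apply, sigmaPerm_apply]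
    refine Prod.ext ?_ ?_
    · show cs.simple i * (cs.simple j * p.1 * cs.simple j) * cs.simple i = q * p.1 * q⁻¹
      rw [hq, mul_inv_rev, cs.inv_simple, cs.inv_simple]
      group
    · show p.2 + (if p.1 = cs.simple j then 1 else 0)
          + (if cs.simple j * p.1 * cs.simple j = cs.simple i then 1 else 0) = p.2 + c p.1
      have : (cs.simple j * p.1 * cs.simple j = cs.simple i)
          ↔ (p.1 = cs.simple j * cs.simple i * cs.simple j) := by
        constructor
        · intro h
          have := congrArg (fun x => cs.simple j * x * cs.simple j) h
          simpa [mul_assoc, hjj] using this.symm.symm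
        · intro h
          rw [h]
          simp [mul_assoc, hjj]
      rw [hc]
      simp only [this]
      ring
  -- power formula
  have pow_apply : ∀ (m : ℕ) (p : W × ZMod 2),
      ((sigmaPerm cs i * sigmaPerm cs j) ^ m) p
        = (q ^ m * p.1 * (q ^ m)⁻¹, p.2 + ∑ k ∈ Finset.range m, c (q ^ k * p.1 * (q ^ k)⁻¹)) := by
    intro m
    induction m with
    | zero => intro p; simp
    | succ m ih =>
      intro p
      rw [pow_succ, Equiv.Perm.mul_apply, tau_apply, ih]
      refine Prod.ext ?_ ?_
      · show q ^ m * (q * p.1 * q⁻¹) * (q ^ m)⁻¹ = q ^ (m + 1) * p.1 * (q ^ (m + 1))⁻¹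
        rw [pow_succ']
        group
      · show p.2 + c p.1 + ∑ k ∈ Finset.range m, c (q ^ k * (q * p.1 * q⁻¹) * (q ^ k)⁻¹)
            = p.2 + ∑ k ∈ Finset.range (m + 1), c (q ^ k * p.1 * (q ^ k)⁻¹)
        rw [Finset.sum_range_succ']
        have : ∀ k : ℕ, q ^ k * (q * p.1 * q⁻¹) * (q ^ k)⁻¹ = q ^ (k + 1) * p.1 * (q ^ (k + 1))⁻¹ := by
          intro k; rw [pow_succ']; group
        simp only [this]
        simp
        ring
  -- the key counting argument
  have hqm : q ^ M.M i j = 1 := cs.simple_mul_simple_pow i j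
  have hswap : ∀ k : ℕ, cs.simple j * q ^ k = (q ^ k)⁻¹ * cs.simple j := by
    have h0 : cs.simple j * q * (cs.simple j)⁻¹ = q⁻¹ := by
      rw [cs.inv_simple, hq]
      calc cs.simple j * (cs.simple i * cs.simple j) * cs.simple j
          = cs.simple j * cs.simple i * (cs.simple j * cs.simple j) := by group
        _ = cs.simple j * cs.simple i := by rw [hjj, mul_one]
        _ = (cs.simple i * cs.simple j)⁻¹ := by
            rw [mul_inv_rev, cs.inv_simple, cs.inv_simple]
    intro k
    have h1 : cs.simple j * q ^ k * (cs.simple j)⁻¹ = (q ^ k)⁻¹ := by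
      rw [← conj_pow (i := k) (a := cs.simple j) (b := q), h0, inv_pow]
    calc cs.simple j * q ^ k = cs.simple j * q ^ k * (cs.simple j)⁻¹ * cs.simple j := by group
      _ = (q ^ k)⁻¹ * cs.simple j := by rw [h1]
  have key : ∀ t : W, ∑ k ∈ Finset.range (M.M i j), c (q ^ k * t * (q ^ k)⁻¹) = 0 := by
    intro t
    set g : ℕ → ZMod 2 := fun a => if t = (q ^ a)⁻¹ * cs.simple j then 1 else 0 with hg
    have hterm : ∀ k : ℕ, c (q ^ k * t * (q ^ k)⁻¹) = g (2 * k) + g (2 * k + 1) := by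
      intro k
      have hbij : ∀ b : W, (q ^ k * t * (q ^ k)⁻¹ = b) ↔ (t = (q ^ k)⁻¹ * b * q ^ k) := by
        intro b
        constructor
        · intro h; rw [← h]; group
        · intro h; rw [h]; group
      have e1 : (q ^ k)⁻¹ * cs.simple j * q ^ k = (q ^ (2 * k))⁻¹ * cs.simple j := by
        rw [mul_assoc, hswap k, ← mul_assoc, two_mul, pow_add, mul_inv_rev]
      have e2 : (q ^ k)⁻¹ * (cs.simple j * cs.simple i * cs.simple j) * q ^ k
          = (q ^ (2 * k + 1))⁻¹ * cs.simple j := by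
        have hsjsisj : cs.simple j * cs.simple i * cs.simple j = q⁻¹ * cs.simple j := by
          rw [hq, mul_inv_rev, cs.inv_simple, cs.inv_simple]
        rw [hsjsisj]
        calc (q ^ k)⁻¹ * (q⁻¹ * cs.simple j) * q ^ k
            = (q ^ k)⁻¹ * q⁻¹ * (cs.simple j * q ^ k) := by group
          _ = (q ^ k)⁻¹ * q⁻¹ * ((q ^ k)⁻¹ * cs.simple j) := by rw [hswap k]
          _ = (q ^ k * q * q ^ k)⁻¹ * cs.simple j := by group
          _ = (q ^ (2 * k + 1))⁻¹ * cs.simple j := by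
              congr 2
              rw [two_mul, pow_add, pow_add, pow_one]
              group
      rw [hc, hg]
      simp only [hbij, e1, e2]
    rw [Finset.sum_congr rfl (fun k _ => hterm k)]
    have hdouble : ∀ m : ℕ, ∑ k ∈ Finset.range m, (g (2 * k) + g (2 * k + 1))
        = ∑ a ∈ Finset.range (2 * m), g a := by
      intro m
      induction m with
      | zero => simp
      | succ m ih =>
        have h2 : 2 * (m + 1) = 2 * m + 1 + 1 := by ring
        rw [Finset.sum_range_succ, ih, h2, Finset.sum_range_succ, Finset.sum_range_succ]
        ring
    rw [hdouble]
    have h2 : 2 * M.M i j = M.M i j + M.M i j := by ring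
    rw [h2, Finset.sum_range_add]
    have hper : ∀ a : ℕ, g (M.M i j + a) = g a := by
      intro a
      rw [hg]
      simp only [pow_add, hqm, one_mul]
    rw [Finset.sum_congr rfl (fun a _ => hper a)]
    rw [← Finset.sum_add_distrib]
    have : ∀ x : ZMod 2, x + x = 0 := by decide
    exact Finset.sum_eq_zero (fun a _ => this _)
  -- conclude
  refine Equiv.ext fun p => ?_
  rw [pow_apply, key p.1, hqm]
  simp

noncomputable def mu (cs : CoxeterSystem M W) : W →* Equiv.Perm (W × ZMod 2) :=
  cs.lift ⟨sigmaPerm cs, sigma_liftable cs⟩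

lemma mu_simple (cs : CoxeterSystem M W) (i : B) : mu cs (cs.simple i) = sigmaPerm cs i :=
  cs.lift_apply_simple (sigma_liftable cs) i

lemma mu_fst (cs : CoxeterSystem M W) (w : W) :
    ∀ p : W × ZMod 2, ((mu cs w) p).1 = w * p.1 * w⁻¹ := by
  induction w using cs.simple_induction_left with
  | one => intro p; simp
  | mul_simple_left w i ih =>
    intro p
    rw [map_mul, Equiv.Perm.mul_apply, mu_simple, sigmaPerm_apply]
    show cs.simple i * ((mu cs w) p).1 * cs.simple i = cs.simple i * w * p.1 * (cs.simple i * w)⁻¹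
    rw [ih p, mul_inv_rev, cs.inv_simple]
    group

lemma mu_snd (cs : CoxeterSystem M W) (w : W) :
    ∀ (t : W) (ε : ZMod 2), ((mu cs w) (t, ε)).2 = ε + ((mu cs w) (t, 0)).2 := by
  induction w using cs.simple_induction_left with
  | one => intro t ε; simp
  | mul_simple_left w i ih =>
    intro t ε
    rw [map_mul, Equiv.Perm.mul_apply, Equiv.Perm.mul_apply, mu_simple, sigmaPerm_apply,
      sigmaPerm_apply]
    show ((mu cs w) (t, ε)).2 + _ = ε + (((mu cs w) (t, 0)).2 + _)
    rw [ih t ε, ih t 0]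
    have hfst : ((mu cs w) (t, ε)).1 = ((mu cs w) (t, 0)).1 := by
      rw [mu_fst, mu_fst]
    rw [hfst]
    ring

noncomputable def eta (cs : CoxeterSystem M W) (w t : W) : ZMod 2 := ((mu cs w) (t, 0)).2

lemma mu_pair (cs : CoxeterSystem M W) (w t : W) (ε : ZMod 2) :
    (mu cs w) (t, ε) = (w * t * w⁻¹, ε + eta cs w t) := by
  refine Prod.ext ?_ ?_
  · exact mu_fst cs w (t, ε)
  · exact mu_snd cs w t ε

@[simp] lemma eta_one (cs : CoxeterSystem M W) (t : W) : eta cs 1 t = 0 := by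
  simp [eta]

lemma eta_mul (cs : CoxeterSystem M W) (u v t : W) :
    eta cs (u * v) t = eta cs v t + eta cs u (v * t * v⁻¹) := by
  unfold eta
  rw [map_mul, Equiv.Perm.mul_apply, mu_pair cs v t 0, zero_add, mu_pair]
  rfl

lemma eta_simple_self (cs : CoxeterSystem M W) (i : B) :
    eta cs (cs.simple i) (cs.simple i) = 1 := by
  unfold eta
  rw [mu_simple, sigmaPerm_apply]
  simp

lemma eta_inv (cs : CoxeterSystem M W) (v t : W) :
    eta cs v⁻¹ (v * t * v⁻¹) = eta cs v t := by
  have h := eta_mul cs v⁻¹ v t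
  rw [inv_mul_cancel, eta_one] at h
  have : ∀ x y : ZMod 2, 0 = x + y → y = x := by decide
  exact this _ _ h

lemma eta_refl_self (cs : CoxeterSystem M W) {t : W} (ht : cs.IsReflection t) :
    eta cs t t = 1 := by
  obtain ⟨v, i, rfl⟩ := ht
  set t := v * cs.simple i * v⁻¹ with hti
  have h1 : t = v * (cs.simple i * v⁻¹) := by rw [hti]; group
  have h2 := eta_mul cs v (cs.simple i * v⁻¹) t
  rw [← h1] at h2
  have h3 : (cs.simple i * v⁻¹) * t * (cs.simple i * v⁻¹)⁻¹ = cs.simple i := by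
    rw [hti, mul_inv_rev, cs.inv_simple]
    group
    rw [cs.simple_mul_simple_self, one_mul]
  have h4 : eta cs (cs.simple i * v⁻¹) t = eta cs v⁻¹ t + eta cs (cs.simple i) (v⁻¹ * t * v) := by
    have := eta_mul cs (cs.simple i) v⁻¹ t
    rw [inv_inv] at this
    exact this
  have h5 : v⁻¹ * t * v = cs.simple i := by rw [hti]; group
  have h6 : eta cs v⁻¹ t = eta cs v (cs.simple i) := by
    conv_lhs => rw [hti]
    exact eta_inv cs v (cs.simple i)
  rw [h2, h3, h4, h5, h6, eta_simple_self]
  have : ∀ x : ZMod 2, x + 1 + x = 1 := by decide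
  exact this _

lemma eta_wordProd (cs : CoxeterSystem M W) (ω : List B) (t : W) :
    eta cs (cs.wordProd ω) t = ((cs.rightInvSeq ω).count t : ZMod 2) := by
  induction ω with
  | nil => simp
  | cons i ω ih =>
    rw [cs.wordProd_cons]
    have h1 : eta cs (cs.simple i * cs.wordProd ω) t
        = eta cs (cs.wordProd ω) t
          + eta cs (cs.simple i) (cs.wordProd ω * t * (cs.wordProd ω)⁻¹) :=
      eta_mul cs (cs.simple i) (cs.wordProd ω) t
    rw [h1, ih]
    have h2 : cs.rightInvSeq (i :: ω)
        = ((cs.wordProd ω)⁻¹ * cs.simple i * cs.wordProd ω) :: cs.rightInvSeq ω := rfl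
    rw [h2]
    have heta : eta cs (cs.simple i) (cs.wordProd ω * t * (cs.wordProd ω)⁻¹)
        = if cs.wordProd ω * t * (cs.wordProd ω)⁻¹ = cs.simple i then 1 else 0 := by
      unfold eta; rw [mu_simple, sigmaPerm_apply]; simp
    rw [heta]
    have hcond : (cs.wordProd ω * t * (cs.wordProd ω)⁻¹ = cs.simple i)
        ↔ ((cs.wordProd ω)⁻¹ * cs.simple i * cs.wordProd ω = t) := by
      constructor
      · intro h; rw [← h]; group
      · intro h; rw [← h]; group
    by_cases h : (cs.wordProd ω)⁻¹ * cs.simple i * cs.wordProd ω = t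
    · rw [if_pos (hcond.mpr h), List.count_cons, if_pos (by simpa using h)]
      push_cast; ring
    · rw [if_neg (fun hc => h (hcond.mp hc)), List.count_cons, if_neg (by simpa using h)]
      push_cast; ring

lemma eta_eq_one_imp (cs : CoxeterSystem M W) {w t : W} (h : eta cs w t = 1) :
    cs.IsRightInversion w t := by
  obtain ⟨ω, hred, rfl⟩ := cs.exists_reduced_word' w
  apply cs.isRightInversion_of_mem_rightInvSeq hred
  rw [eta_wordProd] at h
  by_contra hmem
  rw [List.count_eq_zero_of_not_mem hmem] at h
  simp at h

lemma isRightInversion_iff_eta (cs : CoxeterSystem M W) {t : W} (ht : cs.IsReflection t) (w : W) :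
    cs.IsRightInversion w t ↔ eta cs w t = 1 := by
  constructor
  · intro h
    have htt : t * t = 1 := ht.mul_self
    have hne : eta cs (w * t) t ≠ 1 := by
      intro hc
      have h2 := (eta_eq_one_imp cs hc).2
      rw [mul_assoc, htt, mul_one] at h2
      exact absurd h.2 (by omega)
    have h0 : eta cs (w * t) t = 0 := by
      revert hne; generalize eta cs (w * t) t = x; revert x; decide
    have hw : w = (w * t) * t := by rw [mul_assoc, htt, mul_one]
    have httt : t * t * t⁻¹ = t := by rw [htt, one_mul, ht.inv]
    rw [hw, eta_mul, eta_refl_self cs ht, httt, h0, add_zero]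
  · exact eta_eq_one_imp cs

lemma isLeftInversion_iff_eta (cs : CoxeterSystem M W) {t : W} (ht : cs.IsReflection t) (w : W) :
    cs.IsLeftInversion w t ↔ eta cs w⁻¹ t = 1 := by
  rw [← cs.isRightInversion_inv_iff]
  exact isRightInversion_iff_eta cs ht w⁻¹

section Main

variable (cs : CoxeterSystem M W) (W₀ W₁ : Subgroup W) (wt : W)

lemma lemA
    (hconj : (W₀ : Set W) = (fun x => wt * x * wt⁻¹) '' (W₁ : Set W))
    (hmin : invSet cs wt ∩ (W₀ : Set W) = ∅)
    {t u : W} (ht : cs.IsReflection t) (htW : t ∈ W₁) (hu : u⁻¹ * t * u ∈ W₁) :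
    cs.IsLeftInversion (wt * u * wt⁻¹) (wt * t * wt⁻¹) ↔ cs.IsLeftInversion u t := by
  have memW0 : ∀ x : W, x ∈ W₁ → wt * x * wt⁻¹ ∈ (W₀ : Set W) := by
    intro x hx
    rw [hconj]
    exact ⟨x, hx, rfl⟩
  have hnot : ∀ x : W, x ∈ (W₀ : Set W) → ¬ cs.IsLeftInversion wt x := by
    intro x hx hinv
    exact Set.eq_empty_iff_forall_notMem.mp hmin x ⟨hinv, hx⟩
  have ht₀ : cs.IsReflection (wt * t * wt⁻¹) := ht.conj wt
  have hsu : cs.IsReflection (u⁻¹ * t * u) := by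
    have := ht.conj u⁻¹
    rwa [inv_inv] at this
  -- eta computations
  have e1 : (wt * u * wt⁻¹)⁻¹ = wt * (u⁻¹ * wt⁻¹) := by group
  have e2 : eta cs (wt * (u⁻¹ * wt⁻¹)) (wt * t * wt⁻¹)
      = eta cs (u⁻¹ * wt⁻¹) (wt * t * wt⁻¹)
        + eta cs wt ((u⁻¹ * wt⁻¹) * (wt * t * wt⁻¹) * (u⁻¹ * wt⁻¹)⁻¹) :=
    eta_mul cs wt (u⁻¹ * wt⁻¹) (wt * t * wt⁻¹)
  have e3 : (u⁻¹ * wt⁻¹) * (wt * t * wt⁻¹) * (u⁻¹ * wt⁻¹)⁻¹ = u⁻¹ * t * u := by group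
  have e4 : eta cs (u⁻¹ * wt⁻¹) (wt * t * wt⁻¹)
      = eta cs wt⁻¹ (wt * t * wt⁻¹) + eta cs u⁻¹ (wt⁻¹ * (wt * t * wt⁻¹) * wt) := by
    have := eta_mul cs u⁻¹ wt⁻¹ (wt * t * wt⁻¹)
    rwa [inv_inv] at this
  have e5 : wt⁻¹ * (wt * t * wt⁻¹) * wt = t := by group
  have z1 : eta cs wt (u⁻¹ * t * u) = 0 := by
    by_contra hz
    have h1 : eta cs wt (u⁻¹ * t * u) = 1 := by
      revert hz; generalize eta cs wt (u⁻¹ * t * u) = x; revert x; decide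
    have h2 := (isRightInversion_iff_eta cs hsu wt).mpr h1
    have h3 : cs.IsLeftInversion wt (wt * (u⁻¹ * t * u) * wt⁻¹) := by
      refine ⟨hsu.conj wt, ?_⟩
      have : wt * (u⁻¹ * t * u) * wt⁻¹ * wt = wt * (u⁻¹ * t * u) := by group
      rw [this]
      exact h2.2
    exact hnot _ (memW0 _ hu) h3
  have z2 : eta cs wt⁻¹ (wt * t * wt⁻¹) = 0 := by
    by_contra hz
    have h1 : eta cs wt⁻¹ (wt * t * wt⁻¹) = 1 := by
      revert hz; generalize eta cs wt⁻¹ (wt * t * wt⁻¹) = x; revert x; decide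
    have h2 := (isRightInversion_iff_eta cs ht₀ wt⁻¹).mpr h1
    rw [cs.isRightInversion_inv_iff] at h2
    exact hnot _ (memW0 _ htW) h2
  rw [isLeftInversion_iff_eta cs ht₀, isLeftInversion_iff_eta cs ht,
    e1, e2, e3, e4, e5, z1, z2]
  ring_nf

lemma invSet_conj
    (hconj : (W₀ : Set W) = (fun x => wt * x * wt⁻¹) '' (W₁ : Set W))
    (hmin : invSet cs wt ∩ (W₀ : Set W) = ∅)
    {u : W} (hu : ∀ t : W, t ∈ W₁ → u⁻¹ * t * u ∈ W₁) :
    invSet cs (wt * u * wt⁻¹) ∩ (W₀ : Set W)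
      = (fun x => wt * x * wt⁻¹) '' (invSet cs u ∩ (W₁ : Set W)) := by
  have memW0 : ∀ x : W, x ∈ W₁ → wt * x * wt⁻¹ ∈ (W₀ : Set W) := by
    intro x hx; rw [hconj]; exact ⟨x, hx, rfl⟩
  ext x
  constructor
  · rintro ⟨hxi, hxW⟩
    rw [hconj] at hxW
    obtain ⟨y, hyW, rfl⟩ := hxW
    have hxrefl : cs.IsReflection (wt * y * wt⁻¹) := hxi.1
    have hyrefl : cs.IsReflection y := by
      have := hxrefl.conj wt⁻¹
      have e : wt⁻¹ * (wt * y * wt⁻¹) * wt⁻¹⁻¹ = y := by group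
      rwa [e] at this
    refine ⟨y, ⟨?_, hyW⟩, rfl⟩
    exact (lemA cs W₀ W₁ wt hconj hmin hyrefl hyW (hu y hyW)).mp hxi
  · rintro ⟨y, ⟨hyi, hyW⟩, rfl⟩
    refine ⟨?_, memW0 y hyW⟩
    exact (lemA cs W₀ W₁ wt hconj hmin hyi.1 hyW (hu y hyW)).mpr hyi

lemma memW0_iff
    (hconj : (W₀ : Set W) = (fun x => wt * x * wt⁻¹) '' (W₁ : Set W)) (x : W) :
    x ∈ W₀ ↔ wt⁻¹ * x * wt ∈ W₁ := by
  constructor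
  · intro hx
    have : x ∈ (W₀ : Set W) := hx
    rw [hconj] at this
    obtain ⟨y, hy, rfl⟩ := this
    have e : wt⁻¹ * (wt * y * wt⁻¹) * wt = y := by group
    rwa [e]
  · intro hx
    have : wt * (wt⁻¹ * x * wt) * wt⁻¹ ∈ (W₀ : Set W) := by
      rw [hconj]; exact ⟨_, hx, rfl⟩
    have e : wt * (wt⁻¹ * x * wt) * wt⁻¹ = x := by group
    rwa [e] at this

lemma memW1_iff
    (hconj : (W₀ : Set W) = (fun x => wt * x * wt⁻¹) '' (W₁ : Set W)) (y : W) :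
    y ∈ W₁ ↔ wt * y * wt⁻¹ ∈ W₀ := by
  rw [memW0_iff W₀ W₁ wt hconj]
  have e : wt⁻¹ * (wt * y * wt⁻¹) * wt = y := by group
  rw [e]

lemma norm_iff
    (hconj : (W₀ : Set W) = (fun x => wt * x * wt⁻¹) '' (W₁ : Set W)) (u : W) :
    u ∈ Subgroup.normalizer (W₁ : Set W) ↔ wt * u * wt⁻¹ ∈ Subgroup.normalizer (W₀ : Set W) := by
  constructor
  · intro hu
    rw [Subgroup.mem_normalizer_iff]
    intro x
    rw [memW0_iff W₀ W₁ wt hconj x, memW0_iff W₀ W₁ wt hconj]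
    have e : wt⁻¹ * (wt * u * wt⁻¹ * x * (wt * u * wt⁻¹)⁻¹) * wt
        = u * (wt⁻¹ * x * wt) * u⁻¹ := by group
    rw [e]
    exact Subgroup.mem_normalizer_iff.mp hu (wt⁻¹ * x * wt)
  · intro h
    rw [Subgroup.mem_normalizer_iff]
    intro y
    have h1 := Subgroup.mem_normalizer_iff.mp h (wt * y * wt⁻¹)
    rw [memW1_iff W₀ W₁ wt hconj y, memW1_iff W₀ W₁ wt hconj (u * y * u⁻¹)]
    have e : wt * u * wt⁻¹ * (wt * y * wt⁻¹) * (wt * u * wt⁻¹)⁻¹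
        = wt * (u * y * u⁻¹) * wt⁻¹ := by group
    rw [e] at h1
    exact h1

end Main

end CoxAux

open CoxAux in
/-- If `W₀ = wt W₁ wt⁻¹` with `N(wt) ∩ W₀ = ∅`, then `S₀ = wt S₁ wt⁻¹` and
`U₀ = wt U₁ wt⁻¹`. -/
theorem conj_canonicalGens_and_U (cs : CoxeterSystem M W) (W₀ W₁ : Subgroup W)
    (h₀ : IsReflectionSubgroup cs W₀) (h₁ : IsReflectionSubgroup cs W₁) (wt : W)
    (hconj : (W₀ : Set W) = (fun x => wt * x * wt⁻¹) '' (W₁ : Set W))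
    (hmin : invSet cs wt ∩ (W₀ : Set W) = ∅) :
    canonicalGens cs W₀ = (fun x => wt * x * wt⁻¹) '' canonicalGens cs W₁ ∧
    Uset cs W₀ = (fun x => wt * x * wt⁻¹) '' Uset cs W₁ := by
  have hinj : Function.Injective (fun x : W => wt * x * wt⁻¹) := by
    intro a b hab
    simpa using (MulAut.conj wt).injective (show MulAut.conj wt a = MulAut.conj wt b by
      simpa [MulAut.conj_apply] using hab)
  constructor
  · ext t₀
    constructor
    · rintro ⟨htrefl, hset⟩
      have ht₀mem : t₀ ∈ invSet cs t₀ ∩ (W₀ : Set W) := by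
        rw [hset]; exact rfl
      have ht₀W : t₀ ∈ (W₀ : Set W) := ht₀mem.2
      rw [hconj] at ht₀W
      obtain ⟨y, hyW, rfl⟩ := ht₀W
      have hyrefl : cs.IsReflection y := by
        have := htrefl.conj wt⁻¹
        have e : wt⁻¹ * (wt * y * wt⁻¹) * wt⁻¹⁻¹ = y := by group
        rwa [e] at this
      refine ⟨y, ⟨hyrefl, ?_⟩, rfl⟩
      have hu : ∀ t : W, t ∈ W₁ → y⁻¹ * t * y ∈ W₁ := by
        intro t htW
        exact Subgroup.mul_mem _ (Subgroup.mul_mem _ (Subgroup.inv_mem _ hyW) htW) hyW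
      have hC := invSet_conj cs W₀ W₁ wt hconj hmin hu
      rw [hset] at hC
      apply hinj.image_injective
      rw [← hC, Set.image_singleton]
    · rintro ⟨y, ⟨hyrefl, hyset⟩, rfl⟩
      have hyW : y ∈ W₁ := by
        have : y ∈ invSet cs y ∩ (W₁ : Set W) := by rw [hyset]; exact rfl
        exact this.2
      have hu : ∀ t : W, t ∈ W₁ → y⁻¹ * t * y ∈ W₁ := by
        intro t htW
        exact Subgroup.mul_mem _ (Subgroup.mul_mem _ (Subgroup.inv_mem _ hyW) htW) hyW
      refine ⟨hyrefl.conj wt, ?_⟩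
      have hC := invSet_conj cs W₀ W₁ wt hconj hmin hu
      rw [hyset, Set.image_singleton] at hC
      exact hC
  · ext w
    constructor
    · rintro ⟨hnorm, hempty⟩
      refine ⟨wt⁻¹ * w * wt, ⟨?_, ?_⟩, by group⟩
      · rw [norm_iff W₀ W₁ wt hconj]
        have e : wt * (wt⁻¹ * w * wt) * wt⁻¹ = w := by group
        rwa [e]
      · have hnorm' : wt⁻¹ * w * wt ∈ Subgroup.normalizer (W₁ : Set W) := by
          rw [norm_iff W₀ W₁ wt hconj]
          have e : wt * (wt⁻¹ * w * wt) * wt⁻¹ = w := by group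
          rwa [e]
        have hu : ∀ t : W, t ∈ W₁ → (wt⁻¹ * w * wt)⁻¹ * t * (wt⁻¹ * w * wt) ∈ W₁ := by
          intro t htW
          have h1 := Subgroup.mem_normalizer_iff.mp (Subgroup.inv_mem _ hnorm')
            t
          have := h1.mp htW
          have e : (wt⁻¹ * w * wt)⁻¹ * t * ((wt⁻¹ * w * wt)⁻¹)⁻¹
              = (wt⁻¹ * w * wt)⁻¹ * t * (wt⁻¹ * w * wt) := by group
          rwa [e] at this
        have hC := invSet_conj cs W₀ W₁ wt hconj hmin hu
        have e : wt * (wt⁻¹ * w * wt) * wt⁻¹ = w := by group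
        rw [e, hempty] at hC
        exact Set.image_eq_empty.mp hC.symm
    · rintro ⟨u, ⟨hunorm, huempty⟩, rfl⟩
      refine ⟨(norm_iff W₀ W₁ wt hconj u).mp hunorm, ?_⟩
      have hu : ∀ t : W, t ∈ W₁ → u⁻¹ * t * u ∈ W₁ := by
        intro t htW
        have h1 := Subgroup.mem_normalizer_iff.mp (Subgroup.inv_mem _ hunorm) t
        have := h1.mp htW
        have e : u⁻¹ * t * u⁻¹⁻¹ = u⁻¹ * t * u := by group
        rwa [e] at this
      have hC := invSet_conj cs W₀ W₁ wt hconj hmin hu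
      rw [huempty, Set.image_empty] at hC
      exact hC
end

section
/- Let (s₁,…,s_k) be a sequence of simple generators of a Coxeter group, and define recursively the pairs (a₁,b₁),…,(a_r,b_r) by: if the current expression is non-reduced, take a_i maximal such that the suffix starting at position a_i is non-reduced and b_i the corresponding deletion partner, then delete both letters. Then the indices satisfy a₁ > a₂ > ⋯ > a_r, the final expression is reduced, and ℓ(s₁⋯s_k) = k − 2r. -/
open CoxeterSystem

variable {B W : Type*} [Group W] {M : CoxeterMatrix B}

namespace DeletionProcAux

open scoped Classical

noncomputable section

variable (cs : CoxeterSystem M W)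

/-- One simple-reflection step of the sign representation on `W × ℤˣ`. -/
def sgnMap (i : B) : W × ℤˣ → W × ℤˣ :=
  fun p => (cs.simple i * p.1 * cs.simple i, if p.1 = cs.simple i then -p.2 else p.2)

lemma sgnMap_invol (i : B) : Function.Involutive (sgnMap cs i) := by
  rintro ⟨w, e⟩
  by_cases h : w = cs.simple i
  · subst h; simp [sgnMap]
  · have h2 : ¬ (cs.simple i * w * cs.simple i = cs.simple i) := by
      intro hh
      apply h
      have := congrArg (fun z => cs.simple i * z * cs.simple i) hh
      simpa [mul_assoc] using this
    simp [sgnMap, h, h2, ← mul_assoc]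

/-- The permutation of `W × ℤˣ` attached to a simple generator. -/
def sigmaPerm (i : B) : Equiv.Perm (W × ℤˣ) := (sgnMap_invol cs i).toPerm

lemma sigmaPerm_apply (i : B) (p : W × ℤˣ) :
    sigmaPerm cs i p = (cs.simple i * p.1 * cs.simple i,
      if p.1 = cs.simple i then -p.2 else p.2) := rfl

lemma simple_conj_pow (i j : B) (k : ℕ) :
    cs.simple j * (cs.simple i * cs.simple j) ^ k =
      (cs.simple j * cs.simple i) ^ k * cs.simple j := by
  have h : cs.simple j * (cs.simple i * cs.simple j) ^ k * (cs.simple j)⁻¹ =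
      (cs.simple j * cs.simple i) ^ k := by
    rw [← conj_pow]
    congr 1
    simp [mul_assoc]
  calc cs.simple j * (cs.simple i * cs.simple j) ^ k
      = cs.simple j * (cs.simple i * cs.simple j) ^ k * (cs.simple j)⁻¹ * cs.simple j := by
        group
    _ = (cs.simple j * cs.simple i) ^ k * cs.simple j := by rw [h]

lemma palindrome1 (i j : B) (k : ℕ) :
    ((cs.simple i * cs.simple j) ^ k)⁻¹ * cs.simple j * (cs.simple i * cs.simple j) ^ k =
      (cs.simple j * cs.simple i) ^ (2 * k) * cs.simple j := by
  have h1 : ((cs.simple i * cs.simple j) ^ k)⁻¹ = (cs.simple j * cs.simple i) ^ k := by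
    rw [← inv_pow, mul_inv_rev, cs.inv_simple, cs.inv_simple]
  rw [h1, mul_assoc, simple_conj_pow, two_mul, pow_add, ← mul_assoc]

lemma palindrome2 (i j : B) (k : ℕ) :
    ((cs.simple i * cs.simple j) ^ k)⁻¹ * (cs.simple j * cs.simple i * cs.simple j) *
        (cs.simple i * cs.simple j) ^ k =
      (cs.simple j * cs.simple i) ^ (2 * k + 1) * cs.simple j := by
  have h1 : ((cs.simple i * cs.simple j) ^ k)⁻¹ = (cs.simple j * cs.simple i) ^ k := by
    rw [← inv_pow, mul_inv_rev, cs.inv_simple, cs.inv_simple]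
  rw [h1]
  calc (cs.simple j * cs.simple i) ^ k * (cs.simple j * cs.simple i * cs.simple j) *
        (cs.simple i * cs.simple j) ^ k
      = (cs.simple j * cs.simple i) ^ (k + 1) *
          (cs.simple j * (cs.simple i * cs.simple j) ^ k) := by
        rw [pow_succ]; group
    _ = (cs.simple j * cs.simple i) ^ (k + 1) *
          ((cs.simple j * cs.simple i) ^ k * cs.simple j) := by rw [simple_conj_pow]
    _ = (cs.simple j * cs.simple i) ^ (2 * k + 1) * cs.simple j := by
        rw [← mul_assoc, ← pow_add]; ring_nf

lemma sigmaPerm_mul_pow (i j : B) (k : ℕ) (w : W) (e : ℤˣ) :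
    ((sigmaPerm cs i * sigmaPerm cs j) ^ k) (w, e) =
      ((cs.simple i * cs.simple j) ^ k * w * ((cs.simple i * cs.simple j) ^ k)⁻¹,
       e * ∏ n ∈ Finset.range (2 * k),
         (if (cs.simple j * cs.simple i) ^ n * cs.simple j = w then (-1 : ℤˣ) else 1)) := by
  induction k with
  | zero => simp
  | succ k ih =>
    rw [pow_succ', Equiv.Perm.mul_apply, ih, Equiv.Perm.mul_apply]
    set q : W := (cs.simple i * cs.simple j) ^ k with hq
    have c1 : (q * w * q⁻¹ = cs.simple j) ↔
        ((cs.simple j * cs.simple i) ^ (2 * k) * cs.simple j = w) := by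
      rw [← palindrome1 cs i j k, ← hq]
      constructor
      · rintro h; rw [← h]; group
      · rintro h; rw [← h]; group
    have c2 : (cs.simple j * (q * w * q⁻¹) * cs.simple j = cs.simple i) ↔
        ((cs.simple j * cs.simple i) ^ (2 * k + 1) * cs.simple j = w) := by
      rw [← palindrome2 cs i j k, ← hq]
      constructor
      · intro h
        have : q * w * q⁻¹ = cs.simple j * cs.simple i * cs.simple j := by
          rw [← h]; simp [← mul_assoc]
        rw [← this]; group
      · rintro h; rw [← h]
        have : q * (q⁻¹ * (cs.simple j * cs.simple i * cs.simple j) * q) * q⁻¹ =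
            cs.simple j * cs.simple i * cs.simple j := by group
        rw [this]; simp [← mul_assoc]
    rw [sigmaPerm_apply, sigmaPerm_apply]
    simp only []
    have hrange : 2 * (k + 1) = 2 * k + 1 + 1 := by ring
    rw [hrange, Finset.prod_range_succ, Finset.prod_range_succ]
    rw [Prod.mk.injEq]
    refine ⟨?_, ?_⟩
    · rw [pow_succ', mul_inv_rev, mul_inv_rev, cs.inv_simple, cs.inv_simple, ← hq]
      group
    rw [← c1, ← c2]
    by_cases h1 : q * w * q⁻¹ = cs.simple j <;>
      by_cases h2 : cs.simple j * (q * w * q⁻¹) * cs.simple j = cs.simple i <;>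
        simp [h1, h2] <;> ring

lemma sigma_liftable : CoxeterMatrix.IsLiftable M (fun i => sigmaPerm cs i) := by
  intro i j
  ext ⟨w, e⟩
  · rw [sigmaPerm_mul_pow]
    simp [cs.simple_mul_simple_pow i j]
  · rw [sigmaPerm_mul_pow]
    have hper : ∀ n : ℕ,
        (cs.simple j * cs.simple i) ^ (M i j + n) = (cs.simple j * cs.simple i) ^ n := by
      intro n
      rw [pow_add, cs.simple_mul_simple_pow' i j, one_mul]
    have hprod : (∏ n ∈ Finset.range (2 * M i j),
        (if (cs.simple j * cs.simple i) ^ n * cs.simple j = w then (-1 : ℤˣ) else 1)) = 1 := by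
      rw [two_mul, Finset.prod_range_add]
      have : ∀ n ∈ Finset.range (M i j),
          (if (cs.simple j * cs.simple i) ^ (M i j + n) * cs.simple j = w then (-1 : ℤˣ) else 1)
          = (if (cs.simple j * cs.simple i) ^ n * cs.simple j = w then (-1 : ℤˣ) else 1) := by
        intro n _
        rw [hper]
      rw [Finset.prod_congr rfl this]
      exact Int.units_mul_self _
    simp [hprod]

/-- The sign representation `W →* Perm (W × ℤˣ)`. -/
def signRep : W →* Equiv.Perm (W × ℤˣ) := cs.lift ⟨fun i => sigmaPerm cs i, sigma_liftable cs⟩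

@[simp] lemma signRep_simple (i : B) : signRep cs (cs.simple i) = sigmaPerm cs i := by
  simp [signRep, cs.lift_apply_simple]

/-- The sign of `w` in the inversion sequence of a word. -/
def sgn (ω : List B) (w : W) : ℤˣ :=
  ((cs.rightInvSeq ω).map (fun t => if t = w then (-1 : ℤˣ) else 1)).prod

lemma signRep_wordProd (ω : List B) (w : W) (e : ℤˣ) :
    signRep cs (cs.wordProd ω) (w, e) =
      (cs.wordProd ω * w * (cs.wordProd ω)⁻¹, e * sgn cs ω w) := by
  induction ω generalizing e with
  | nil => simp [sgn]
  | cons i ω ih =>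
    rw [cs.wordProd_cons, map_mul, Equiv.Perm.mul_apply, ih, signRep_simple, sigmaPerm_apply]
    rw [Prod.mk.injEq]
    have hc : (cs.wordProd ω * w * (cs.wordProd ω)⁻¹ = cs.simple i) ↔
        ((cs.wordProd ω)⁻¹ * cs.simple i * cs.wordProd ω = w) := by
      constructor
      · rintro h; rw [← h]; group
      · rintro h; rw [← h]; group
    refine ⟨by rw [mul_inv_rev, cs.inv_simple]; group, ?_⟩
    have hris : sgn cs (i :: ω) w =
        (if (cs.wordProd ω)⁻¹ * cs.simple i * cs.wordProd ω = w then (-1 : ℤˣ) else 1)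
          * sgn cs ω w := by
      simp [sgn, rightInvSeq]
    rw [hris, ← hc]
    by_cases h : cs.wordProd ω * w * (cs.wordProd ω)⁻¹ = cs.simple i <;> simp [h] <;> ring

lemma sgn_eq_of_wordProd_eq {ω ω' : List B} (h : cs.wordProd ω = cs.wordProd ω') (w : W) :
    sgn cs ω w = sgn cs ω' w := by
  have h1 := signRep_wordProd cs ω w 1
  have h2 := signRep_wordProd cs ω' w 1
  rw [h] at h1
  have := h1.symm.trans h2
  simpa using congrArg Prod.snd this

lemma sgn_eq_one_of_not_mem {ω : List B} {w : W} (h : w ∉ cs.rightInvSeq ω) :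
    sgn cs ω w = 1 := by
  apply List.prod_eq_one
  intro u hu
  obtain ⟨t, ht, rfl⟩ := List.mem_map.mp hu
  rw [if_neg]
  rintro rfl
  exact h ht

lemma mem_of_sgn_ne_one {ω : List B} {w : W} (h : sgn cs ω w ≠ 1) :
    w ∈ cs.rightInvSeq ω := by
  by_contra hmem
  exact h (sgn_eq_one_of_not_mem cs hmem)

lemma sgn_concat (ω : List B) (x : B) :
    sgn cs (ω.concat x) (cs.simple x) = - sgn cs ω (cs.simple x) := by
  unfold sgn
  rw [cs.rightInvSeq_concat, List.concat_eq_append, List.map_append, List.prod_append,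
    List.map_map]
  have hmap : (fun t => if t = cs.simple x then (-1 : ℤˣ) else 1) ∘ (MulAut.conj (cs.simple x)) =
      (fun t => if t = cs.simple x then (-1 : ℤˣ) else 1) := by
    funext t
    have : ((MulAut.conj (cs.simple x)) t = cs.simple x) ↔ (t = cs.simple x) := by
      rw [MulAut.conj_apply]
      constructor
      · intro h
        have := congrArg (fun z => (cs.simple x)⁻¹ * z * cs.simple x) h
        simpa [mul_assoc] using this
      · rintro rfl; simp
    simp only [Function.comp_apply]
    exact if_congr this rfl rfl
  rw [hmap]
  simp [mul_comm]

lemma mem_rightInvSeq_of_descent {ω : List B} (hred : cs.IsReduced ω) {x : B}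
    (h : cs.length (cs.wordProd ω * cs.simple x) < cs.length (cs.wordProd ω)) :
    cs.simple x ∈ cs.rightInvSeq ω := by
  by_contra hmem
  obtain ⟨τ, hτlen, hτ⟩ := cs.exists_reduced_word (cs.wordProd ω * cs.simple x)
  have hτred : cs.IsReduced τ := by
    show cs.length (cs.wordProd τ) = τ.length
    exact hτlen
  have hω' : cs.wordProd (τ.concat x) = cs.wordProd ω := by
    rw [cs.wordProd_concat, ← hτ]
    simp [mul_assoc]
  have h1 : sgn cs ω (cs.simple x) = 1 := sgn_eq_one_of_not_mem cs hmem
  have h3 := sgn_eq_of_wordProd_eq cs hω' (cs.simple x)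
  rw [sgn_concat, h1] at h3
  have hmemτ : cs.simple x ∈ cs.rightInvSeq τ := by
    apply mem_of_sgn_ne_one
    intro hone
    rw [hone] at h3
    exact absurd h3 (by decide)
  have hinv := cs.isRightInversion_of_mem_rightInvSeq hτred hmemτ
  have : cs.length (cs.wordProd τ * cs.simple x) < cs.length (cs.wordProd τ) := hinv.2
  rw [← hτ] at this
  simp only [mul_assoc, cs.simple_mul_simple_self, mul_one] at this
  omega

lemma exists_eraseIdx_of_descent {ω : List B} (hred : cs.IsReduced ω) {x : B}
    (h : cs.length (cs.wordProd ω * cs.simple x) < cs.length (cs.wordProd ω)) :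
    ∃ j < ω.length, cs.wordProd (ω.eraseIdx j) = cs.wordProd ω * cs.simple x := by
  have hmem := mem_rightInvSeq_of_descent cs hred h
  obtain ⟨j, hj, hjx⟩ := List.getElem_of_mem hmem
  refine ⟨j, by simpa using hj, ?_⟩
  rw [← cs.wordProd_mul_getD_rightInvSeq ω j]
  congr 1
  rw [List.getD_eq_getElem _ _ hj, hjx]

/-- The key deletion identity. -/
lemma key_identity (A x : B) (u : List B) (h1 : cs.IsReduced (A :: u))
    (h2 : cs.IsReduced (u ++ [x])) (h3 : ¬ cs.IsReduced ((A :: u) ++ [x])) :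
    cs.simple A * cs.wordProd u * cs.simple x = cs.wordProd u := by
  have hlen1 : cs.length (cs.wordProd (A :: u)) = u.length + 1 := by
    rw [h1]; simp
  have hdesc : cs.length (cs.wordProd (A :: u) * cs.simple x) <
      cs.length (cs.wordProd (A :: u)) := by
    rcases cs.length_mul_simple (cs.wordProd (A :: u)) x with hh | hh
    · exfalso
      apply h3
      show cs.length (cs.wordProd (A :: u ++ [x])) = (A :: u ++ [x]).length
      rw [wordProd_append, cs.wordProd_singleton, hh, hlen1]
      simp
    · omega
  obtain ⟨j, hj, hjj⟩ := exists_eraseIdx_of_descent cs h1 hdesc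
  match j with
  | 0 =>
    rw [List.eraseIdx_cons_zero] at hjj
    rw [cs.wordProd_cons] at hjj
    exact hjj.symm
  | c + 1 =>
    exfalso
    rw [List.eraseIdx_cons_succ, cs.wordProd_cons, cs.wordProd_cons, mul_assoc,
      mul_left_cancel_iff] at hjj
    have heq : cs.wordProd (u.eraseIdx c) = cs.wordProd (u ++ [x]) := by
      rw [hjj, wordProd_append, cs.wordProd_singleton]
    have hle : (u.eraseIdx c).length ≤ u.length := by
      rw [List.length_eraseIdx]
      split <;> omega
    have hub := cs.length_wordProd_le (u.eraseIdx c)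
    rw [heq, h2] at hub
    simp at hub
    omega

lemma isReduced_singleton (i : B) : cs.IsReduced [i] := by
  show cs.length (cs.wordProd [i]) = 1
  rw [cs.wordProd_singleton, cs.length_simple]

lemma isReduced_nil : cs.IsReduced ([] : List B) := by
  show cs.length (cs.wordProd []) = 0
  simp

/-- Reducedness of all suffixes of the word obtained by deleting the two letters. -/
lemma step_red (u R : List B) (A x : B)
    (hsuf : cs.IsReduced (u ++ x :: R))
    (hnra : cs.length (cs.simple A * cs.wordProd (u ++ x :: R)) ≠ (u ++ x :: R).length + 1)
    (hkey : cs.simple A * cs.wordProd u * cs.simple x = cs.wordProd u)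
    (d : ℕ) :
    cs.IsReduced (u.drop d ++ R.drop (d - u.length)) := by
  rcases le_or_gt u.length d with hd | hd
  · rw [List.drop_eq_nil_of_le hd, List.nil_append]
    have hdec : (u ++ x :: R).drop (u.length + (1 + (d - u.length))) = R.drop (d - u.length) := by
      rw [List.drop_append,
        List.drop_eq_nil_of_le (show u.length ≤ u.length + (1 + (d - u.length)) by omega),
        List.nil_append,
        show u.length + (1 + (d - u.length)) - u.length = (d - u.length) + 1 by omega]
      rfl
    rw [← hdec]
    exact hsuf.drop _
  · rw [show d - u.length = 0 by omega, List.drop_zero]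
    have h1 : cs.length (cs.wordProd (u ++ x :: R)) = u.length + 1 + R.length := by
      rw [hsuf]; simp; omega
    have hlen2 : (u ++ x :: R).length = u.length + 1 + R.length := by simp; omega
    have h2 : cs.length (cs.simple A * cs.wordProd (u ++ x :: R)) = u.length + R.length := by
      rcases cs.length_simple_mul (cs.wordProd (u ++ x :: R)) A with hh | hh <;> omega
    have hval : cs.simple A * cs.wordProd (u ++ x :: R) =
        cs.wordProd u * cs.wordProd R := by
      rw [wordProd_append, cs.wordProd_cons, ← mul_assoc, ← mul_assoc, hkey]
    have hdecomp : cs.wordProd (u.drop d ++ R) =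
        (cs.wordProd (u.take d))⁻¹ * (cs.wordProd u * cs.wordProd R) := by
      conv_rhs => rw [← List.take_append_drop d u]
      rw [wordProd_append, wordProd_append, List.take_append_drop]
      group
    have htake : cs.length (cs.wordProd (u.take d)) ≤ d := by
      have := cs.length_wordProd_le (u.take d)
      have h3 : (u.take d).length ≤ d := by
        rw [List.length_take]; omega
      omega
    have hlb := cs.length_mul_ge_length_sub_length ((cs.wordProd u * cs.wordProd R))
      (cs.wordProd (u.take d))
    have hlb2 : cs.length (cs.wordProd u * cs.wordProd R) - d ≤
        cs.length (cs.wordProd (u.drop d ++ R)) := by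
      have h5 := cs.length_mul_ge_length_sub_length' ((cs.wordProd (u.take d))⁻¹)
        (cs.wordProd u * cs.wordProd R)
      rw [← hdecomp] at h5
      have h6 : cs.length ((cs.wordProd (u.take d))⁻¹) ≤ d := by
        rw [cs.length_inv]; exact htake
      omega
    rw [← hval, h2] at hlb2
    have hub := cs.length_wordProd_le (u.drop d ++ R)
    have hlen3 : (u.drop d ++ R).length = u.length - d + R.length := by
      simp
    show cs.length (cs.wordProd (u.drop d ++ R)) = (u.drop d ++ R).length
    omega

lemma step_red_all (P u R : List B) (A x : B)
    (hsuf : cs.IsReduced (u ++ x :: R))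
    (hnra : cs.length (cs.simple A * cs.wordProd (u ++ x :: R)) ≠ (u ++ x :: R).length + 1)
    (hkey : cs.simple A * cs.wordProd u * cs.simple x = cs.wordProd u)
    (j : ℕ) (hj : P.length ≤ j) :
    cs.IsReduced ((P ++ (u ++ R)).drop j) := by
  rw [List.drop_append, List.drop_eq_nil_of_le hj, List.nil_append,
    List.drop_append]
  exact step_red cs u R A x hsuf hnra hkey (j - P.length)

lemma step_prod (P u R : List B) (A x : B)
    (hkey : cs.simple A * cs.wordProd u * cs.simple x = cs.wordProd u) :
    cs.wordProd (P ++ (u ++ R)) = cs.wordProd (P ++ A :: (u ++ x :: R)) := by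
  simp only [wordProd_append, wordProd_cons]
  congr 1
  conv_rhs => rw [← mul_assoc, ← mul_assoc, hkey]

/-- The word `ω` decomposes around positions `a < b`. -/
lemma omega_decomp (ω : List B) (a b : ℕ) (hab : a < b) (hbL : b < ω.length) :
    ω = ω.take a ++ ω[a]'(hab.trans hbL) ::
      (((ω.drop (a+1)).take (b - a - 1)) ++ ω[b]'hbL :: ω.drop (b+1)) := by
  conv_lhs => rw [← List.take_append_drop a ω]
  congr 1
  rw [List.drop_eq_getElem_cons (hab.trans hbL)]
  congr 1
  conv_lhs => rw [← List.take_append_drop (b - a - 1) (ω.drop (a+1))]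
  congr 1
  rw [List.drop_drop]
  rw [show a + 1 + (b - a - 1) = b by omega]
  exact List.drop_eq_getElem_cons hbL

lemma erase_decomp (ω : List B) (a b : ℕ) (hab : a < b) (hbL : b < ω.length) :
    (ω.eraseIdx b).eraseIdx a =
      ω.take a ++ (((ω.drop (a+1)).take (b - a - 1)) ++ ω.drop (b+1)) := by
  rw [List.eraseIdx_eq_take_drop_succ, List.eraseIdx_eq_take_drop_succ]
  rw [List.take_append, List.drop_append]
  have h1 : (ω.take b).length = b := by rw [List.length_take]; omega
  rw [h1, List.take_take, min_eq_left hab.le,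
    show a - b = 0 by omega, List.take_zero,
    List.drop_take, show b - (a + 1) = b - a - 1 by omega,
    show a + 1 - b = 0 by omega, List.drop_zero, List.append_nil]

/-- Main step lemma: deleting the two letters preserves the product, keeps all
suffixes from position `a` on reduced, and shortens the word by 2. -/
lemma step_main (ω : List B) (a b : ℕ) (hab : a < b) (hbL : b < ω.length)
    (hnra : ¬ cs.IsReduced (ω.drop a))
    (hred : ∀ j, a < j → cs.IsReduced (ω.drop j))
    (hnrt : ¬ cs.IsReduced ((ω.drop a).take (b - a + 1)))
    (hredt : ∀ j, a < j → j < b → cs.IsReduced ((ω.drop a).take (j - a + 1))) :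
    cs.wordProd ((ω.eraseIdx b).eraseIdx a) = cs.wordProd ω ∧
    (∀ j, a ≤ j → cs.IsReduced (((ω.eraseIdx b).eraseIdx a).drop j)) ∧
    ((ω.eraseIdx b).eraseIdx a).length + 2 = ω.length := by
  have haL : a < ω.length := hab.trans hbL
  set P := ω.take a with hP
  set A := ω[a]'haL with hA
  set u := (ω.drop (a+1)).take (b - a - 1) with hu
  set x := ω[b]'hbL with hx
  set R := ω.drop (b+1) with hR
  have hulen : u.length = b - a - 1 := by
    rw [hu, List.length_take, List.length_drop]; omega
  have huxR : ω.drop (a+1) = u ++ x :: R := by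
    conv_lhs => rw [← List.take_append_drop (b - a - 1) (ω.drop (a+1))]
    congr 1
    rw [List.drop_drop, show a + 1 + (b - a - 1) = b by omega]
    exact List.drop_eq_getElem_cons hbL
  have hdropa : ω.drop a = A :: (u ++ x :: R) := by
    rw [List.drop_eq_getElem_cons haL, ← hA, huxR]
  have hdecomp := omega_decomp ω a b hab hbL
  have herase := erase_decomp ω a b hab hbL
  have hsuf : cs.IsReduced (u ++ x :: R) := by
    rw [← huxR]; exact hred (a+1) (by omega)
  have hnra' : cs.length (cs.simple A * cs.wordProd (u ++ x :: R)) ≠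
      (u ++ x :: R).length + 1 := by
    intro hcon
    apply hnra
    show cs.length (cs.wordProd (ω.drop a)) = (ω.drop a).length
    rw [hdropa, cs.wordProd_cons, hcon]
    simp
  have huxtake : (u ++ x :: R).take (b - a) = u ++ [x] := by
    rw [List.take_append, List.take_of_length_le (by omega), hulen,
      show b - a - (b - a - 1) = 1 by omega]
    rfl
  have hAu : (ω.drop a).take (b - a) = A :: u := by
    rw [hdropa, show b - a = (b - a - 1) + 1 by omega, List.take_succ_cons,
      List.take_append, List.take_of_length_le (by omega),
      show b - a - 1 - u.length = 0 by omega, List.take_zero, List.append_nil]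
  have hredAu : cs.IsReduced (A :: u) := by
    rcases Nat.lt_or_ge (a+1) b with hb1 | hb1
    · have h := hredt (b-1) (by omega) (by omega)
      rwa [show b - 1 - a + 1 = b - a by omega, hAu] at h
    · have hu0 : u = [] := List.eq_nil_of_length_eq_zero (by omega)
      rw [hu0]
      exact isReduced_singleton cs A
  have hredux : cs.IsReduced (u ++ [x]) := by
    rw [← huxtake]; exact hsuf.take _
  have hnrAux : ¬ cs.IsReduced (A :: (u ++ [x])) := by
    have htake : (ω.drop a).take (b - a + 1) = A :: (u ++ [x]) := by
      rw [hdropa, List.take_succ_cons, huxtake]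
    rw [← htake]; exact hnrt
  have hkey := key_identity cs A x u hredAu hredux (by simpa using hnrAux)
  have hPlen : P.length = a := by rw [hP, List.length_take]; omega
  refine ⟨?_, ?_, ?_⟩
  · rw [herase, step_prod cs P u R A x hkey, ← hdecomp]
  · intro j hj
    rw [herase]
    exact step_red_all cs P u R A x hsuf hnra' hkey j (by omega)
  · rw [herase]
    simp only [List.length_append, List.length_take, List.length_drop]
    omega

end

end DeletionProcAux

/-- One step of the deletion procedure applied to the word `ω` at the (0-indexed)
pair of positions `(a, b)`: `a` is maximal such that the suffix starting at `a`
is non-reduced, and `b` is minimal with `a < b` such that the subword of letters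
`a, …, b` is non-reduced. -/
def DeletionStep (cs : CoxeterSystem M W) (ω : List B) (a b : ℕ) : Prop :=
  a < b ∧ b < ω.length ∧
  ¬ cs.IsReduced (ω.drop a) ∧ (∀ j, a < j → cs.IsReduced (ω.drop j)) ∧
  ¬ cs.IsReduced ((ω.drop a).take (b - a + 1)) ∧
  (∀ j, a < j → j < b → cs.IsReduced ((ω.drop a).take (j - a + 1)))

lemma exists_deletionStep (cs : CoxeterSystem M W) (ω : List B) (h : ¬ cs.IsReduced ω) :
    ∃ a b, DeletionStep cs ω a b := by
  classical
  have hP0 : ¬ cs.IsReduced (ω.drop 0) := by simpa using h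
  set a := Nat.findGreatest (fun j => ¬ cs.IsReduced (ω.drop j)) ω.length with ha
  have haP : ¬ cs.IsReduced (ω.drop a) := by
    rw [ha]
    exact Nat.findGreatest_spec (P := fun j => ¬ cs.IsReduced (ω.drop j))
      (Nat.zero_le ω.length) hP0
  have hagr : ∀ j, a < j → cs.IsReduced (ω.drop j) := by
    intro j hj
    rcases le_or_gt j ω.length with hjL | hjL
    · by_contra hc
      exact Nat.findGreatest_is_greatest (P := fun j => ¬ cs.IsReduced (ω.drop j))
        (ha ▸ hj) hjL hc
    · rw [List.drop_eq_nil_of_le (by omega)]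
      exact DeletionProcAux.isReduced_nil cs
  have hdl : (ω.drop a).length = ω.length - a := List.length_drop
  have hlen2 : a + 2 ≤ ω.length := by
    by_contra hc
    push_neg at hc
    rcases Nat.lt_or_ge (ω.length) (a + 1) with h1 | h1
    · exact haP (by
        rw [List.drop_eq_nil_of_le (by omega)]
        exact DeletionProcAux.isReduced_nil cs)
    · have hl1 : (ω.drop a).length = 1 := by omega
      obtain ⟨c, hc1⟩ := List.length_eq_one_iff.mp hl1
      exact haP (hc1 ▸ DeletionProcAux.isReduced_singleton cs c)
  have hbex : ∃ j, a < j ∧ ¬ cs.IsReduced ((ω.drop a).take (j - a + 1)) := by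
    refine ⟨ω.length - 1, by omega, ?_⟩
    rw [List.take_of_length_le (by omega)]
    exact haP
  have hab : a < Nat.find hbex ∧
      ¬ cs.IsReduced ((ω.drop a).take (Nat.find hbex - a + 1)) := Nat.find_spec hbex
  refine ⟨a, Nat.find hbex, hab.1, ?_, haP, hagr, hab.2, ?_⟩
  · have := Nat.find_min' hbex ⟨(by omega : a < ω.length - 1), by
      rw [List.take_of_length_le (by omega)]
      exact haP⟩
    omega
  · intro j hja hjb
    by_contra hc
    exact (Nat.find_min hbex hjb) ⟨hja, hc⟩

/-- The recursive deletion procedure, applied to `ω = words 0` with pairs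
`p 0, …, p (r-1)`, stops after `r` steps. Then `a₁ > a₂ > ⋯ > a_r`, the final
expression is reduced, and `ℓ(s₁⋯s_k) = k - 2r`. -/
theorem deletion_procedure (cs : CoxeterSystem M W) (ω : List B) (r : ℕ)
    (p : ℕ → ℕ × ℕ) (words : ℕ → List B) (hw0 : words 0 = ω)
    (hstep : ∀ i < r, DeletionStep cs (words i) (p i).1 (p i).2 ∧
      words (i + 1) = ((words i).eraseIdx (p i).2).eraseIdx (p i).1)
    (hstop : ∀ a b : ℕ, ¬ DeletionStep cs (words r) a b) :
    (∀ i, i + 1 < r → (p (i + 1)).1 < (p i).1) ∧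
    cs.IsReduced (words r) ∧
    cs.length (cs.wordProd ω) = ω.length - 2 * r := by
  have hinv : ∀ i, i ≤ r → cs.wordProd (words i) = cs.wordProd ω ∧
      (words i).length + 2 * i = ω.length := by
    intro i
    induction i with
    | zero => intro _; rw [hw0]; exact ⟨rfl, by omega⟩
    | succ i ih =>
      intro hir
      obtain ⟨hπ, hlen⟩ := ih (by omega)
      obtain ⟨⟨h1, h2, h3, h4, h5, h6⟩, he⟩ := hstep i (by omega)
      obtain ⟨hp, -, hl⟩ := DeletionProcAux.step_main cs (words i) _ _ h1 h2 h3 h4 h5 h6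
      constructor
      · rw [he, hp, hπ]
      · rw [he]; omega
  have hredr : cs.IsReduced (words r) := by
    by_contra hc
    obtain ⟨a, b, hab⟩ := exists_deletionStep cs (words r) hc
    exact hstop a b hab
  refine ⟨?_, hredr, ?_⟩
  · intro i hi
    obtain ⟨⟨h1, h2, h3, h4, h5, h6⟩, he⟩ := hstep i (by omega)
    obtain ⟨-, hrd, -⟩ := DeletionProcAux.step_main cs (words i) _ _ h1 h2 h3 h4 h5 h6
    obtain ⟨⟨g1, g2, g3, g4, g5, g6⟩, -⟩ := hstep (i+1) hi
    by_contra hc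
    push_neg at hc
    apply g3
    rw [he]
    exact hrd _ hc
  · obtain ⟨hπ, hlen⟩ := hinv r le_rfl
    have hr : cs.length (cs.wordProd (words r)) = (words r).length := hredr
    rw [← hπ, hr]
    omega
end

section
/- Let B be an Artin group of a Coxeter system (W,S) with standard generators σ_i lifting s_i. Let (s₁,…,s_k) be a sequence in S with associated deletion pairs (a₁,b₁),…,(a_r,b_r), and let w = s₁⋯s_k with positive lift w̲ ∈ B. Then in B: σ₁⋯σ_k = (σ₁⋯σ_{a₁−1}σ_{a₁}²σ_{a₁−1}⁻¹⋯σ₁⁻¹)(σ₁⋯σ_{a₂−1}σ_{a₂}²σ_{a₂−1}⁻¹⋯σ₁⁻¹)⋯(σ₁⋯σ_{a_r−1}σ_{a_r}²σ_{a_r−1}⁻¹⋯σ₁⁻¹)·w̲. -/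
open CoxeterSystem

variable {B W : Type*} [Group W] {M : CoxeterMatrix B}

/-- The braid relations defining the Artin group of a Coxeter matrix `M`. -/
def braidRelsSet (M : CoxeterMatrix B) : Set (FreeGroup B) :=
  {r | ∃ i j : B, r = ((CoxeterSystem.braidWord M i j).map FreeGroup.of).prod *
        (((CoxeterSystem.braidWord M j i).map FreeGroup.of).prod)⁻¹}

/-- The Artin group of the Coxeter matrix `M`. -/
abbrev ArtinGroup (M : CoxeterMatrix B) := PresentedGroup (braidRelsSet M)

/-- The element `σ_{i₁} ⋯ σ_{i_m}` of the Artin group corresponding to a word. -/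
def artinWord (M : CoxeterMatrix B) (l : List B) : ArtinGroup M :=
  (l.map (fun i => (PresentedGroup.of i : ArtinGroup M))).prod

open CoxeterSystem List

namespace BraidDecompAux

abbrev Sgn (W : Type*) := W → Multiplicative (ZMod 2)

lemma sgn_sq (g : Multiplicative (ZMod 2)) : g * g = 1 := by
  revert g; decide

variable (W : Type*) [Group W]

/-- Conjugation action of `W` on sign functions. -/
def conjAut (w : W) : MulAut (Sgn W) where
  toFun g := fun t => g (w⁻¹ * t * w)
  invFun g := fun t => g (w * t * w⁻¹)
  left_inv g := by funext t; simp [mul_assoc]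
  right_inv g := by funext t; simp [mul_assoc]
  map_mul' g h := rfl

def conjAct : W →* MulAut (Sgn W) where
  toFun := conjAut W
  map_one' := by
    refine MulEquiv.ext fun g => funext fun t => ?_
    simp [conjAut]
  map_mul' w v := by
    refine MulEquiv.ext fun g => funext fun t => ?_
    simp [conjAut, mul_assoc]

variable {W}

lemma conjAct_apply (w : W) (g : Sgn W) (t : W) :
    (conjAct W w g) t = g (w⁻¹ * t * w) := rfl

open scoped Classical in
noncomputable def delta (x : W) : Sgn W := fun t => if t = x then Multiplicative.ofAdd 1 else 1

lemma pow_mk (n : Sgn W) (w : W) (m : ℕ) :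
    (⟨n, w⟩ : Sgn W ⋊[conjAct W] W) ^ m =
      ⟨(Finset.range m).prod (fun k => conjAct W (w ^ k) n), w ^ m⟩ := by
  induction m with
  | zero =>
    simp only [pow_zero, Finset.range_zero, Finset.prod_empty]
    ext <;> rfl
  | succ m ih =>
    rw [pow_succ, ih, SemidirectProduct.mul_def]
    congr 1
    · rw [Finset.prod_range_succ]
    · rw [pow_succ]


section
variable {B W : Type*} [Group W] {M : CoxeterMatrix B} (cs : CoxeterSystem M W)

local prefix:100 "s" => cs.simple
local prefix:100 "π" => cs.wordProd

open scoped Classical in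
lemma liftable : CoxeterMatrix.IsLiftable M
    (fun i => (⟨delta (s i), s i⟩ : Sgn W ⋊[conjAct W] W)) := by
  intro i j
  set m := M i j with hm
  set x : W := s i * s j with hx
  have hxm : x ^ m = 1 := cs.simple_mul_simple_pow i j
  have hsc : SemiconjBy (s i) x x⁻¹ := by
    simp only [SemiconjBy, hx, mul_inv_rev, cs.inv_simple]
    group
    simp [cs.simple_mul_simple_cancel_right, cs.simple_mul_simple_self]
  have hA : ∀ k : ℕ, s i * (x ^ k)⁻¹ = x ^ k * s i := by
    intro k
    have h := (hsc.inv_right.pow_right k).eq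
    rwa [inv_pow, inv_inv] at h
  have hconj : ∀ k : ℕ, x ^ k * s i * (x ^ k)⁻¹ = x ^ (2*k) * s i := by
    intro k
    rw [mul_assoc, hA k, two_mul, pow_add, mul_assoc]
  have hconj2 : ∀ k : ℕ, x ^ k * (s i * s j * s i) * (x ^ k)⁻¹ = x ^ (2*k+1) * s i := by
    intro k
    have h1 : s i * s j * s i = x * s i := by rw [hx]
    calc x ^ k * (s i * s j * s i) * (x ^ k)⁻¹
        = x ^ k * x * (s i * (x ^ k)⁻¹) := by rw [h1]; group
      _ = x ^ k * x * (x ^ k * s i) := by rw [hA]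
      _ = x ^ (2*k+1) * s i := by group
  have hmul : ((⟨delta (s i), s i⟩ : Sgn W ⋊[conjAct W] W) * ⟨delta (s j), s j⟩)
      = ⟨delta (s i) * conjAct W (s i) (delta (s j)), x⟩ := rfl
  rw [hmul, pow_mk, hxm]
  have hleft : (Finset.range m).prod
      (fun k => conjAct W (x ^ k) (delta (s i) * conjAct W (s i) (delta (s j)))) = 1 := by
    funext t
    rw [Finset.prod_apply]
    set g : ℕ → Multiplicative (ZMod 2) :=
      fun n => if t = x ^ n * s i then Multiplicative.ofAdd 1 else 1 with hg
    have hfac : ∀ k, (conjAct W (x ^ k) (delta (s i) * conjAct W (s i) (delta (s j)))) t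
        = g (2*k) * g (2*k+1) := by
      intro k
      have e1 : ((x ^ k)⁻¹ * t * x ^ k = s i) ↔ (t = x ^ (2*k) * s i) := by
        rw [← hconj k]
        constructor
        · intro h; rw [← h]; group
        · intro h; rw [h]; group
      have e2 : ((s i)⁻¹ * ((x ^ k)⁻¹ * t * x ^ k) * s i = s j) ↔
          (t = x ^ (2*k+1) * s i) := by
        rw [← hconj2 k]
        constructor
        · intro h
          have h2 : (x ^ k)⁻¹ * t * x ^ k = s i * s j * s i := by
            rw [← h, cs.inv_simple]; group
            simp [cs.simple_mul_simple_cancel_right, ← mul_assoc]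
          rw [← h2]; group
        · intro h
          rw [h, cs.inv_simple]; group
          simp [cs.simple_mul_simple_cancel_right, cs.simple_mul_simple_self, ← mul_assoc]
      rw [conjAct_apply, Pi.mul_apply, conjAct_apply, delta, delta, hg]
      simp only [if_congr e1 rfl rfl, if_congr e2 rfl rfl]
    rw [Finset.prod_congr rfl (fun k _ => hfac k)]
    have hpair : ∀ N : ℕ, (Finset.range N).prod (fun k => g (2*k) * g (2*k+1))
        = (Finset.range (2*N)).prod g := by
      intro N
      induction N with
      | zero => simp
      | succ N ih =>
        have h2 : 2 * (N+1) = 2*N + 1 + 1 := by ring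
        rw [Finset.prod_range_succ, ih, h2, Finset.prod_range_succ, Finset.prod_range_succ,
          mul_assoc]
    rw [hpair, two_mul, Finset.prod_range_add]
    have hgm : ∀ n, g (m + n) = g n := by
      intro n
      simp only [hg, pow_add, hxm, one_mul]
    rw [Finset.prod_congr rfl (fun n _ => hgm n), sgn_sq]
    rfl
  rw [hleft]
  ext <;> simp



noncomputable def Phi : W →* Sgn W ⋊[conjAct W] W :=
  cs.lift ⟨fun i => ⟨delta (s i), s i⟩, liftable cs⟩

lemma Phi_simple (i : B) : Phi cs (s i) = ⟨delta (s i), s i⟩ :=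
  cs.lift_apply_simple (liftable cs) i

open scoped Classical in
lemma count_conj_map (g : W) (l : List W) (t : W) :
    (l.map (MulAut.conj g)).count t = l.count (g⁻¹ * t * g) := by
  have ht : t = (MulAut.conj g) (g⁻¹ * t * g) := by
    simp [MulAut.conj_apply, mul_assoc]
  conv_lhs => rw [ht]
  exact List.count_map_of_injective _ _ (MulEquiv.injective _) _

open scoped Classical in
lemma Phi_left (ω : List B) :
    (Phi cs (π ω)).left = fun t =>
      Multiplicative.ofAdd (((cs.leftInvSeq ω).count t : ZMod 2)) := by
  induction ω with
  | nil =>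
    rw [cs.wordProd_nil, map_one]
    funext t
    simp [leftInvSeq]
  | cons i ω ih =>
    rw [cs.wordProd_cons, map_mul, Phi_simple]
    funext t
    rw [SemidirectProduct.mul_left]
    show (delta (s i) * conjAct W (s i) ((Phi cs (π ω)).left)) t = _
    rw [Pi.mul_apply, conjAct_apply, ih]
    have hlis : cs.leftInvSeq (i :: ω) = s i :: (cs.leftInvSeq ω).map (MulAut.conj (s i)) := rfl
    have hcm : ((cs.leftInvSeq ω).map (MulAut.conj (s i))).count t
        = (cs.leftInvSeq ω).count ((s i)⁻¹ * t * s i) := by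
      have ht : t = (MulAut.conj (s i)) ((s i)⁻¹ * t * s i) := by
        simp [MulAut.conj_apply, mul_assoc]
      conv_lhs => rw [ht]
      exact List.count_map_of_injective _ _ (MulEquiv.injective _) _
    rw [hlis, List.count_cons, hcm]
    simp only [beq_iff_eq]
    by_cases ht : t = s i
    · simp only [delta, if_pos ht, if_pos ht.symm, ← ofAdd_add]
      push_cast
      rw [add_comm]
    · simp only [delta, if_neg ht, one_mul]
      rw [if_neg (Ne.symm ht), add_zero]

lemma exchange {ω : List B} {i : B}
    (h : cs.length (s i * π ω) < cs.length (π ω)) :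
    ∃ j, ∃ hj : j < ω.length, s i * π ω = π (ω.eraseIdx j) := by
  classical
  obtain ⟨ω', hlen, hw'⟩ := cs.exists_reduced_word (s i * π ω)
  have hred' : cs.IsReduced ω' := by
    show cs.length (cs.wordProd ω') = ω'.length
    exact hlen
  have hpar : (cs.leftInvSeq ω').count (s i) % 2 = 0 := by
    rcases Nat.even_or_odd ((cs.leftInvSeq ω').count (s i)) with he | ho
    · obtain ⟨k, hk⟩ := he; omega
    · exfalso
      have hpos : 0 < (cs.leftInvSeq ω').count (s i) := by
        rcases ho with ⟨k, hk⟩; omega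
      have hmem : s i ∈ cs.leftInvSeq ω' := List.count_pos_iff.mp hpos
      have hinv := (cs.isLeftInversion_of_mem_leftInvSeq hred' hmem).2
      rw [← hw', cs.simple_mul_simple_cancel_left] at hinv
      omega
  have hw2 : π (i :: ω') = π ω := by
    rw [cs.wordProd_cons, ← hw', cs.simple_mul_simple_cancel_left]
  have h1 := Phi_left cs (i :: ω')
  rw [hw2, Phi_left cs ω] at h1
  have heqs := congrFun h1 (s i)
  have hcast : (((cs.leftInvSeq (i :: ω')).count (s i) : ℕ) : ZMod 2)
      = (((cs.leftInvSeq ω).count (s i) : ℕ) : ZMod 2) := by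
    have := congrArg Multiplicative.toAdd heqs
    simpa using this.symm
  have hmod := (ZMod.natCast_eq_natCast_iff' _ _ 2).mp hcast
  have hcount1 : (cs.leftInvSeq (i :: ω')).count (s i)
      = (cs.leftInvSeq ω').count (s i) + 1 := by
    have hlis : cs.leftInvSeq (i :: ω') = s i :: (cs.leftInvSeq ω').map (MulAut.conj (s i)) := rfl
    rw [hlis, List.count_cons]
    simp only [beq_self_eq_true, if_true]
    congr 1
    rw [count_conj_map]
    congr 1
    rw [cs.inv_simple, cs.simple_mul_simple_self, one_mul]
  have hpos : 0 < (cs.leftInvSeq ω).count (s i) := by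
    rw [hcount1] at hmod
    omega
  have hmem : s i ∈ cs.leftInvSeq ω := List.count_pos_iff.mp hpos
  obtain ⟨j, hj, hget⟩ := List.mem_iff_getElem.mp hmem
  refine ⟨j, by rwa [cs.length_leftInvSeq] at hj, ?_⟩
  have hkey := cs.getD_leftInvSeq_mul_wordProd ω j
  rwa [List.getD_eq_getElem _ _ hj, hget] at hkey

lemma artinWord_nil (M : CoxeterMatrix B) : artinWord M [] = 1 := rfl

lemma artinWord_cons (M : CoxeterMatrix B) (i : B) (l : List B) :
    artinWord M (i :: l) = (PresentedGroup.of i : ArtinGroup M) * artinWord M l := by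
  simp [artinWord]

lemma artinWord_append (M : CoxeterMatrix B) (l l' : List B) :
    artinWord M (l ++ l') = artinWord M l * artinWord M l' := by
  simp [artinWord]

lemma step_lemma (PL : W → ArtinGroup M)
    (hPL : ∀ ω' : List B, cs.IsReduced ω' → PL (cs.wordProd ω') = artinWord M ω')
    {ω : List B} {a b : ℕ} (h : DeletionStep cs ω a b) :
    cs.wordProd ((ω.eraseIdx b).eraseIdx a) = cs.wordProd ω ∧
    artinWord M ω =
      (artinWord M (ω.take (a+1)) * (artinWord M (ω.take a))⁻¹) ^ 2 *
        artinWord M ((ω.eraseIdx b).eraseIdx a) := by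
  obtain ⟨hab, hblen, _h3, hdrop, hnr, hpre⟩ := h
  have ha : a < ω.length := hab.trans hblen
  have hcu' : ∃ x, ω.drop a = x :: ω.drop (a+1) := ⟨_, List.drop_eq_getElem_cons ha⟩
  obtain ⟨c, hcu⟩ := hcu'
  have hdR' : ∃ x, ω.drop b = x :: ω.drop (b+1) := ⟨_, List.drop_eq_getElem_cons hblen⟩
  obtain ⟨d, hdR⟩ := hdR'
  set m := b - a with hm
  have hm1 : 1 ≤ m := by omega
  set P := ω.take a with hP
  set u := ω.drop (a+1) with hu
  set Q := u.take (m-1) with hQ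
  set R := ω.drop (b+1) with hR
  have hulen : u.length = ω.length - (a+1) := by rw [hu, List.length_drop]
  have hQlen : Q.length = m - 1 := by
    rw [hQ, List.length_take]; omega
  have h0 : u.drop (m-1) = d :: R := by
    rw [hu, List.drop_drop, show a + 1 + (m - 1) = b by omega, hdR]
  have hQdR : u = Q ++ d :: R := by
    conv_lhs => rw [← List.take_append_drop (m-1) u]
    rw [h0, ← hQ]
  have hQd : u.take m = Q ++ [d] := by
    rw [hQdR, List.take_append,
      List.take_of_length_le (by rw [hQlen]; omega), hQlen,
      show m - (m-1) = 1 by omega]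
    rfl
  -- reducedness facts
  have hured : cs.IsReduced u := hdrop (a+1) (by omega)
  have hQdred : cs.IsReduced (Q ++ [d]) := by
    rw [← hQd]; exact hured.take m
  have hlenQd : (Q ++ [d]).length = m := by
    simp only [List.length_append, List.length_singleton, hQlen]; omega
  have hQdl : cs.length (cs.wordProd (Q ++ [d])) = m := by
    rw [hQdred, hlenQd]
  -- key equality in W
  have hkey : cs.wordProd (c :: Q) = cs.wordProd (Q ++ [d]) := by
    have htk : (ω.drop a).take (m + 1) = c :: (Q ++ [d]) := by
      rw [hcu, List.take_succ_cons, hQd]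
    have hnred : ¬ cs.IsReduced (c :: (Q ++ [d])) := by
      rw [← htk]; exact hnr
    have hlt : cs.length (cs.simple c * cs.wordProd (Q ++ [d]))
        < cs.length (cs.wordProd (Q ++ [d])) := by
      rcases cs.length_simple_mul (cs.wordProd (Q ++ [d])) c with hcase | hcase
      · exfalso
        apply hnred
        show cs.length (cs.wordProd (c :: (Q ++ [d]))) = (c :: (Q ++ [d])).length
        rw [cs.wordProd_cons, hcase, hQdl, List.length_cons, hlenQd]
      · omega
    obtain ⟨j, hj, hex⟩ := exchange cs hlt
    rw [hlenQd] at hj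
    by_cases hjm : j = m - 1
    · have herase : (Q ++ [d]).eraseIdx j = Q := by
        rw [hjm, List.eraseIdx_eq_take_drop_succ,
          List.take_append,
          List.take_of_length_le (by omega),
          List.drop_eq_nil_of_le (by rw [hlenQd]; omega),
          show m - 1 - Q.length = 0 by omega]
        simp
      rw [herase] at hex
      rw [cs.wordProd_cons, ← hex, cs.simple_mul_simple_cancel_left]
    · exfalso
      have hjlt : j < m - 1 := by omega
      have hLsplit : cs.wordProd (Q ++ [d])
          = cs.wordProd ((Q ++ [d]).take (j+1)) * cs.wordProd ((Q ++ [d]).drop (j+1)) := by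
        rw [← cs.wordProd_append, List.take_append_drop]
      have hEsplit : cs.wordProd ((Q ++ [d]).eraseIdx j)
          = cs.wordProd ((Q ++ [d]).take j) * cs.wordProd ((Q ++ [d]).drop (j+1)) := by
        rw [← cs.wordProd_append, ← List.eraseIdx_eq_take_drop_succ]
      have hpref : cs.simple c * cs.wordProd ((Q ++ [d]).take (j+1))
          = cs.wordProd ((Q ++ [d]).take j) := by
        have h' := hex
        rw [hLsplit, hEsplit, ← mul_assoc] at h'
        exact mul_right_cancel h'
      have hredj := hpre (a+j+1) (by omega) (by omega)
      have hwd : (ω.drop a).take ((a+j+1) - a + 1) = c :: (Q ++ [d]).take (j+1) := by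
        rw [show (a+j+1) - a + 1 = (j+1)+1 by omega, hcu, List.take_succ_cons]
        congr 1
        rw [← hQd, List.take_take, min_eq_left (by omega)]
      rw [hwd] at hredj
      have hlen1 : cs.length (cs.wordProd (c :: (Q ++ [d]).take (j+1))) ≤ j := by
        rw [cs.wordProd_cons, hpref]
        calc cs.length (cs.wordProd ((Q ++ [d]).take j))
            ≤ ((Q ++ [d]).take j).length := cs.length_wordProd_le _
          _ ≤ j := by rw [List.length_take]; omega
      have hlen2 : (c :: (Q ++ [d]).take (j+1)).length = j + 2 := by
        rw [List.length_cons, List.length_take, hlenQd]; omega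
      have hfin : cs.length (cs.wordProd (c :: (Q ++ [d]).take (j+1)))
          = (c :: (Q ++ [d]).take (j+1)).length := hredj
      omega
  -- reducedness of c :: Q and the Artin-level equality
  have hcQred : cs.IsReduced (c :: Q) := by
    show cs.length (cs.wordProd (c :: Q)) = (c :: Q).length
    rw [hkey, hQdl, List.length_cons, hQlen]; omega
  have hartin : artinWord M (c :: Q) = artinWord M (Q ++ [d]) := by
    rw [← hPL _ hcQred, ← hPL _ hQdred, hkey]
  -- decompositions of the relevant words
  have hsplit : ω = P ++ c :: (Q ++ d :: R) := by
    conv_lhs => rw [← List.take_append_drop a ω, hcu, hQdR]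
  have htake : ω.take (a+1) = P ++ [c] := by
    rw [List.take_add, hcu, ← hP]
    rfl
  have herase2 : (ω.eraseIdx b).eraseIdx a = P ++ (Q ++ R) := by
    rw [List.eraseIdx_eq_take_drop_succ ω b,
      List.eraseIdx_append_of_lt_length (by rw [List.length_take]; omega),
      List.eraseIdx_eq_take_drop_succ, List.take_take, min_eq_left (by omega),
      List.drop_take, List.append_assoc]
    rw [← hP, ← hu, ← hR, show b - (a+1) = m - 1 by omega, ← hQ]
  -- W-level statement
  have h1 : cs.simple c * cs.wordProd Q = cs.wordProd Q * cs.simple d := by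
    have h' := hkey
    rwa [cs.wordProd_cons, cs.wordProd_append, cs.wordProd_singleton] at h'
  constructor
  · rw [herase2]
    conv_rhs => rw [hsplit]
    simp only [cs.wordProd_append, cs.wordProd_cons]
    have hstep : cs.simple c * (cs.wordProd Q * (cs.simple d * cs.wordProd R))
        = cs.wordProd Q * cs.wordProd R := by
      calc cs.simple c * (cs.wordProd Q * (cs.simple d * cs.wordProd R))
          = (cs.simple c * cs.wordProd Q) * (cs.simple d * cs.wordProd R) := by group
        _ = (cs.wordProd Q * cs.simple d) * (cs.simple d * cs.wordProd R) := by rw [h1]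
        _ = cs.wordProd Q * (cs.simple d * (cs.simple d * cs.wordProd R)) := by group
        _ = cs.wordProd Q * cs.wordProd R := by rw [cs.simple_mul_simple_cancel_left]
    rw [hstep]
  · have h2 : artinWord M Q * (PresentedGroup.of d : ArtinGroup M)
        = (PresentedGroup.of c : ArtinGroup M) * artinWord M Q := by
      have h' := hartin
      rw [artinWord_cons, artinWord_append, artinWord_cons, artinWord_nil, mul_one] at h'
      exact h'.symm
    rw [htake, herase2]
    conv_lhs => rw [hsplit]
    simp only [artinWord_append, artinWord_cons, artinWord_nil, mul_one]
    rw [show artinWord M Q * ((PresentedGroup.of d : ArtinGroup M) * artinWord M R)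
        = (artinWord M Q * (PresentedGroup.of d : ArtinGroup M)) * artinWord M R by group, h2]
    rw [sq]
    group

end
end BraidDecompAux

/-- In the Artin group, `σ₁⋯σ_k` factors as a product of conjugates of squares of
generators (one for each deletion pair, the conjugating reflection-word being the
prefix up to position `aᵢ` of the current word) times the positive lift `w̲` of
`w = s₁⋯s_k`. Here `PL` is the positive lift map, characterized on reduced words,
and the `i`-th factor `σ₁⋯σ_{aᵢ-1} σ_{aᵢ}² σ_{aᵢ-1}⁻¹⋯σ₁⁻¹` is written as
`(F(take (aᵢ+1)) · F(take aᵢ)⁻¹)²` where `F` is `artinWord`. -/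
theorem braid_decomposition (cs : CoxeterSystem M W) (ω : List B) (r : ℕ)
    (p : ℕ → ℕ × ℕ) (words : ℕ → List B) (hw0 : words 0 = ω)
    (hstep : ∀ i < r, DeletionStep cs (words i) (p i).1 (p i).2 ∧
      words (i + 1) = ((words i).eraseIdx (p i).2).eraseIdx (p i).1)
    (hred : cs.IsReduced (words r))
    (PL : W → ArtinGroup M)
    (hPL : ∀ ω' : List B, cs.IsReduced ω' → PL (cs.wordProd ω') = artinWord M ω') :
    artinWord M ω =
      ((List.range r).map (fun i =>
        (artinWord M ((words i).take ((p i).1 + 1)) *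
          (artinWord M ((words i).take (p i).1))⁻¹) ^ 2)).prod *
      PL (cs.wordProd ω) := by
  have key : ∀ i, i ≤ r →
      artinWord M ω = ((List.range i).map (fun k =>
        (artinWord M ((words k).take ((p k).1 + 1)) *
          (artinWord M ((words k).take (p k).1))⁻¹) ^ 2)).prod * artinWord M (words i) ∧
      cs.wordProd (words i) = cs.wordProd ω := by
    intro i
    induction i with
    | zero => intro _; simp [hw0]
    | succ i ih =>
      intro hir
      obtain ⟨h1, h2⟩ := ih (by omega)
      obtain ⟨hds, hwnext⟩ := hstep i (by omega)
      obtain ⟨e1, e2⟩ := BraidDecompAux.step_lemma cs PL hPL hds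
      constructor
      · rw [h1, e2, ← hwnext, List.range_succ, List.map_append, List.prod_append]
        simp [mul_assoc]
      · rw [hwnext, e1, h2]
  obtain ⟨h1, h2⟩ := key r le_rfl
  rw [← h2, hPL _ hred]
  exact h1
end

section
/- Every reflection t in a Coxeter group admits a palindromic reduced expression: there exist simple generators s₁,…,s_k with t = s₁s₂⋯s_{k−1}s_k s_{k−1}⋯s₂s₁ and this expression of length 2k−1 is reduced. -/
open CoxeterSystem List
open scoped Classical

set_option linter.unusedSectionVars false

variable {B W : Type*} [Group W] {M : CoxeterMatrix B}

namespace ReflPal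

noncomputable def ind (P : Prop) : ZMod 2 := if P then 1 else 0

theorem ind_congr {P Q : Prop} (h : P ↔ Q) : ind P = ind Q := by
  simp only [ind]; split_ifs with h1 h2 h2 <;> tauto

theorem conj_eq_iff {G : Type*} [Group G] {x w y : G} : x * w * x⁻¹ = y ↔ w = x⁻¹ * y * x := by
  constructor
  · rintro rfl; group
  · rintro rfl; group

noncomputable def sigma (cs : CoxeterSystem M W) (i : B) : Equiv.Perm (W × ZMod 2) where
  toFun p := (cs.simple i * p.1 * cs.simple i, p.2 + ind (p.1 = cs.simple i))
  invFun p := (cs.simple i * p.1 * cs.simple i, p.2 + ind (p.1 = cs.simple i))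
  left_inv p := by
    obtain ⟨w, e⟩ := p
    simp only [Prod.mk.injEq]
    constructor
    · rw [← mul_assoc, ← mul_assoc]
      simp [cs.simple_mul_simple_cancel_left, cs.simple_mul_simple_cancel_right, mul_assoc]
    · rw [add_assoc]
      have : ind (cs.simple i * w * cs.simple i = cs.simple i) = ind (w = cs.simple i) := by
        apply ind_congr
        constructor
        · intro h
          have := congrArg (fun x => cs.simple i * x * cs.simple i) h
          simpa [mul_assoc, cs.simple_mul_simple_cancel_left,
            cs.simple_mul_simple_cancel_right, cs.simple_mul_simple_self] using this
        · rintro rfl; simp [mul_assoc, cs.simple_mul_simple_self]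
      rw [this, CharTwo.add_self_eq_zero, add_zero]
  right_inv p := by
    obtain ⟨w, e⟩ := p
    simp only [Prod.mk.injEq]
    constructor
    · rw [← mul_assoc, ← mul_assoc]
      simp [cs.simple_mul_simple_cancel_left, cs.simple_mul_simple_cancel_right, mul_assoc]
    · rw [add_assoc]
      have : ind (cs.simple i * w * cs.simple i = cs.simple i) = ind (w = cs.simple i) := by
        apply ind_congr
        constructor
        · intro h
          have := congrArg (fun x => cs.simple i * x * cs.simple i) h
          simpa [mul_assoc, cs.simple_mul_simple_cancel_left,
            cs.simple_mul_simple_cancel_right, cs.simple_mul_simple_self] using this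
        · rintro rfl; simp [mul_assoc, cs.simple_mul_simple_self]
      rw [this, CharTwo.add_self_eq_zero, add_zero]

theorem sigma_apply (cs : CoxeterSystem M W) (i : B) (w : W) (e : ZMod 2) :
    sigma cs i (w, e) = (cs.simple i * w * cs.simple i, e + ind (w = cs.simple i)) := rfl


theorem sum_pairs (m : ℕ) (h : ℕ → ZMod 2) :
    ∑ q ∈ Finset.range m, (h (2*q) + h (2*q+1)) = ∑ j ∈ Finset.range (2*m), h j := by
  induction m with
  | zero => simp
  | succ m ih =>
    rw [Finset.sum_range_succ, ih, mul_add, mul_one, ← add_assoc,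
      Finset.sum_range_succ, Finset.sum_range_succ]

theorem sum_period (m : ℕ) (h : ℕ → ZMod 2) (hp : ∀ j, h (m + j) = h j) :
    ∑ j ∈ Finset.range (2*m), h j = 0 := by
  rw [two_mul, Finset.sum_range_add]
  simp only [hp]
  exact CharTwo.add_self_eq_zero _

theorem simple_conj_pow (cs : CoxeterSystem M W) (i i' : B) (k : ℕ) :
    cs.simple i' * (cs.simple i * cs.simple i')^k
      = ((cs.simple i * cs.simple i')⁻¹)^k * cs.simple i' := by
  induction k with
  | zero => simp
  | succ k ih =>
    have hb : cs.simple i' * (cs.simple i * cs.simple i')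
        = (cs.simple i * cs.simple i')⁻¹ * cs.simple i' := by
      rw [mul_inv_rev, cs.inv_simple, cs.inv_simple]
      group
    calc cs.simple i' * (cs.simple i * cs.simple i')^(k+1)
        = (cs.simple i' * (cs.simple i * cs.simple i')) * (cs.simple i * cs.simple i')^k := by
          rw [pow_succ' (cs.simple i * cs.simple i'), ← mul_assoc]
      _ = (cs.simple i * cs.simple i')⁻¹ * (cs.simple i' * (cs.simple i * cs.simple i')^k) := by
          rw [hb, mul_assoc]
      _ = ((cs.simple i * cs.simple i')⁻¹)^(k+1) * cs.simple i' := by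
          rw [ih, ← mul_assoc, ← pow_succ']

theorem sigma_pow_apply (cs : CoxeterSystem M W) (i i' : B) (k : ℕ) (w : W) (e : ZMod 2) :
    ((sigma cs i * sigma cs i')^k) (w, e) =
      ((cs.simple i * cs.simple i')^k * w * ((cs.simple i * cs.simple i')^k)⁻¹,
        e + ∑ q ∈ Finset.range k,
          (ind (w = ((cs.simple i * cs.simple i')⁻¹)^(2*q) * cs.simple i') +
           ind (w = ((cs.simple i * cs.simple i')⁻¹)^(2*q+1) * cs.simple i'))) := by
  induction k with
  | zero => simp
  | succ k ih =>
    rw [pow_succ', Equiv.Perm.mul_apply, ih, Equiv.Perm.mul_apply, sigma_apply, sigma_apply]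
    have h1 : ∀ X : W, cs.simple i * (cs.simple i' * X * cs.simple i') * cs.simple i
        = (cs.simple i * cs.simple i') * X * (cs.simple i * cs.simple i')⁻¹ := by
      intro X
      rw [mul_inv_rev, cs.inv_simple, cs.inv_simple]
      group
    have hP : ((cs.simple i * cs.simple i')^k)⁻¹ = ((cs.simple i * cs.simple i')⁻¹)^k :=
      (inv_pow _ _).symm
    have hc1 : ((cs.simple i * cs.simple i')^k * w * ((cs.simple i * cs.simple i')^k)⁻¹
          = cs.simple i')
        ↔ (w = ((cs.simple i * cs.simple i')⁻¹)^(2*k) * cs.simple i') := by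
      rw [conj_eq_iff, hP]
      have : ((cs.simple i * cs.simple i')⁻¹)^k * cs.simple i'
            * (cs.simple i * cs.simple i')^k
          = ((cs.simple i * cs.simple i')⁻¹)^(2*k) * cs.simple i' := by
        rw [mul_assoc, simple_conj_pow, ← mul_assoc, ← pow_add, two_mul]
      rw [this]
    have hc2 : (cs.simple i' * ((cs.simple i * cs.simple i')^k * w
          * ((cs.simple i * cs.simple i')^k)⁻¹) * cs.simple i' = cs.simple i)
        ↔ (w = ((cs.simple i * cs.simple i')⁻¹)^(2*k+1) * cs.simple i') := by
      rw [show cs.simple i' * ((cs.simple i * cs.simple i')^k * w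
            * ((cs.simple i * cs.simple i')^k)⁻¹) * cs.simple i'
          = cs.simple i' * ((cs.simple i * cs.simple i')^k * w
            * ((cs.simple i * cs.simple i')^k)⁻¹) * (cs.simple i')⁻¹ by
        rw [cs.inv_simple]]
      rw [conj_eq_iff, conj_eq_iff, cs.inv_simple]
      have : ((cs.simple i * cs.simple i')^k)⁻¹
            * (cs.simple i' * cs.simple i * cs.simple i') * (cs.simple i * cs.simple i')^k
          = ((cs.simple i * cs.simple i')⁻¹)^(2*k+1) * cs.simple i' := by
        have hba : cs.simple i' * cs.simple i * cs.simple i'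
            = (cs.simple i * cs.simple i')⁻¹ * cs.simple i' := by
          rw [mul_inv_rev, cs.inv_simple, cs.inv_simple]
        rw [hba, hP, mul_assoc, mul_assoc, simple_conj_pow, ← mul_assoc, ← mul_assoc,
          ← pow_succ, ← pow_add]
        congr 2
        omega
      rw [this]
    rw [Finset.sum_range_succ]
    refine Prod.ext ?_ ?_
    · show cs.simple i * (cs.simple i' * ((cs.simple i * cs.simple i')^k * w
          * ((cs.simple i * cs.simple i')^k)⁻¹) * cs.simple i') * cs.simple i = _
      rw [h1, pow_succ' (cs.simple i * cs.simple i') k,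
        mul_inv_rev (cs.simple i * cs.simple i') ((cs.simple i * cs.simple i')^k)]
      simp only [mul_assoc]
    · show _ + ind _ + ind _ = _
      rw [ind_congr hc1, ind_congr hc2]
      push_cast []
      abel

theorem sigma_liftable (cs : CoxeterSystem M W) :
    ∀ i i', (sigma cs i * sigma cs i')^(M i i') = 1 := by
  intro i i'
  apply Equiv.ext
  rintro ⟨w, e⟩
  rw [sigma_pow_apply, cs.simple_mul_simple_pow i i']
  have hper : ∀ j : ℕ, (fun j => ind (w = ((cs.simple i * cs.simple i')⁻¹)^j * cs.simple i'))
        (M i i' + j)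
      = (fun j => ind (w = ((cs.simple i * cs.simple i')⁻¹)^j * cs.simple i')) j := by
    intro j
    simp only []
    apply ind_congr
    rw [pow_add, inv_pow, cs.simple_mul_simple_pow i i', inv_one, one_mul]
  have hsum : ∑ q ∈ Finset.range (M i i'),
      (ind (w = ((cs.simple i * cs.simple i')⁻¹)^(2*q) * cs.simple i') +
       ind (w = ((cs.simple i * cs.simple i')⁻¹)^(2*q+1) * cs.simple i')) = 0 := by
    rw [sum_pairs (M i i') (fun j => ind (w = ((cs.simple i * cs.simple i')⁻¹)^j * cs.simple i'))]
    exact sum_period (M i i') _ hper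
  rw [hsum]
  simp


noncomputable def cnt (t : W) (l : List W) : ZMod 2 := (l.map fun u => ind (u = t)).sum

theorem cnt_cons (t u : W) (l : List W) : cnt t (u :: l) = ind (u = t) + cnt t l := by
  simp [cnt]

theorem cnt_concat (t u : W) (l : List W) : cnt t (l ++ [u]) = cnt t l + ind (u = t) := by
  simp [cnt]

theorem cnt_eq_zero_of_not_mem {t : W} {l : List W} (h : t ∉ l) : cnt t l = 0 := by
  induction l with
  | nil => rfl
  | cons u l ih =>
    rw [cnt_cons]
    simp only [List.mem_cons, not_or] at h
    rw [ih h.2, ind_congr (iff_false_intro (Ne.symm h.1) : (u = t) ↔ False)]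
    simp [ind]

theorem cnt_map_conj (t g : W) (l : List W) :
    cnt t (l.map fun u => g * u * g⁻¹) = cnt (g⁻¹ * t * g) l := by
  simp only [cnt, List.map_map]
  congr 1
  apply List.map_congr_left
  intro u _
  apply ind_congr
  exact conj_eq_iff

noncomputable def phi (cs : CoxeterSystem M W) : W →* Equiv.Perm (W × ZMod 2) :=
  cs.lift ⟨fun i => sigma cs i, sigma_liftable cs⟩

theorem phi_simple (cs : CoxeterSystem M W) (i : B) : phi cs (cs.simple i) = sigma cs i :=
  cs.lift_apply_simple (sigma_liftable cs) i

theorem phi_wordProd (cs : CoxeterSystem M W) (ω : List B) (t : W) (e : ZMod 2) :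
    phi cs (cs.wordProd ω) (t, e) =
      (cs.wordProd ω * t * (cs.wordProd ω)⁻¹, e + cnt t (cs.rightInvSeq ω)) := by
  induction ω with
  | nil => simp [cnt]
  | cons i ω ih =>
    have hris : cs.rightInvSeq (i :: ω)
        = ((cs.wordProd ω)⁻¹ * cs.simple i * cs.wordProd ω) :: cs.rightInvSeq ω := rfl
    rw [cs.wordProd_cons, map_mul, Equiv.Perm.mul_apply, ih, phi_simple, sigma_apply, hris,
      cnt_cons]
    refine Prod.ext ?_ ?_
    · show cs.simple i * (cs.wordProd ω * t * (cs.wordProd ω)⁻¹) * cs.simple i = _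
      rw [mul_inv_rev, cs.inv_simple]
      simp only [mul_assoc]
    · show (e + cnt t (cs.rightInvSeq ω)) + ind _ = _
      have : ind (cs.wordProd ω * t * (cs.wordProd ω)⁻¹ = cs.simple i)
          = ind ((cs.wordProd ω)⁻¹ * cs.simple i * cs.wordProd ω = t) := by
        apply ind_congr
        rw [conj_eq_iff, eq_comm]
      rw [this]
      ring

theorem cnt_ris_eq_of_wordProd_eq (cs : CoxeterSystem M W) {ω ω' : List B}
    (h : cs.wordProd ω = cs.wordProd ω') (t : W) :
    cnt t (cs.rightInvSeq ω) = cnt t (cs.rightInvSeq ω') := by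
  have h1 := phi_wordProd cs ω t 0
  have h2 := phi_wordProd cs ω' t 0
  rw [h] at h1
  rw [h1] at h2
  have := congrArg Prod.snd h2
  simpa using this

theorem key1 {G : Type*} [Group G] {b t : G} (hb2 : b * b = 1) (ht : t⁻¹ = t) :
    ((t * b)⁻¹ * b * (t * b) = b * t * b) ↔ (t = b) := by
  have hbinv : b⁻¹ = b := inv_eq_of_mul_eq_one_right hb2
  rw [mul_inv_rev, hbinv, ht]
  constructor
  · intro h
    have h1 : t * b = 1 := by
      apply mul_left_cancel (a := b * t * b)
      rw [mul_one]
      exact h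
    have h2 : t = b⁻¹ := eq_inv_of_mul_eq_one_left h1
    rwa [hbinv] at h2
  · rintro rfl
    simp [hb2, mul_assoc]

theorem key2 {G : Type*} [Group G] {b t : G} (hb2 : b * b = 1) :
    (b = b * t * b) ↔ (t = b) := by
  have hbinv : b⁻¹ = b := inv_eq_of_mul_eq_one_right hb2
  constructor
  · intro h
    have h1 : t * b = 1 := by
      apply mul_left_cancel (a := b)
      rw [mul_one, ← mul_assoc, ← h]
    have h2 : t = b⁻¹ := eq_inv_of_mul_eq_one_left h1
    rwa [hbinv] at h2
  · rintro rfl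
    rw [hb2, one_mul]

theorem cnt_ris_palindrome (cs : CoxeterSystem M W) (β : List B) (i : B) :
    cnt (cs.wordProd β * cs.simple i * (cs.wordProd β)⁻¹)
      (cs.rightInvSeq (β ++ [i] ++ β.reverse)) = 1 := by
  induction β with
  | nil => simp [cnt, ind]
  | cons j β ih =>
    have hb2 : cs.simple j * cs.simple j = 1 := cs.simple_mul_simple_self j
    have ht'inv : (cs.wordProd β * cs.simple i * (cs.wordProd β)⁻¹)⁻¹
        = cs.wordProd β * cs.simple i * (cs.wordProd β)⁻¹ := by
      simp [mul_assoc, cs.inv_simple]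
    have hlist : (j :: β) ++ [i] ++ (j :: β).reverse
        = j :: ((β ++ [i] ++ β.reverse) ++ [j]) := by
      simp
    have ht : cs.wordProd (j :: β) * cs.simple i * (cs.wordProd (j :: β))⁻¹
        = cs.simple j * (cs.wordProd β * cs.simple i * (cs.wordProd β)⁻¹) * cs.simple j := by
      rw [cs.wordProd_cons, mul_inv_rev, cs.inv_simple]
      simp only [mul_assoc]
    have hpal : cs.wordProd (β ++ [i] ++ β.reverse)
        = cs.wordProd β * cs.simple i * (cs.wordProd β)⁻¹ := by
      rw [cs.wordProd_append, cs.wordProd_append, cs.wordProd_singleton, cs.wordProd_reverse]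
    have hris2 : cs.rightInvSeq ((β ++ [i] ++ β.reverse) ++ [j])
        = ((cs.rightInvSeq (β ++ [i] ++ β.reverse)).map
            fun u => cs.simple j * u * (cs.simple j)⁻¹) ++ [cs.simple j] := by
      rw [← List.concat_eq_append, cs.rightInvSeq_concat]
      simp only [List.concat_eq_append]
      rfl
    have hris1 : cs.rightInvSeq (j :: ((β ++ [i] ++ β.reverse) ++ [j]))
        = ((cs.wordProd ((β ++ [i] ++ β.reverse) ++ [j]))⁻¹ * cs.simple j
            * cs.wordProd ((β ++ [i] ++ β.reverse) ++ [j]))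
          :: cs.rightInvSeq ((β ++ [i] ++ β.reverse) ++ [j]) := rfl
    have hprodcat : cs.wordProd ((β ++ [i] ++ β.reverse) ++ [j])
        = (cs.wordProd β * cs.simple i * (cs.wordProd β)⁻¹) * cs.simple j := by
      rw [cs.wordProd_append, hpal, cs.wordProd_singleton]
    have hconj : (cs.simple j)⁻¹
          * (cs.simple j * (cs.wordProd β * cs.simple i * (cs.wordProd β)⁻¹) * cs.simple j)
          * cs.simple j
        = cs.wordProd β * cs.simple i * (cs.wordProd β)⁻¹ := by
      rw [cs.inv_simple]
      simp [mul_assoc, cs.simple_mul_simple_cancel_left, cs.simple_mul_simple_cancel_right]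
    rw [ht, hlist, hris1, hris2, cnt_cons, cnt_concat, cnt_map_conj, hprodcat, hconj, ih,
      ind_congr (key1 hb2 ht'inv), ind_congr (key2 hb2)]
    have : ∀ x : ZMod 2, x + (1 + x) = 1 := by decide
    exact this _

end ReflPal

open ReflPal

/-- Every reflection admits a palindromic reduced expression
`t = s₁ s₂ ⋯ s_{k-1} s_k s_{k-1} ⋯ s₂ s₁` of length `2k - 1`. -/
theorem reflection_palindromic_reduced (cs : CoxeterSystem M W) (t : W)
    (ht : cs.IsReflection t) :
    ∃ ω : List B, ω ≠ [] ∧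
      cs.wordProd (ω ++ ω.dropLast.reverse) = t ∧
      cs.IsReduced (ω ++ ω.dropLast.reverse) := by
  obtain ⟨ω, hred, hw⟩ := cs.exists_reduced_word' t
  obtain ⟨v, i, hvi⟩ := ht
  obtain ⟨β, -, hβ⟩ := cs.exists_reduced_word' v
  have htinv : t⁻¹ = t := by
    rw [hvi]; simp [mul_assoc, cs.inv_simple]
  have hprod : cs.wordProd (β ++ [i] ++ β.reverse) = cs.wordProd ω := by
    rw [cs.wordProd_append, cs.wordProd_append, cs.wordProd_singleton, cs.wordProd_reverse,
      ← hβ, ← hw, hvi]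
  have hcnt : cnt t (cs.rightInvSeq ω) = 1 := by
    rw [← cnt_ris_eq_of_wordProd_eq cs hprod t]
    have := cnt_ris_palindrome cs β i
    rw [← hβ, ← hvi] at this
    exact this
  have hmem : t ∈ cs.rightInvSeq ω := by
    by_contra h
    rw [cnt_eq_zero_of_not_mem h] at hcnt
    exact zero_ne_one hcnt
  obtain ⟨j, hj, hget⟩ := List.mem_iff_getElem.mp hmem
  rw [cs.length_rightInvSeq] at hj
  have hgetD : (cs.rightInvSeq ω).getD j 1 = t := by
    rw [List.getD_eq_getElem _ _ (by rw [cs.length_rightInvSeq]; exact hj)]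
    exact hget
  have hlisD : (cs.leftInvSeq ω).getD j 1 = t := by
    have h1 := cs.wordProd_mul_getD_rightInvSeq ω j
    have h2 := cs.getD_leftInvSeq_mul_wordProd ω j
    rw [hgetD, ← hw] at h1
    rw [← hw, ← h1] at h2
    have h3 : (cs.leftInvSeq ω).getD j 1 * t = t * t := h2
    calc (cs.leftInvSeq ω).getD j 1
        = (cs.leftInvSeq ω).getD j 1 * t * t⁻¹ := by group
      _ = t * t * t⁻¹ := by rw [h3]
      _ = t := by group
  have hsome : ω[j]? = some ω[j] := by
    rw [List.getElem?_eq_getElem hj]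
  have hris_eq : t = (cs.wordProd (ω.drop (j+1)))⁻¹ * cs.simple ω[j]
      * cs.wordProd (ω.drop (j+1)) := by
    rw [← hgetD, cs.getD_rightInvSeq, hsome]
    simp
  have hlis_eq : t = cs.wordProd (ω.take j) * cs.simple ω[j]
      * (cs.wordProd (ω.take j))⁻¹ := by
    rw [← hlisD, cs.getD_leftInvSeq, hsome]
    simp
  -- length bounds
  have hlent : cs.length t = ω.length := by rw [hw]; exact hred
  have hbound1 : cs.length t ≤ 2 * j + 1 := by
    calc cs.length t
        ≤ cs.length (cs.wordProd (ω.take j) * cs.simple ω[j])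
            + cs.length (cs.wordProd (ω.take j))⁻¹ := by
          rw [hlis_eq]; exact cs.length_mul_le _ _
      _ ≤ cs.length (cs.wordProd (ω.take j)) + cs.length (cs.simple ω[j])
            + cs.length (cs.wordProd (ω.take j)) := by
          rw [cs.length_inv]
          exact Nat.add_le_add_right (cs.length_mul_le _ _) _
      _ ≤ j + 1 + j := by
          have h1 : cs.length (cs.wordProd (ω.take j)) ≤ j := by
            calc cs.length (cs.wordProd (ω.take j)) ≤ (ω.take j).length :=
                  cs.length_wordProd_le _
              _ ≤ j := by rw [List.length_take]; omega
          rw [cs.length_simple]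
          omega
      _ = 2 * j + 1 := by omega
  have hbound2 : cs.length t ≤ 2 * (ω.length - (j+1)) + 1 := by
    calc cs.length t
        ≤ cs.length ((cs.wordProd (ω.drop (j+1)))⁻¹ * cs.simple ω[j])
            + cs.length (cs.wordProd (ω.drop (j+1))) := by
          rw [hris_eq]; exact cs.length_mul_le _ _
      _ ≤ cs.length (cs.wordProd (ω.drop (j+1))) + cs.length (cs.simple ω[j])
            + cs.length (cs.wordProd (ω.drop (j+1))) := by
          have := cs.length_mul_le (cs.wordProd (ω.drop (j+1)))⁻¹ (cs.simple ω[j])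
          rw [cs.length_inv] at this
          exact Nat.add_le_add_right this _
      _ ≤ (ω.length - (j+1)) + 1 + (ω.length - (j+1)) := by
          have h1 : cs.length (cs.wordProd (ω.drop (j+1))) ≤ ω.length - (j+1) := by
            calc cs.length (cs.wordProd (ω.drop (j+1))) ≤ (ω.drop (j+1)).length :=
                  cs.length_wordProd_le _
              _ = ω.length - (j+1) := by rw [List.length_drop]
          rw [cs.length_simple]
          omega
      _ = 2 * (ω.length - (j+1)) + 1 := by omega
  have hn : ω.length = 2 * j + 1 := by omega
  -- the palindromic word
  refine ⟨ω.take (j+1), ?_, ?_, ?_⟩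
  · intro hnil
    have : (ω.take (j+1)).length = 0 := by rw [hnil]; rfl
    rw [List.length_take] at this
    omega
  · have hdl : (ω.take (j+1)).dropLast = ω.take j := by
      rw [List.take_succ, List.getElem?_eq_getElem hj]
      rw [Option.toList_some, List.dropLast_concat]
    rw [hdl, cs.wordProd_append, cs.wordProd_reverse]
    have htake : cs.wordProd (ω.take (j+1))
        = cs.wordProd (ω.take j) * cs.simple ω[j] := by
      rw [List.take_succ, List.getElem?_eq_getElem hj, Option.toList_some,
        cs.wordProd_append, cs.wordProd_singleton]
    rw [htake]
    exact hlis_eq.symm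
  · have hdl : (ω.take (j+1)).dropLast = ω.take j := by
      rw [List.take_succ, List.getElem?_eq_getElem hj]
      rw [Option.toList_some, List.dropLast_concat]
    unfold CoxeterSystem.IsReduced
    rw [hdl]
    have htake : cs.wordProd (ω.take (j+1))
        = cs.wordProd (ω.take j) * cs.simple ω[j] := by
      rw [List.take_succ, List.getElem?_eq_getElem hj, Option.toList_some,
        cs.wordProd_append, cs.wordProd_singleton]
    have hprodpal : cs.wordProd (ω.take (j+1) ++ (ω.take j).reverse) = t := by
      rw [cs.wordProd_append, cs.wordProd_reverse, htake, ← hlis_eq]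
    rw [hprodpal]
    have hlen1 : (ω.take (j+1)).length = j + 1 := by
      rw [List.length_take]; omega
    have hlen2 : (ω.take j).length = j := by
      rw [List.length_take]; omega
    rw [List.length_append, List.length_reverse, hlen1, hlen2, hlent]
    omega
end

section
/- Let W₀ be a reflection subgroup of a Coxeter group W, K₀ the normal subgroup of the Artin group B generated by all β σ_s² β⁻¹ with β ∈ B, s ∈ S such that π(βσ_sβ⁻¹) ∉ W₀, and ψ : N_W(W₀) → π⁻¹(N_W(W₀))/K₀ the map w ↦ w̲K₀. If w₁, w₂ ∈ N_W(W₀) satisfy N(w₁⁻¹) ∩ N(w₂) ∩ W₀ = ∅, then ψ(w₁w₂) = ψ(w₁)ψ(w₂). -/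
open CoxeterSystem

variable {B W : Type*} [Group W] {M : CoxeterMatrix B}

/-- The subgroup `K₀` of the Artin group, generated by the elements `β σ² β⁻¹`
with `π(β σ β⁻¹) ∉ W₀`. -/
def K0 (W₀ : Subgroup W) (pr : ArtinGroup M →* W) : Subgroup (ArtinGroup M) :=
  Subgroup.closure {x | ∃ (β : ArtinGroup M) (i : B),
    x = β * (PresentedGroup.of i : ArtinGroup M) * PresentedGroup.of i * β⁻¹ ∧
    pr (β * (PresentedGroup.of i : ArtinGroup M) * β⁻¹) ∉ W₀}

namespace PsiAux

open List


open scoped Classical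

variable {B W : Type*} [Group W] {M : CoxeterMatrix B} (cs : CoxeterSystem M W)

local prefix:100 "s" => cs.simple

/-- The sign-permutation associated to a simple generator. -/
noncomputable def etaFun (i : B) : W × ℤˣ → W × ℤˣ :=
  fun x => (s i * x.1 * s i, x.2 * (if x.1 = s i then (-1 : ℤˣ) else 1))

lemma simple_conj_eq_simple_iff (i : B) (t : W) :
    s i * t * s i = s i ↔ t = s i := by
  constructor
  · intro h
    have : s i * (s i * t * s i) * s i = s i * s i * s i := by rw [h]
    rw [show s i * (s i * t * s i) * s i = (s i * s i) * t * (s i * s i) by group,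
      cs.simple_mul_simple_self] at this
    simpa [cs.simple_mul_simple_self] using this
  · rintro rfl
    rw [cs.simple_mul_simple_self, one_mul]

lemma etaFun_involutive (i : B) : Function.Involutive (etaFun cs i) := by
  rintro ⟨t, ε⟩
  simp only [etaFun, simple_conj_eq_simple_iff]
  refine Prod.ext ?_ ?_
  · show s i * (s i * t * s i) * s i = t
    rw [show s i * (s i * t * s i) * s i = (s i * s i) * t * (s i * s i) by group,
      cs.simple_mul_simple_self]
    simp
  · show (ε * _) * _ = ε
    by_cases h : t = s i <;> simp [h]

/-- The sign-permutation associated to a simple generator, as a permutation. -/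
noncomputable def eta (i : B) : Equiv.Perm (W × ℤˣ) :=
  (etaFun_involutive cs i).toPerm

lemma eta_apply (i : B) (x : W × ℤˣ) :
    eta cs i x = (s i * x.1 * s i, x.2 * (if x.1 = s i then (-1 : ℤˣ) else 1)) := rfl

lemma eta_mul_pow (i j : B) (n : ℕ) (x : W × ℤˣ) :
    ((eta cs i * eta cs j) ^ n) x =
      ((s i * s j) ^ n * x.1 * ((s i * s j) ^ n)⁻¹,
        x.2 * ∏ r ∈ Finset.range (2 * n),
          (if x.1 = (s j * s i) ^ r * s j then (-1 : ℤˣ) else 1)) := by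
  induction n generalizing x with
  | zero => simp
  | succ n ih =>
    obtain ⟨t, ε⟩ := x
    have key : ∀ r : ℕ, (s i * s j)⁻¹ * ((s j * s i) ^ r * s j) * (s i * s j)
        = (s j * s i) ^ (r + 2) * s j := by
      intro r
      have h1 : (s i * s j)⁻¹ = s j * s i := by
        rw [mul_inv_rev, cs.inv_simple, cs.inv_simple]
      rw [h1,
        show (s j * s i) * ((s j * s i) ^ r * s j) * (s i * s j)
          = ((s j * s i) * (s j * s i) ^ r) * ((s j * s i) * s j) by simp [mul_assoc],
        ← pow_succ', ← mul_assoc, ← pow_succ]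
    have hc1 : ∀ u : W, (s j * (u * s j) = s i) ↔ (u = (s j * s i) ^ 1 * s j) := by
      intro u
      rw [pow_one]
      constructor
      · intro h
        have h2 : s j * (s j * (u * s j)) * s j = s j * s i * s j := by rw [h]
        rw [show s j * (s j * (u * s j)) * s j = (s j * s j) * u * (s j * s j) by group,
          cs.simple_mul_simple_self, one_mul, mul_one] at h2
        rw [h2, mul_assoc]
      · rintro rfl
        rw [cs.simple_mul_simple_cancel_right, cs.simple_mul_simple_cancel_left]
    have hc0 : ∀ u : W, (u = s j) ↔ (u = (s j * s i) ^ 0 * s j) := by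
      intro u; rw [pow_zero, one_mul]
    rw [pow_succ, Equiv.Perm.mul_apply]
    have hfx : (eta cs i * eta cs j) (t, ε) =
        ((s i * s j) * t * (s i * s j)⁻¹,
          ε * (if t = (s j * s i) ^ 0 * s j then (-1 : ℤˣ) else 1)
            * (if t = (s j * s i) ^ 1 * s j then (-1 : ℤˣ) else 1)) := by
      rw [Equiv.Perm.mul_apply, eta_apply, eta_apply]
      dsimp only
      rw [Prod.mk.injEq]
      constructor
      · rw [mul_inv_rev, cs.inv_simple, cs.inv_simple]
        simp [mul_assoc]
      · rw [mul_assoc, mul_assoc, mul_assoc]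
        congr 1
        rw [if_congr (hc0 t) rfl rfl]
        congr 1
        rw [if_congr (hc1 t) rfl rfl]
    rw [hfx, ih]
    rw [Prod.mk.injEq]
    constructor
    · show (s i * s j) ^ n * ((s i * s j) * t * (s i * s j)⁻¹) * ((s i * s j) ^ n)⁻¹
        = (s i * s j) ^ (n + 1) * t * ((s i * s j) ^ (n + 1))⁻¹
      rw [pow_succ, mul_inv_rev]
      simp [mul_assoc]
    · show (ε * _ * _) * _ = ε * _
      have hcond : ∀ r : ℕ,
          ((if (s i * s j) * t * (s i * s j)⁻¹ = (s j * s i) ^ r * s j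
              then (-1 : ℤˣ) else 1))
            = (if t = (s j * s i) ^ (r + 2) * s j then (-1 : ℤˣ) else 1) := by
        intro r
        refine if_congr ?_ rfl rfl
        constructor
        · intro h
          have : t = (s i * s j)⁻¹ * ((s i * s j) * t * (s i * s j)⁻¹) * (s i * s j) := by
            group
          rw [this, h, key]
        · rintro rfl
          rw [← key r]; group
      rw [Finset.prod_congr rfl (fun r _ => hcond r)]
      rw [show 2 * (n + 1) = (2 * n + 1) + 1 by ring,
        Finset.prod_range_succ', Finset.prod_range_succ']
      have hidx : ∀ r : ℕ,
          (if t = (s j * s i) ^ (r + 1 + 1) * s j then (-1 : ℤˣ) else 1)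
            = (if t = (s j * s i) ^ (r + 2) * s j then (-1 : ℤˣ) else 1) := fun r => rfl
      rw [Finset.prod_congr rfl (fun r _ => hidx r)]
      simp only [zero_add]
      simp [mul_comm, mul_left_comm, mul_assoc]

lemma eta_liftable : M.IsLiftable (fun i => eta cs i) := by
  intro i j
  apply Equiv.ext
  rintro ⟨t, ε⟩
  rw [eta_mul_pow]
  rw [cs.simple_mul_simple_pow i j]
  have hq : ((s j * s i) : W) ^ (M i j) = 1 := cs.simple_mul_simple_pow' i j
  have hper : ∀ r : ℕ,
      (if t = (s j * s i) ^ (M i j + r) * s j then (-1 : ℤˣ) else 1)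
        = (if t = (s j * s i) ^ r * s j then (-1 : ℤˣ) else 1) := by
    intro r
    refine if_congr ?_ rfl rfl
    rw [pow_add, hq, one_mul]
  rw [two_mul, Finset.prod_range_add]
  rw [Finset.prod_congr rfl (fun r _ => hper r)]
  rw [Int.units_mul_self, mul_one]
  simp

/-- The sign representation on `W × ℤˣ`. -/
noncomputable def rho : W →* Equiv.Perm (W × ℤˣ) :=
  cs.lift ⟨fun i => eta cs i, eta_liftable cs⟩

lemma rho_simple (i : B) : rho cs (s i) = eta cs i :=
  cs.lift_apply_simple (eta_liftable cs) i

/-- The sign of a reflection-candidate `t` relative to `w`. -/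
noncomputable def sgn (w t : W) : ℤˣ := (rho cs w (t, 1)).2

lemma rho_apply : ∀ w t : W, ∀ ε : ℤˣ, rho cs w (t, ε) = (w * t * w⁻¹, ε * sgn cs w t) := by
  intro w
  induction w using cs.simple_induction_left with
  | one => intro t ε; simp [sgn]
  | mul_simple_left w i ih =>
    intro t ε
    have h1 : rho cs (s i * w) (t, ε) = eta cs i (rho cs w (t, ε)) := by
      rw [map_mul, Equiv.Perm.mul_apply, rho_simple]
    have h2 : rho cs (s i * w) (t, 1) = eta cs i (rho cs w (t, 1)) := by
      rw [map_mul, Equiv.Perm.mul_apply, rho_simple]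
    rw [ih t ε] at h1
    rw [ih t 1] at h2
    rw [eta_apply] at h1 h2
    dsimp only at h1 h2
    rw [h1]
    have hsgn : sgn cs (s i * w) t = 1 * sgn cs w t * (if w * t * w⁻¹ = s i then (-1:ℤˣ) else 1) := by
      rw [sgn, h2]
    refine Prod.ext ?_ ?_
    · show s i * (w * t * w⁻¹) * s i = (s i * w) * t * (s i * w)⁻¹
      rw [mul_inv_rev, cs.inv_simple]
      group
    · show ε * sgn cs w t * _ = ε * sgn cs (s i * w) t
      rw [hsgn]
      by_cases h : w * t * w⁻¹ = s i <;> simp [h, mul_comm, mul_left_comm, mul_assoc]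

lemma sgn_mul (w v t : W) : sgn cs (w * v) t = sgn cs v t * sgn cs w (v * t * v⁻¹) := by
  have : rho cs (w * v) (t, 1) = rho cs w (rho cs v (t, 1)) := by
    rw [map_mul, Equiv.Perm.mul_apply]
  rw [rho_apply cs v t 1, one_mul, rho_apply cs w] at this
  rw [sgn, this]

lemma sgn_one (t : W) : sgn cs 1 t = 1 := by simp [sgn]

lemma sgn_simple (i : B) (t : W) : sgn cs (s i) t = if t = s i then (-1 : ℤˣ) else 1 := by
  rw [sgn, rho_simple, eta_apply]
  simp

lemma sgn_refl_self (t : W) (ht : cs.IsReflection t) : sgn cs t t = -1 := by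
  obtain ⟨v, i, rfl⟩ := ht
  set t := v * s i * v⁻¹ with hts
  have h0 : sgn cs v (s i) * sgn cs v⁻¹ (v * (s i) * v⁻¹) = 1 := by
    rw [← sgn_mul cs v⁻¹ v (s i), inv_mul_cancel, sgn_one]
  have h1 : sgn cs (v * s i) (s i) = -(sgn cs v (s i)) := by
    rw [sgn_mul cs v (s i) (s i)]
    rw [sgn_simple]
    rw [if_pos rfl]
    rw [show s i * (s i) * (s i)⁻¹ = s i by group]
    simp
  have h2 : sgn cs ((v * s i) * v⁻¹) t = sgn cs v⁻¹ t * sgn cs (v * s i) (v⁻¹ * t * v⁻¹⁻¹) := by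
    rw [sgn_mul]
  have h3 : v⁻¹ * t * v⁻¹⁻¹ = s i := by rw [hts]; group
  rw [h3, h1] at h2
  have h4 : sgn cs v⁻¹ t = sgn cs v⁻¹ (v * (s i) * v⁻¹) := by rw [hts]
  rw [show (v * s i) * v⁻¹ = t by rw [hts]] at h2
  rw [h2, h4]
  calc sgn cs v⁻¹ (v * s i * v⁻¹) * -(sgn cs v (s i))
      = -(sgn cs v (s i) * sgn cs v⁻¹ (v * (s i) * v⁻¹)) := by
        rw [mul_comm]; simp
    _ = -1 := by rw [h0]

lemma sgn_neg_one_imp (n : ℕ) : ∀ w t : W, cs.length w ≤ n → cs.IsReflection t →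
    sgn cs w t = -1 → cs.length (w * t) < cs.length w := by
  induction n with
  | zero =>
    intro w t hw ht hs
    rw [Nat.le_zero, cs.length_eq_zero_iff] at hw
    subst hw
    rw [sgn_one] at hs
    exact absurd hs (by decide)
  | succ n ih =>
    intro w t hw ht hs
    rcases eq_or_ne w 1 with rfl | hne
    · rw [sgn_one] at hs
      exact absurd hs (by decide)
    obtain ⟨i, hi⟩ := cs.exists_rightDescent_of_ne_one hne
    rcases eq_or_ne t (s i) with rfl | htne
    · exact hi
    · have hw' : w = (w * s i) * s i := by rw [cs.simple_mul_simple_cancel_right]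
      have hsgn : sgn cs w t = sgn cs (s i) t * sgn cs (w * s i) (s i * t * s i) := by
        conv_lhs => rw [hw']
        rw [sgn_mul cs (w * s i) (s i) t, cs.inv_simple]
      rw [sgn_simple, if_neg htne, one_mul] at hsgn
      have hs2 : sgn cs (w * s i) (s i * t * s i) = -1 := by rw [← hsgn, hs]
      have hrefl : cs.IsReflection (s i * t * s i) := by
        have := ht.conj (s i)
        rwa [cs.inv_simple] at this
      have hlen : cs.length (w * s i) ≤ n := by
        have h2 : cs.length (w * s i) < cs.length w := hi
        omega
      have := ih (w * s i) (s i * t * s i) hlen hrefl hs2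
      have hwt : w * t = (w * s i) * (s i * t * s i) * s i := by
        simp [mul_assoc, cs.simple_mul_simple_cancel_left, cs.simple_mul_simple_self]
      have hle : cs.length (w * t) ≤ cs.length ((w * s i) * (s i * t * s i)) + 1 := by
        rw [hwt]
        calc cs.length ((w * s i) * (s i * t * s i) * s i)
            ≤ cs.length ((w * s i) * (s i * t * s i)) + cs.length (s i) := cs.length_mul_le _ _
          _ = cs.length ((w * s i) * (s i * t * s i)) + 1 := by rw [cs.length_simple]
      have hi' : cs.length (w * s i) < cs.length w := hi
      omega

lemma length_mul_lt_iff_sgn (w t : W) (ht : cs.IsReflection t) :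
    cs.length (w * t) < cs.length w ↔ sgn cs w t = -1 := by
  constructor
  · intro h
    rcases Int.units_eq_one_or (sgn cs w t) with h1 | h1
    · exfalso
      have hs : sgn cs (w * t) t = -1 := by
        rw [sgn_mul cs w t t, show t * t * t⁻¹ = t by group, sgn_refl_self cs t ht, h1]
        simp
      have := sgn_neg_one_imp cs (cs.length (w * t)) (w * t) t le_rfl ht hs
      rw [mul_assoc, ht.mul_self, mul_one] at this
      omega
    · exact h1
  · exact sgn_neg_one_imp cs (cs.length w) w t le_rfl ht

/-- Criterion for left inversions in terms of the sign cocycle. -/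
lemma isLeftInversion_iff_sgn (w t : W) (ht : cs.IsReflection t) :
    cs.IsLeftInversion w t ↔ sgn cs w⁻¹ t = -1 := by
  rw [← length_mul_lt_iff_sgn cs w⁻¹ t ht]
  unfold CoxeterSystem.IsLeftInversion
  have h1 : cs.length (t * w) = cs.length (w⁻¹ * t) := by
    rw [← cs.length_inv (w⁻¹ * t)]
    congr 1
    rw [mul_inv_rev, inv_inv, ht.inv]
  have h2 : cs.length w = cs.length w⁻¹ := (cs.length_inv w).symm
  rw [h1, h2]
  exact ⟨fun h => h.2, fun h => ⟨ht, h⟩⟩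

section ArtinPart

lemma artinWord_cons (i : B) (ω : List B) :
    artinWord M (i :: ω) = (PresentedGroup.of i : ArtinGroup M) * artinWord M ω := by
  simp [artinWord]

lemma artinWord_append (ω ω' : List B) :
    artinWord M (ω ++ ω') = artinWord M ω * artinWord M ω' := by
  simp [artinWord]

lemma artinWord_singleton (i : B) :
    artinWord M [i] = (PresentedGroup.of i : ArtinGroup M) := by
  simp [artinWord]

variable (pr : ArtinGroup M →* W) (PL : W → ArtinGroup M)

lemma pr_artinWord (hpr : ∀ i : B, pr (PresentedGroup.of i : ArtinGroup M) = cs.simple i)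
    (ω : List B) : pr (artinWord M ω) = cs.wordProd ω := by
  induction ω with
  | nil => simp [artinWord]
  | cons i ω ih => rw [artinWord_cons, map_mul, hpr, cs.wordProd_cons, ih]

variable (hpr : ∀ i : B, pr (PresentedGroup.of i : ArtinGroup M) = cs.simple i)
variable (hPL : ∀ ω : List B, cs.IsReduced ω → PL (cs.wordProd ω) = artinWord M ω)

include hpr hPL in
lemma pr_PL (u : W) : pr (PL u) = u := by
  obtain ⟨ω, hred, rfl⟩ := cs.exists_reduced_word' u
  rw [hPL ω hred, pr_artinWord cs pr hpr ω]

include hPL in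
lemma PL_mul_simple (u : W) (i : B) (h : cs.length (u * s i) = cs.length u + 1) :
    PL (u * s i) = PL u * (PresentedGroup.of i : ArtinGroup M) := by
  obtain ⟨ω, hred, rfl⟩ := cs.exists_reduced_word' u
  have hprodeq : cs.wordProd (ω ++ [i]) = cs.wordProd ω * s i := by
    rw [cs.wordProd_append, cs.wordProd_singleton]
  have hred2 : cs.IsReduced (ω ++ [i]) := by
    unfold CoxeterSystem.IsReduced at hred ⊢
    rw [hprodeq, h, hred]
    simp
  rw [← hprodeq, hPL _ hred2, hPL _ hred, artinWord_append, artinWord_singleton]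

include hPL in
lemma PL_simple_mul (u : W) (i : B) (h : cs.length (s i * u) = cs.length u + 1) :
    PL (s i * u) = (PresentedGroup.of i : ArtinGroup M) * PL u := by
  obtain ⟨ω, hred, rfl⟩ := cs.exists_reduced_word' u
  have hprodeq : cs.wordProd (i :: ω) = s i * cs.wordProd ω := cs.wordProd_cons i ω
  have hred2 : cs.IsReduced (i :: ω) := by
    unfold CoxeterSystem.IsReduced at hred ⊢
    rw [hprodeq, h, hred]
    simp
  rw [← hprodeq, hPL _ hred2, hPL _ hred, artinWord_cons]

include hPL in
lemma PL_mul_of_add (u v : W) (h : cs.length (u * v) = cs.length u + cs.length v) :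
    PL (u * v) = PL u * PL v := by
  obtain ⟨ω₁, hred1, rfl⟩ := cs.exists_reduced_word' u
  obtain ⟨ω₂, hred2, rfl⟩ := cs.exists_reduced_word' v
  have hprodeq : cs.wordProd (ω₁ ++ ω₂) = cs.wordProd ω₁ * cs.wordProd ω₂ :=
    cs.wordProd_append ω₁ ω₂
  have hred3 : cs.IsReduced (ω₁ ++ ω₂) := by
    unfold CoxeterSystem.IsReduced at hred1 hred2 ⊢
    rw [hprodeq, h, hred1, hred2]
    simp
  rw [← hprodeq, hPL _ hred3, hPL _ hred1, hPL _ hred2, artinWord_append]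

variable (W₀ : Subgroup W)

lemma K0_conj (g x : ArtinGroup M) (hg : pr g ∈ Subgroup.normalizer (W₀ : Set W)) (hx : x ∈ K0 W₀ pr) :
    g⁻¹ * x * g ∈ K0 W₀ pr := by
  have hK : K0 W₀ pr = Subgroup.closure {x | ∃ (β : ArtinGroup M) (i : B),
      x = β * (PresentedGroup.of i : ArtinGroup M) * PresentedGroup.of i * β⁻¹ ∧
      pr (β * (PresentedGroup.of i : ArtinGroup M) * β⁻¹) ∉ W₀} := rfl
  rw [hK] at hx ⊢
  induction hx using Subgroup.closure_induction with
  | mem y hy =>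
    obtain ⟨β, i, rfl, hβ⟩ := hy
    apply Subgroup.subset_closure
    refine ⟨g⁻¹ * β, i, by group, ?_⟩
    intro hmem
    apply hβ
    have heq : g⁻¹ * β * (PresentedGroup.of i : ArtinGroup M) * (g⁻¹ * β)⁻¹
        = g⁻¹ * (β * (PresentedGroup.of i : ArtinGroup M) * β⁻¹) * g := by group
    rw [heq, map_mul, map_mul, map_inv] at hmem
    exact (Subgroup.mem_normalizer_iff''.mp hg _).mpr hmem
  | one => simpa using one_mem _
  | mul y z hy hz ihy ihz =>
    have heq : g⁻¹ * (y * z) * g = (g⁻¹ * y * g) * (g⁻¹ * z * g) := by group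
    rw [heq]
    exact mul_mem ihy ihz
  | inv y hy ihy =>
    have heq : g⁻¹ * y⁻¹ * g = (g⁻¹ * y * g)⁻¹ := by group
    rw [heq]
    exact inv_mem ihy

include hpr hPL in
lemma main_ind : ∀ n : ℕ, ∀ w₁ w₂ : W, cs.length w₂ ≤ n →
    (∀ t : W, cs.IsLeftInversion w₁⁻¹ t → cs.IsLeftInversion w₂ t → w₁ * t * w₁⁻¹ ∉ W₀) →
    PL w₁ * PL w₂ * (PL (w₁ * w₂))⁻¹ ∈ K0 W₀ pr := by
  have additive : ∀ w₁ w₂ : W, cs.length (w₁ * w₂) = cs.length w₁ + cs.length w₂ →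
      PL w₁ * PL w₂ * (PL (w₁ * w₂))⁻¹ ∈ K0 W₀ pr := by
    intro w₁ w₂ h
    rw [PL_mul_of_add cs PL hPL w₁ w₂ h, mul_inv_cancel]
    exact one_mem _
  intro n
  induction n with
  | zero =>
    intro w₁ w₂ hlen H
    have hw2 : w₂ = 1 := by
      rw [← cs.length_eq_zero_iff]
      omega
    subst hw2
    exact additive w₁ 1 (by simp)
  | succ n ih =>
    intro w₁ w₂ hlen H
    by_cases hadd : cs.length (w₁ * w₂) = cs.length w₁ + cs.length w₂
    · exact additive w₁ w₂ hadd
    · have hne : w₂ ≠ 1 := by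
        rintro rfl
        exact hadd (by simp)
      obtain ⟨i, hdesc⟩ := cs.exists_leftDescent_of_ne_one hne
      have hd : cs.length (s i * w₂) < cs.length w₂ := hdesc
      have hor := cs.length_simple_mul w₂ i
      have hl2 : cs.length w₂ = cs.length (s i * w₂) + 1 := by
        rcases hor with h | h <;> omega
      set w₂' := s i * w₂ with hw₂'
      have hw₂eq : w₂ = s i * w₂' := by
        rw [hw₂', cs.simple_mul_simple_cancel_left]
      have hPL2 : PL w₂ = (PresentedGroup.of i : ArtinGroup M) * PL w₂' := by
        have hlen2 : cs.length (s i * w₂') = cs.length w₂' + 1 := by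
          rw [← hw₂eq]; omega
        conv_lhs => rw [hw₂eq]
        exact PL_simple_mul cs PL hPL w₂' i hlen2
      have H' : ∀ t : W, cs.IsLeftInversion (w₁ * s i)⁻¹ t → cs.IsLeftInversion w₂' t →
          (w₁ * s i) * t * (w₁ * s i)⁻¹ ∉ W₀ := by
        intro t h1 h2
        have ht : cs.IsReflection t := h1.1
        rcases eq_or_ne t (s i) with rfl | htne
        · exfalso
          have h3 := h2.2
          rw [← hw₂eq] at h3
          omega
        · have hti : cs.IsReflection (s i * t * s i) := by
            have := ht.conj (s i)
            rwa [cs.inv_simple] at this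
          have hs1 : sgn cs (w₁ * s i) t = -1 := by
            have := (isLeftInversion_iff_sgn cs (w₁ * s i)⁻¹ t ht).mp h1
            rwa [inv_inv] at this
          have hs1' : sgn cs w₁ (s i * t * s i) = -1 := by
            rw [sgn_mul cs w₁ (s i) t, cs.inv_simple, sgn_simple, if_neg htne, one_mul] at hs1
            exact hs1
          have hN1 : cs.IsLeftInversion w₁⁻¹ (s i * t * s i) := by
            rw [isLeftInversion_iff_sgn cs w₁⁻¹ _ hti, inv_inv]
            exact hs1'
          have hs2 : sgn cs w₂'⁻¹ t = -1 :=
            (isLeftInversion_iff_sgn cs w₂' t ht).mp h2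
          have hw2inv : w₂'⁻¹ = w₂⁻¹ * s i := by
            rw [hw₂', mul_inv_rev, cs.inv_simple]
          have hs2' : sgn cs w₂⁻¹ (s i * t * s i) = -1 := by
            rw [hw2inv, sgn_mul cs w₂⁻¹ (s i) t, cs.inv_simple, sgn_simple,
              if_neg htne, one_mul] at hs2
            exact hs2
          have hN2 : cs.IsLeftInversion w₂ (s i * t * s i) :=
            (isLeftInversion_iff_sgn cs w₂ _ hti).mpr hs2'
          have hnot := H (s i * t * s i) hN1 hN2
          intro hmem
          apply hnot
          have heq : w₁ * (s i * t * s i) * w₁⁻¹ = (w₁ * s i) * t * (w₁ * s i)⁻¹ := by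
            rw [mul_inv_rev, cs.inv_simple]
            group
          rw [heq]
          exact hmem
      by_cases hA : cs.length (w₁ * s i) < cs.length w₁
      · -- cancellation case
        have horA := cs.length_mul_simple w₁ i
        have hl1 : cs.length w₁ = cs.length (w₁ * s i) + 1 := by
          rcases horA with h | h <;> omega
        have hPL1 : PL w₁ = PL (w₁ * s i) * (PresentedGroup.of i : ArtinGroup M) := by
          have hlen1 : cs.length ((w₁ * s i) * s i) = cs.length (w₁ * s i) + 1 := by
            rw [cs.simple_mul_simple_cancel_right]
            omega
          conv_lhs => rw [show w₁ = (w₁ * s i) * s i by rw [cs.simple_mul_simple_cancel_right]]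
          exact PL_mul_simple cs PL hPL (w₁ * s i) i hlen1
        have hsi1 : cs.IsLeftInversion w₁⁻¹ (s i) := by
          refine ⟨cs.isReflection_simple i, ?_⟩
          have heq : cs.length (s i * w₁⁻¹) = cs.length (w₁ * s i) := by
            rw [← cs.length_inv (s i * w₁⁻¹), mul_inv_rev, inv_inv, cs.inv_simple]
          rw [heq, cs.length_inv]
          exact hA
        have hsi2 : cs.IsLeftInversion w₂ (s i) := ⟨cs.isReflection_simple i, hd⟩
        have hgen_not : w₁ * s i * w₁⁻¹ ∉ W₀ := H (s i) hsi1 hsi2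
        have hgen : PL (w₁ * s i) * ((PresentedGroup.of i : ArtinGroup M) * PresentedGroup.of i)
            * (PL (w₁ * s i))⁻¹ ∈ K0 W₀ pr := by
          apply Subgroup.subset_closure
          refine ⟨PL (w₁ * s i), i, by group, ?_⟩
          have hpr1 : pr (PL (w₁ * s i) * (PresentedGroup.of i : ArtinGroup M)
              * (PL (w₁ * s i))⁻¹) = (w₁ * s i) * s i * (w₁ * s i)⁻¹ := by
            rw [map_mul, map_mul, map_inv, pr_PL cs pr PL hpr hPL, hpr i]
          rw [hpr1]
          have heq2 : (w₁ * s i) * s i * (w₁ * s i)⁻¹ = w₁ * s i * w₁⁻¹ := by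
            rw [mul_inv_rev, cs.inv_simple]
            simp [mul_assoc, cs.simple_mul_simple_cancel_left, cs.simple_mul_simple_self]
          rw [heq2]
          exact hgen_not
        have hIH := ih (w₁ * s i) w₂' (by omega) H'
        have hprod : (w₁ * s i) * w₂' = w₁ * w₂ := by
          rw [hw₂']
          simp [mul_assoc, cs.simple_mul_simple_cancel_left]
        have key : PL w₁ * PL w₂ * (PL (w₁ * w₂))⁻¹
            = (PL (w₁ * s i) * ((PresentedGroup.of i : ArtinGroup M) * PresentedGroup.of i)
                * (PL (w₁ * s i))⁻¹)
              * (PL (w₁ * s i) * PL w₂' * (PL ((w₁ * s i) * w₂'))⁻¹) := by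
          rw [hPL1, hPL2, hprod]
          group
        rw [key]
        exact mul_mem hgen hIH
      · -- absorption case
        have horB := cs.length_mul_simple w₁ i
        have hne2 := cs.length_mul_simple_ne w₁ i
        have hl1 : cs.length (w₁ * s i) = cs.length w₁ + 1 := by
          rcases horB with h | h <;> omega
        have hPL1 : PL (w₁ * s i) = PL w₁ * (PresentedGroup.of i : ArtinGroup M) :=
          PL_mul_simple cs PL hPL w₁ i hl1
        have hIH := ih (w₁ * s i) w₂' (by omega) H'
        have hprod : (w₁ * s i) * w₂' = w₁ * w₂ := by
          rw [hw₂']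
          simp [mul_assoc, cs.simple_mul_simple_cancel_left]
        have key : PL w₁ * PL w₂ * (PL (w₁ * w₂))⁻¹
            = PL (w₁ * s i) * PL w₂' * (PL ((w₁ * s i) * w₂'))⁻¹ := by
          rw [hPL1, hPL2, hprod]
          group
        rw [key]
        exact hIH

end ArtinPart

end PsiAux

/-- If `w₁, w₂ ∈ N_W(W₀)` satisfy `N(w₁⁻¹) ∩ N(w₂) ∩ W₀ = ∅`, then
`ψ(w₁w₂) = ψ(w₁)ψ(w₂)`, i.e. the positive lifts satisfy
`(w₁w₂)̲⁻¹ · w₁̲ · w₂̲ ∈ K₀`. Here `pr` is the projection of the Artin group to `W`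
and `PL` is the positive lift map, characterized on reduced words. -/
theorem psi_partial_hom (cs : CoxeterSystem M W) (W₀ : Subgroup W)
    (h : IsReflectionSubgroup cs W₀)
    (pr : ArtinGroup M →* W)
    (hpr : ∀ i : B, pr (PresentedGroup.of i : ArtinGroup M) = cs.simple i)
    (PL : W → ArtinGroup M)
    (hPL : ∀ ω : List B, cs.IsReduced ω → PL (cs.wordProd ω) = artinWord M ω)
    (w₁ w₂ : W) (hw₁ : w₁ ∈ Subgroup.normalizer (W₀ : Set W)) (hw₂ : w₂ ∈ Subgroup.normalizer (W₀ : Set W))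
    (hN : invSet cs w₁⁻¹ ∩ invSet cs w₂ ∩ (W₀ : Set W) = ∅) :
    (PL (w₁ * w₂))⁻¹ * (PL w₁ * PL w₂) ∈ K0 W₀ pr := by
  classical
  have H : ∀ t : W, cs.IsLeftInversion w₁⁻¹ t → cs.IsLeftInversion w₂ t →
      w₁ * t * w₁⁻¹ ∉ W₀ := by
    intro t h1 h2 hmem
    have ht : t ∈ W₀ := (Subgroup.mem_normalizer_iff.mp hw₁ t).mpr hmem
    have hmem2 : t ∈ invSet cs w₁⁻¹ ∩ invSet cs w₂ ∩ (W₀ : Set W) := ⟨⟨h1, h2⟩, ht⟩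
    rw [hN] at hmem2
    exact hmem2
  have hY := PsiAux.main_ind cs pr PL hpr hPL W₀ (cs.length w₂) w₁ w₂ le_rfl H
  have hg : pr (PL (w₁ * w₂)) ∈ Subgroup.normalizer (W₀ : Set W) := by
    rw [PsiAux.pr_PL cs pr PL hpr hPL (w₁ * w₂)]
    exact mul_mem hw₁ hw₂
  have hconj := PsiAux.K0_conj pr W₀ (PL (w₁ * w₂)) _ hg hY
  have heq : (PL (w₁ * w₂))⁻¹ * (PL w₁ * PL w₂ * (PL (w₁ * w₂))⁻¹) * PL (w₁ * w₂)
      = (PL (w₁ * w₂))⁻¹ * (PL w₁ * PL w₂) := by group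
  rw [heq] at hconj
  exact hconj
end
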